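/- arXiv:math/0203180 — 9 statements merged into one kernel-verified Lean document; each statement's English description precedes it below -/
import Mathlib

section
/- Let d_1, …, d_n ∈ k^{t+1} be pairwise non-proportional nonzero vectors (representing n distinct points of P^t), with homogeneous vanishing ideals m_1, …, m_n ⊆ U = k[x_0,…,x_t]. Then for every m ≥ n, the degree-m graded piece of the product ideal m_1·m_2·⋯·m_n equals the degree-m graded piece of the intersection m_1 ∩ ⋯ ∩ m_n. Equivalently, a homogeneous polynomial f of degree m ≥ n lies in the product m_1·m_2·⋯·m_n if and only if f(d_i) = 0 for all 1 ≤ i ≤ n. -/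
set_option synthInstance.maxHeartbeats 1000000
set_option maxHeartbeats 4000000

noncomputable section

/-- The homogeneous vanishing ideal of a point of `ℙ^{N-1}` represented by the nonzero
vector `d ∈ k^N`: the ideal generated by all linear forms vanishing at `d`. -/
def pointVanishingIdeal {k : Type*} [Field k] {N : ℕ} (d : Fin N → k) :
    Ideal (MvPolynomial (Fin N) k) :=
  Ideal.span {g : MvPolynomial (Fin N) k | g.IsHomogeneous 1 ∧ MvPolynomial.eval d g = 0}

open MvPolynomial

namespace Stmt7

variable {k : Type*} [Field k] {N : ℕ}

def linForm (φ : Fin N → k) : MvPolynomial (Fin N) k := ∑ a, C (φ a) * X a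

lemma linForm_isHomogeneous (φ : Fin N → k) : (linForm φ).IsHomogeneous 1 :=
  IsHomogeneous.sum _ _ _ fun a _ => isHomogeneous_C_mul_X _ _

lemma eval_linForm (d : Fin N → k) (φ : Fin N → k) :
    eval d (linForm φ) = ∑ a, φ a * d a := by simp [linForm]

lemma linForm_mem_spanX (φ : Fin N → k) :
    linForm φ ∈ Ideal.span (Set.range (X : Fin N → MvPolynomial (Fin N) k)) :=
  Submodule.sum_mem _ fun a _ => Ideal.mul_mem_left _ _ (Ideal.subset_span ⟨a, rfl⟩)

lemma exists_sep (p q : Fin N → k) (h : ∀ a : k, q ≠ a • p) :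
    ∃ φ : Fin N → k, (∑ a, φ a * p a) = 0 ∧ (∑ a, φ a * q a) = 1 := by
  have hq : q ∉ Submodule.span k {p} := by
    intro hm
    obtain ⟨a, ha⟩ := Submodule.mem_span_singleton.mp hm
    exact h a ha.symm
  obtain ⟨F, hFq, hFp⟩ := Submodule.exists_dual_map_eq_bot_of_notMem hq inferInstance
  have hFp' : F p = 0 := by
    have : F p ∈ (Submodule.span k {p}).map F :=
      Submodule.mem_map_of_mem (Submodule.mem_span_singleton_self p)
    rw [hFp] at this
    simpa using this
  refine ⟨fun a => (F q)⁻¹ * F (Pi.single a 1), ?_, ?_⟩ <;>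
  · have key : ∀ v : Fin N → k, (∑ a, (F q)⁻¹ * F (Pi.single a 1) * v a) = (F q)⁻¹ * F v := by
      intro v
      have hv : v = ∑ a, v a • (Pi.single a (1:k) : Fin N → k) := by
        ext b; simp [Pi.single_apply]
      calc (∑ a, (F q)⁻¹ * F (Pi.single a 1) * v a)
          = (F q)⁻¹ * ∑ a, v a * F (Pi.single a 1) := by
            rw [Finset.mul_sum]; exact Finset.sum_congr rfl fun a _ => by ring
        _ = (F q)⁻¹ * F v := by
            conv_rhs => rw [hv]
            rw [map_sum]
            simp [smul_eq_mul]
    rw [key]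
    simp [hFp', inv_mul_cancel₀ hFq]



lemma eval_eq_zero_of_mem {d : Fin N → k} {f : MvPolynomial (Fin N) k}
    (hf : f ∈ pointVanishingIdeal d) : eval d f = 0 := by
  have : pointVanishingIdeal d ≤ RingHom.ker (eval d : MvPolynomial (Fin N) k →+* k) :=
    Ideal.span_le.mpr fun g hg => hg.2
  exact this hf

lemma mem_pvi {q : Fin N → k} (hq : q ≠ 0) {m : ℕ} {f : MvPolynomial (Fin N) k}
    (hf : f.IsHomogeneous m) (h0 : eval q f = 0) : f ∈ pointVanishingIdeal q := by
  -- a linear form u with eval q u = 1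
  obtain ⟨a₀, ha₀⟩ : ∃ a, q a ≠ 0 := by
    by_contra hc; push_neg at hc; exact hq (funext hc)
  set u : MvPolynomial (Fin N) k := C (q a₀)⁻¹ * X a₀ with hu_def
  have hu_hom : u.IsHomogeneous 1 := isHomogeneous_C_mul_X _ _
  have hu : eval q u = 1 := by simp [hu_def, inv_mul_cancel₀ ha₀]
  set ψ : MvPolynomial (Fin N) k →ₐ[k] MvPolynomial (Fin N) k :=
    aeval (fun a => C (q a) * u) with hψ
  have claimA : ∀ g : MvPolynomial (Fin N) k, g - ψ g ∈ pointVanishingIdeal q := by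
    intro g
    induction g using MvPolynomial.induction_on with
    | C a => simp [hψ]
    | add p r hp hr =>
        have : p + r - ψ (p + r) = (p - ψ p) + (r - ψ r) := by rw [map_add]; ring
        rw [this]; exact add_mem hp hr
    | mul_X p a hp =>
        have hgen : (X a - C (q a) * u) ∈ pointVanishingIdeal q := by
          refine Ideal.subset_span ⟨(isHomogeneous_X _ _).sub (hu_hom.C_mul _), ?_⟩
          simp [hu]
        have : p * X a - ψ (p * X a) =
            p * (X a - C (q a) * u) + (p - ψ p) * (C (q a) * u) := by
          rw [map_mul, hψ]; simp only [aeval_X]; ring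
        rw [this]
        exact add_mem (Ideal.mul_mem_left _ p hgen) (Ideal.mul_mem_right _ _ hp)
  have claimB : ψ f = C (eval q f) * u ^ m := by
    conv_lhs => rw [f.as_sum]
    rw [map_sum]
    have step : ∀ s ∈ f.support,
        ψ (monomial s (coeff s f)) = C (coeff s f * ∏ i ∈ s.support, q i ^ s i) * u ^ m := by
      intro s hs
      have hdeg : (∑ i ∈ s.support, s i) = m := by
        have h1 := hf (mem_support_iff.mp hs)
        rw [← h1, Finsupp.weight_apply, Finsupp.sum]
        simp
      rw [hψ, aeval_monomial, algebraMap_eq, Finsupp.prod]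
      simp only [mul_pow, ← C_pow]
      rw [Finset.prod_mul_distrib,
        ← map_prod (C : k →+* MvPolynomial (Fin N) k) (fun x => q x ^ s x) s.support,
        Finset.prod_pow_eq_pow_sum, hdeg, ← mul_assoc, ← C_mul]
    rw [Finset.sum_congr rfl step, ← Finset.sum_mul, ← map_sum, eval_eq]
  have := claimA f
  rwa [claimB, h0, map_zero, zero_mul, sub_zero] at this


lemma hc_mul (c : MvPolynomial (Fin N) k) {ℓ : MvPolynomial (Fin N) k}
    (hl : ℓ.IsHomogeneous 1) (m : ℕ) :
    homogeneousComponent (m + 1) (c * ℓ) = homogeneousComponent m c * ℓ := by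
  conv_lhs => rw [← sum_homogeneousComponent c, Finset.sum_mul, map_sum]
  have key : ∀ i : ℕ, homogeneousComponent (m + 1) (homogeneousComponent i c * ℓ)
      = if m + 1 = i + 1 then homogeneousComponent i c * ℓ else 0 := fun i =>
    homogeneousComponent_of_mem ((mem_homogeneousSubmodule _ _).mpr
      ((homogeneousComponent_isHomogeneous i c).mul hl))
  simp only [key, Nat.add_right_cancel_iff]
  rw [Finset.sum_ite_eq]
  split
  · rfl
  · next h =>
    rw [homogeneousComponent_eq_zero, zero_mul]
    simpa using h

lemma decomp {q : Fin N → k} (hq : q ≠ 0) {m : ℕ} {f : MvPolynomial (Fin N) k}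
    (hf : f.IsHomogeneous (m + 1)) (h0 : eval q f = 0) :
    ∃ (T : Finset (MvPolynomial (Fin N) k))
      (g : MvPolynomial (Fin N) k → MvPolynomial (Fin N) k),
      (∀ ℓ ∈ T, ℓ.IsHomogeneous 1 ∧ eval q ℓ = 0) ∧ (∀ ℓ, (g ℓ).IsHomogeneous m) ∧
      f = ∑ ℓ ∈ T, ℓ * g ℓ := by
  have hmem : f ∈ pointVanishingIdeal q := mem_pvi hq hf h0
  rw [pointVanishingIdeal, Ideal.span] at hmem
  obtain ⟨c, hcsupp, hcsum⟩ := Submodule.mem_span_set.mp hmem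
  refine ⟨c.support, fun ℓ => homogeneousComponent m (c ℓ),
    fun ℓ hℓ => hcsupp hℓ, fun ℓ => homogeneousComponent_isHomogeneous m _, ?_⟩
  have hfc : f = ∑ ℓ ∈ c.support, c ℓ * ℓ := by
    rw [← hcsum, Finsupp.sum]
    exact Finset.sum_congr rfl fun ℓ _ => smul_eq_mul ..
  have hfix : homogeneousComponent (m + 1) f = f := by
    rw [homogeneousComponent_of_mem ((mem_homogeneousSubmodule _ _).mpr hf), if_pos rfl]
  calc f = homogeneousComponent (m + 1) (∑ ℓ ∈ c.support, c ℓ * ℓ) := by rw [← hfc, hfix]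
    _ = ∑ ℓ ∈ c.support, homogeneousComponent m (c ℓ) * ℓ := by
        rw [map_sum]
        exact Finset.sum_congr rfl fun ℓ hℓ => hc_mul _ (hcsupp hℓ).1 m
    _ = ∑ ℓ ∈ c.support, ℓ * homogeneousComponent m (c ℓ) :=
        Finset.sum_congr rfl fun ℓ _ => mul_comm _ _

lemma lin_mul_mem {p q : Fin N → k} (hsep : ∀ a : k, q ≠ a • p)
    {L : MvPolynomial (Fin N) k} (hL : L.IsHomogeneous 1)
    (hLp : eval p L = 0) (hLq : eval q L = 0)
    {h : MvPolynomial (Fin N) k}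
    (hh : h ∈ Ideal.span (Set.range (X : Fin N → MvPolynomial (Fin N) k))) :
    L * h ∈ pointVanishingIdeal p * pointVanishingIdeal q := by
  obtain ⟨φ, hφp, hφq⟩ := exists_sep p q hsep
  have hτhom := linForm_isHomogeneous φ
  have hτp : eval p (linForm φ) = 0 := by rw [eval_linForm]; exact hφp
  have hτq : eval q (linForm φ) = 1 := by rw [eval_linForm]; exact hφq
  have hLmp : L ∈ pointVanishingIdeal p := Ideal.subset_span ⟨hL, hLp⟩
  have hLmq : L ∈ pointVanishingIdeal q := Ideal.subset_span ⟨hL, hLq⟩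
  have hτmp : linForm φ ∈ pointVanishingIdeal p := Ideal.subset_span ⟨hτhom, hτp⟩
  induction hh using Submodule.span_induction with
  | mem x hx =>
      obtain ⟨a, rfl⟩ := hx
      have hgen : (X a - C (q a) * linForm φ) ∈ pointVanishingIdeal q := by
        refine Ideal.subset_span ⟨(isHomogeneous_X _ _).sub (hτhom.C_mul _), ?_⟩
        simp [hτq]
      have hkey : L * X a =
          L * (X a - C (q a) * linForm φ) + C (q a) * (linForm φ * L) := by ring
      rw [hkey]
      exact add_mem (Ideal.mul_mem_mul hLmp hgen)
        (Ideal.mul_mem_left _ _ (Ideal.mul_mem_mul hτmp hLmq))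
  | zero => simpa using zero_mem _
  | add x y _ _ hx hy => rw [mul_add]; exact add_mem hx hy
  | smul r x _ hx =>
      rw [smul_eq_mul, mul_left_comm]
      exact Ideal.mul_mem_left _ _ hx

lemma main : ∀ (n : ℕ) (d : Fin n → Fin N → k), (∀ i, d i ≠ 0) →
    (∀ i j, i ≠ j → ∀ a : k, d i ≠ a • d j) → ∀ (m : ℕ), n ≤ m →
    ∀ f : MvPolynomial (Fin N) k, f.IsHomogeneous m → (∀ i, eval (d i) f = 0) →
    f ∈ ∏ i, pointVanishingIdeal (d i) := by
  intro n
  induction n with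
  | zero =>
      intro d _ _ m _ f _ _
      simp
  | succ n IH =>
      intro d hd0 hprop m hm f hf hv
      obtain ⟨M, rfl⟩ : ∃ M, m = M + 1 := ⟨m - 1, by omega⟩
      have hMn : n ≤ M := by omega
      set q : Fin N → k := d (Fin.last n) with hqdef
      set e : Fin n → Fin N → k := fun i => d i.castSucc with he
      have hq0 : q ≠ 0 := hd0 _
      have hcs_ne_last : ∀ i : Fin n, i.castSucc ≠ Fin.last n := fun i =>
        Fin.ne_of_lt (Fin.castSucc_lt_last i)
      obtain ⟨T, g, hT, hg, hfeq⟩ := decomp hq0 hf (hv (Fin.last n))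
      have hsepex : ∀ i j : Fin n, ∃ τ : MvPolynomial (Fin N) k,
          τ.IsHomogeneous 1 ∧ (j ≠ i → eval (e j) τ = 0 ∧ eval (e i) τ = 1) := by
        intro i j
        by_cases hij : j = i
        · exact ⟨0, isHomogeneous_zero _ _ _, fun hc => absurd hij hc⟩
        · have hne : i.castSucc ≠ j.castSucc :=
            fun hc => hij (Fin.castSucc_injective _ hc).symm
          obtain ⟨φ, h1, h2⟩ := exists_sep (e j) (e i)
            (fun a => hprop i.castSucc j.castSucc hne a)
          exact ⟨linForm φ, linForm_isHomogeneous φ,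
            fun _ => ⟨by rw [eval_linForm]; exact h1, by rw [eval_linForm]; exact h2⟩⟩
      choose sep hsepHom hsepEval using hsepex
      have huex : ∀ i : Fin n, ∃ φ : Fin N → k, eval (e i) (linForm φ) = 1 := by
        intro i
        obtain ⟨φ, _, h2⟩ := exists_sep q (e i)
          (fun a => hprop i.castSucc (Fin.last n) (hcs_ne_last i) a)
        exact ⟨φ, by rw [eval_linForm]; exact h2⟩
      choose uφ huEval using huex
      set u : Fin n → MvPolynomial (Fin N) k := fun i => linForm (uφ i) with hu
      set s : ℕ := M + 1 - n with hs
      set P : Fin n → MvPolynomial (Fin N) k :=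
        fun i => ∏ j ∈ Finset.univ.erase i, sep i j with hP
      set Ti : Fin n → MvPolynomial (Fin N) k := fun i => P i * u i ^ s with hTi
      have hTihom : ∀ i, (Ti i).IsHomogeneous M := by
        intro i
        have h1 : (P i).IsHomogeneous (∑ j ∈ Finset.univ.erase i, 1) :=
          IsHomogeneous.prod _ _ _ fun j _ => hsepHom i j
        have h2 : (u i ^ s).IsHomogeneous (1 * s) := (linForm_isHomogeneous _).pow s
        have h3 := h1.mul h2
        have hcard : (∑ j ∈ Finset.univ.erase i, 1) + 1 * s = M := by
          rw [Finset.sum_const, smul_eq_mul, mul_one, one_mul,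
            Finset.card_erase_of_mem (Finset.mem_univ i), Finset.card_univ, Fintype.card_fin]
          have hn : 0 < n := i.pos
          omega
        rwa [hcard] at h3
      have hTieval : ∀ i j : Fin n, eval (e j) (Ti i) = if j = i then 1 else 0 := by
        intro i j
        by_cases hji : j = i
        · subst hji
          simp only [hTi, hP, hu, map_mul, map_prod, map_pow]
          rw [huEval]
          have hone : ∀ x ∈ Finset.univ.erase j, eval (e j) (sep j x) = 1 := fun x hx =>
            (hsepEval j x (Finset.ne_of_mem_erase hx)).2
          rw [Finset.prod_congr rfl hone]
          simp
        · simp only [hTi, hP, hu, map_mul, map_prod, map_pow]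
          rw [Finset.prod_eq_zero (Finset.mem_erase.mpr ⟨hji, Finset.mem_univ j⟩)
            (hsepEval i j hji).1]
          simp [hji]
      set G : MvPolynomial (Fin N) k → MvPolynomial (Fin N) k :=
        fun ℓ => g ℓ - ∑ i, C (eval (e i) (g ℓ)) * Ti i with hG
      set L' : Fin n → MvPolynomial (Fin N) k :=
        fun i => ∑ ℓ ∈ T, C (eval (e i) (g ℓ)) * ℓ with hL'
      have key : f = (∑ ℓ ∈ T, ℓ * G ℓ) + ∑ i, L' i * Ti i := by
        have swap : ∑ ℓ ∈ T, ∑ i, ℓ * (C (eval (e i) (g ℓ)) * Ti i)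
            = ∑ i, L' i * Ti i := by
          rw [Finset.sum_comm]
          refine Finset.sum_congr rfl fun i _ => ?_
          rw [hL', Finset.sum_mul]
          exact Finset.sum_congr rfl fun ℓ _ => by ring
        calc f = ∑ ℓ ∈ T, ℓ * g ℓ := hfeq
          _ = (∑ ℓ ∈ T, ℓ * G ℓ) + ∑ ℓ ∈ T, ∑ i, ℓ * (C (eval (e i) (g ℓ)) * Ti i) := by
              rw [← Finset.sum_add_distrib]
              refine Finset.sum_congr rfl fun ℓ _ => ?_
              simp only [hG]
              rw [mul_sub, ← Finset.mul_sum]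
              ring
          _ = _ := by rw [swap]
      have hprodsplit : (∏ i : Fin (n+1), pointVanishingIdeal (d i))
          = (∏ i : Fin n, pointVanishingIdeal (e i)) * pointVanishingIdeal q := by
        rw [Fin.prod_univ_castSucc]
      rw [key, hprodsplit]
      refine add_mem (Ideal.sum_mem _ fun ℓ hℓ => ?_) (Ideal.sum_mem _ fun i _ => ?_)
      · have hGhom : (G ℓ).IsHomogeneous M :=
          (hg ℓ).sub (IsHomogeneous.sum _ _ _ fun i _ => (hTihom i).C_mul _)
        have hGvanish : ∀ j : Fin n, eval (e j) (G ℓ) = 0 := by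
          intro j
          rw [hG]
          simp [hTieval, Finset.sum_ite_eq]
        have hGmem : G ℓ ∈ ∏ i : Fin n, pointVanishingIdeal (e i) :=
          IH e (fun i => hd0 _)
            (fun i j hij a => hprop _ _ (fun hc => hij (Fin.castSucc_injective _ hc)) a)
            M hMn (G ℓ) hGhom hGvanish
        have hℓq : ℓ ∈ pointVanishingIdeal q :=
          Ideal.subset_span ⟨(hT ℓ hℓ).1, (hT ℓ hℓ).2⟩
        rw [mul_comm ℓ (G ℓ)]
        exact Ideal.mul_mem_mul hGmem hℓq
      · have hLhom : (L' i).IsHomogeneous 1 :=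
          IsHomogeneous.sum _ _ _ fun ℓ hℓ => ((hT ℓ hℓ).1).C_mul _
        have hLq : eval q (L' i) = 0 := by
          rw [hL']
          simp only [map_sum, map_mul, eval_C]
          exact Finset.sum_eq_zero fun ℓ hℓ => by rw [(hT ℓ hℓ).2, mul_zero]
        have hLei : eval (e i) (L' i) = 0 := by
          have h1 : eval (e i) (L' i) = eval (e i) f := by
            rw [hfeq, hL']
            simp only [map_sum, map_mul, eval_C]
            exact Finset.sum_congr rfl fun ℓ _ => mul_comm _ _
          rw [h1]; exact hv i.castSucc
        have hspos : 0 < s := by rw [hs]; omega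
        have hus : u i ^ s ∈ Ideal.span (Set.range (X : Fin N → MvPolynomial (Fin N) k)) :=
          Ideal.pow_mem_of_mem _ (linForm_mem_spanX _) s hspos
        have h2 : L' i * u i ^ s ∈ pointVanishingIdeal (e i) * pointVanishingIdeal q :=
          lin_mul_mem (fun a => hprop (Fin.last n) i.castSucc (Ne.symm (hcs_ne_last i)) a)
            hLhom hLei hLq hus
        have hPmem : P i ∈ ∏ j ∈ Finset.univ.erase i, pointVanishingIdeal (e j) :=
          Ideal.prod_mem_prod fun j hj => Ideal.subset_span
            ⟨hsepHom i j, (hsepEval i j (Finset.ne_of_mem_erase hj)).1⟩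
        have hsplit2 : (∏ i' : Fin n, pointVanishingIdeal (e i')) * pointVanishingIdeal q
            = (pointVanishingIdeal (e i) * pointVanishingIdeal q) *
              ∏ j ∈ Finset.univ.erase i, pointVanishingIdeal (e j) := by
          rw [← Finset.mul_prod_erase _ _ (Finset.mem_univ i)]
          ring
        have hfact : L' i * Ti i = (L' i * u i ^ s) * P i := by rw [hTi]; ring
        rw [hfact, hsplit2]
        exact Ideal.mul_mem_mul h2 hPmem

end Stmt7

/-- for distinct points `d₁, …, d_n` of `ℙ^t` and `m ≥ n`, the degree-`m`
piece of the product `m₁⋯m_n` of their vanishing ideals equals the degree-`m` piece of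
the intersection; equivalently a homogeneous `f` of degree `m ≥ n` lies in the product
iff it vanishes at every `dᵢ`. -/
theorem stmt_7 {k : Type*} [Field k] [IsAlgClosed k]
    (t : ℕ) (ht : 1 ≤ t) (n : ℕ) (d : Fin n → Fin (t + 1) → k)
    (hd0 : ∀ i, d i ≠ 0)
    (hprop : ∀ i j, i ≠ j → ∀ a : k, d i ≠ a • d j) :
    ∀ m : ℕ, n ≤ m → ∀ f : MvPolynomial (Fin (t + 1)) k, f.IsHomogeneous m →
      ((f ∈ ∏ i, pointVanishingIdeal (d i) ↔ f ∈ ⨅ i, pointVanishingIdeal (d i)) ∧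
       (f ∈ ∏ i, pointVanishingIdeal (d i) ↔ ∀ i, MvPolynomial.eval (d i) f = 0)) := by

  intro m hm f hf
  have hle : ∀ i, (∏ j, pointVanishingIdeal (d j)) ≤ pointVanishingIdeal (d i) := by
    intro i
    rw [← Finset.mul_prod_erase _ _ (Finset.mem_univ i)]
    exact Ideal.mul_le_left
  have hmain := Stmt7.main n d hd0 hprop m hm f hf
  constructor
  · constructor
    · intro h
      exact Submodule.mem_iInf _ |>.mpr fun i => hle i h
    · intro h
      exact hmain fun i => Stmt7.eval_eq_zero_of_mem (Submodule.mem_iInf _ |>.mp h i)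
  · constructor
    · intro h i
      exact Stmt7.eval_eq_zero_of_mem (hle i h)
    · exact hmain
end
end

section
/- Let n ≥ 1 and let d_0, …, d_{n−1} ∈ k^{t+1} be pairwise non-proportional nonzero vectors (representing n distinct points of P^t). Then the k-linear span of all products ℓ_{n−1}·ℓ_{n−2}·⋯·ℓ_0, where each ℓ_i ranges over the linear forms in k[x_0,…,x_t] vanishing at d_i, equals the space of homogeneous polynomials of degree n vanishing at every d_i (0 ≤ i ≤ n−1). In particular, this space has k-dimension binom(n+t,t) − n. -/
set_option synthInstance.maxHeartbeats 1000000
set_option maxHeartbeats 4000000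

noncomputable section


open MvPolynomial

namespace Stmt8Aux

variable {k : Type*} [Field k] {t : ℕ}

/-- linear form with coefficient vector `c` -/
def lf (c : Fin (t+1) → k) : MvPolynomial (Fin (t+1)) k := ∑ r, C (c r) * X r

lemma lf_hom (c : Fin (t+1) → k) : (lf c).IsHomogeneous 1 :=
  IsHomogeneous.sum _ _ _ fun r _ => isHomogeneous_C_mul_X _ _

lemma eval_lf (d c : Fin (t+1) → k) : eval d (lf c) = ∑ r, c r * d r := by
  simp [lf]

lemma exists_sep {d e : Fin (t+1) → k} (h : ∀ a : k, e ≠ a • d) :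
    ∃ c : Fin (t+1) → k, (∑ r, c r * d r) = 0 ∧ (∑ r, c r * e r) = 1 := by
  have he : e ∉ Submodule.span k {d} := by
    rw [Submodule.mem_span_singleton]
    rintro ⟨a, rfl⟩
    exact h a rfl
  obtain ⟨φ, hφ0, hφmap⟩ := Submodule.exists_dual_map_eq_bot_of_notMem he inferInstance
  have hφd : φ d = 0 := by
    have : φ d ∈ Submodule.map φ (Submodule.span k {d}) :=
      Submodule.mem_map_of_mem (Submodule.mem_span_singleton_self d)
    rw [hφmap] at this
    simpa using this
  have key : ∀ v : Fin (t+1) → k, φ v = ∑ r, v r * φ (Pi.single r 1) := by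
    intro v
    rw [LinearMap.pi_apply_eq_sum_univ φ v]
    refine Finset.sum_congr rfl fun r _ => ?_
    rw [smul_eq_mul]
    refine congrArg _ (congrArg φ (funext fun j => ?_))
    simp [Pi.single_apply, eq_comm]
  have main : ∀ v : Fin (t+1) → k,
      (∑ r, ((φ e)⁻¹ * φ (Pi.single r 1)) * v r) = (φ e)⁻¹ * φ v := by
    intro v
    rw [key v, Finset.mul_sum]
    exact Finset.sum_congr rfl fun r _ => by ring
  refine ⟨fun r => (φ e)⁻¹ * φ (Pi.single r 1), ?_, ?_⟩
  · rw [main d, hφd, mul_zero]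
  · rw [main e, inv_mul_cancel₀ hφ0]



lemma degree_eq_sum_univ (α : Fin (t+1) →₀ ℕ) : α.degree = ∑ r, α r :=
  Finset.sum_subset (Finset.subset_univ _) fun r _ hr => Finsupp.notMem_support_iff.mp hr

lemma aeval_eq_eval' (d : Fin (t+1) → k) (p : MvPolynomial (Fin (t+1)) k) :
    aeval d p = eval d p := by
  rw [aeval_def, Algebra.algebraMap_self]; rfl

lemma single_point (m : ℕ) (d : Fin (t+1) → k) (s : Fin (t+1)) (hs : d s ≠ 0)
    (f : MvPolynomial (Fin (t+1)) k) (hf : f.IsHomogeneous (m+1)) (hf0 : eval d f = 0) :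
    f ∈ Submodule.span k {p : MvPolynomial (Fin (t+1)) k |
      ∃ ℓ g, ℓ.IsHomogeneous 1 ∧ eval d ℓ = 0 ∧ g.IsHomogeneous m ∧ p = ℓ * g} := by
  set T := Submodule.span k {p : MvPolynomial (Fin (t+1)) k |
      ∃ ℓ g, ℓ.IsHomogeneous 1 ∧ eval d ℓ = 0 ∧ g.IsHomogeneous m ∧ p = ℓ * g} with hTdef
  set Φ : MvPolynomial (Fin (t+1)) k →ₗ[k] MvPolynomial (Fin (t+1)) k :=
    LinearMap.id - (((d s ^ (m+1))⁻¹) • (aeval d).toLinearMap).smulRight (X s ^ (m+1)) with hΦ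
  have hΦapply : ∀ p : MvPolynomial (Fin (t+1)) k,
      Φ p = p - ((d s ^ (m+1))⁻¹ * eval d p) • (X s ^ (m+1) : MvPolynomial (Fin (t+1)) k) := by
    intro p
    simp [hΦ, LinearMap.smulRight_apply, aeval_eq_eval', smul_smul, LinearMap.sub_apply,
      smul_eq_mul]
  have key : ∀ N : ℕ, ∀ α : Fin (t+1) →₀ ℕ, (∑ r ∈ Finset.univ.erase s, α r) = N →
      α.degree = m + 1 → Φ ((monomial α) 1) ∈ T := by
    intro N
    induction N using Nat.strong_induction_on with
    | _ N ih =>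
      intro α hoff hdeg
      rcases Nat.eq_zero_or_pos N with hN | hN
      · subst hN
        have hαr : ∀ r, r ≠ s → α r = 0 := fun r hr =>
          Finset.sum_eq_zero_iff.mp hoff r (Finset.mem_erase.mpr ⟨hr, Finset.mem_univ r⟩)
        have hαs : α s = m + 1 := by
          have h1 := degree_eq_sum_univ α
          rw [hdeg, ← Finset.add_sum_erase _ _ (Finset.mem_univ s), hoff] at h1
          omega
        have hα : α = Finsupp.single s (m+1) := by
          ext r
          rcases eq_or_ne r s with rfl | hr
          · simp [hαs]
          · simp [Finsupp.single_apply, Ne.symm hr, hαr r hr]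
        rw [hα, ← X_pow_eq_monomial, hΦapply]
        have hev : eval d ((X s : MvPolynomial (Fin (t+1)) k) ^ (m+1)) = d s ^ (m+1) := by simp
        rw [hev, inv_mul_cancel₀ (pow_ne_zero _ hs), one_smul, sub_self]
        exact Submodule.zero_mem T
      · obtain ⟨j, hjmem, hj0⟩ : ∃ j ∈ Finset.univ.erase s, α j ≠ 0 := by
          by_contra hcon
          push_neg at hcon
          rw [Finset.sum_eq_zero hcon] at hoff
          omega
        have hjs : j ≠ s := (Finset.mem_erase.mp hjmem).1
        set β := α - Finsupp.single j 1 with hβ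
        have hab : α = Finsupp.single j 1 + β := by
          ext r
          rcases eq_or_ne r j with rfl | hr
          · have : α r ≠ 0 := hj0
            simp [hβ, Finsupp.single_apply]
            omega
          · simp [hβ, Finsupp.single_apply, Ne.symm hr]
        set α' := Finsupp.single s 1 + β with hα'
        have hmono : (monomial α 1 : MvPolynomial (Fin (t+1)) k) = X j * monomial β 1 := by
          rw [hab, monomial_single_add, pow_one]
        have hmono' : (monomial α' 1 : MvPolynomial (Fin (t+1)) k) = X s * monomial β 1 := by
          rw [hα', monomial_single_add, pow_one]
        have hsum_split : ∀ γ δ : Fin (t+1) →₀ ℕ, ∀ u : Finset (Fin (t+1)),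
            (∑ r ∈ u, (γ + δ) r) = (∑ r ∈ u, γ r) + (∑ r ∈ u, δ r) := by
          intro γ δ u
          simp [Finset.sum_add_distrib]
        have hsingle_j : (∑ r ∈ Finset.univ.erase s, (Finsupp.single j 1 : Fin (t+1) →₀ ℕ) r) = 1 := by
          rw [Finset.sum_eq_single_of_mem j hjmem (fun b _ hb => by
            simp [Finsupp.single_apply, Ne.symm hb])]
          simp
        have hoffβ : (∑ r ∈ Finset.univ.erase s, β r) = N - 1 := by
          have h2 := hsum_split (Finsupp.single j 1) β (Finset.univ.erase s)
          rw [← hab, hoff, hsingle_j] at h2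
          omega
        have hoffα' : (∑ r ∈ Finset.univ.erase s, α' r) = N - 1 := by
          have h2 := hsum_split (Finsupp.single s 1) β (Finset.univ.erase s)
          rw [← hα'] at h2
          have h3 : (∑ r ∈ Finset.univ.erase s, (Finsupp.single s 1 : Fin (t+1) →₀ ℕ) r) = 0 := by
            apply Finset.sum_eq_zero
            intro r hr
            simp [Finsupp.single_apply, Ne.symm (Finset.mem_erase.mp hr).1]
          rw [h2, h3, hoffβ]
          omega
        have hdegβ : β.degree = m := by
          have h1 := degree_eq_sum_univ α
          have h2 := degree_eq_sum_univ β
          have h3 := hsum_split (Finsupp.single j 1) β Finset.univ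
          rw [← hab] at h3
          have h4 : (∑ r, (Finsupp.single j 1 : Fin (t+1) →₀ ℕ) r) = 1 := by
            rw [Finset.sum_eq_single_of_mem j (Finset.mem_univ j) (fun b _ hb => by
              simp [Finsupp.single_apply, Ne.symm hb])]
            simp
          rw [hdeg] at h1
          omega
        have hdegα' : α'.degree = m + 1 := by
          have h2 := degree_eq_sum_univ β
          have h5 := degree_eq_sum_univ α'
          have h3 := hsum_split (Finsupp.single s 1) β Finset.univ
          rw [← hα'] at h3
          have h4 : (∑ r, (Finsupp.single s 1 : Fin (t+1) →₀ ℕ) r) = 1 := by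
            rw [Finset.sum_eq_single_of_mem s (Finset.mem_univ s) (fun b _ hb => by
              simp [Finsupp.single_apply, Ne.symm hb])]
            simp
          omega
        have hIH := ih (N-1) (by omega) α' hoffα' hdegα'
        set ℓj : MvPolynomial (Fin (t+1)) k := C (d s) * X j - C (d j) * X s with hℓj
        have hgen : ℓj * monomial β 1 ∈ T := by
          apply Submodule.subset_span
          refine ⟨ℓj, monomial β 1,
            (isHomogeneous_C_mul_X _ _).sub (isHomogeneous_C_mul_X _ _), ?_,
            isHomogeneous_monomial _ hdegβ, rfl⟩
          simp [hℓj]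
          ring
        have hevalβ : eval d (monomial α 1) = d j * eval d (monomial β 1) := by
          rw [hmono]; simp
        have hevalα' : eval d (monomial α' 1) = d s * eval d (monomial β 1) := by
          rw [hmono']; simp
        have hid : d s • Φ (monomial α 1)
            = ℓj * monomial β 1 + d j • Φ (monomial α' 1) := by
          rw [hΦapply, hΦapply, hevalβ, hevalα', hmono, hmono', hℓj]
          simp only [smul_eq_C_mul, map_mul]
          ring
        have hfin : Φ (monomial α 1) = (d s)⁻¹ • (ℓj * monomial β 1 + d j • Φ (monomial α' 1)) := by
          rw [← hid, smul_smul, inv_mul_cancel₀ hs, one_smul]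
        rw [hfin]
        exact Submodule.smul_mem _ _ (Submodule.add_mem _ hgen (Submodule.smul_mem _ _ hIH))
  have hsub : homogeneousSubmodule (Fin (t+1)) k (m+1) ≤ Submodule.comap Φ T := by
    rw [homogeneousSubmodule_eq_finsupp_supported, AddMonoidAlgebra.supported_eq_span_single,
      Submodule.span_le]
    rintro p ⟨α, hα, rfl⟩
    simp only [SetLike.mem_coe, Submodule.mem_comap, single_eq_monomial]
    exact key _ α rfl hα
  have hfT := hsub ((mem_homogeneousSubmodule _ _).mpr hf)
  rw [Submodule.mem_comap, hΦapply, hf0, mul_zero, zero_smul, sub_zero] at hfT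
  exact hfT


lemma main_span : ∀ n : ℕ, 1 ≤ n → ∀ d : Fin n → Fin (t+1) → k, (∀ i, d i ≠ 0) →
    (∀ i j, i ≠ j → ∀ a : k, d i ≠ a • d j) →
    ∀ f : MvPolynomial (Fin (t+1)) k, f.IsHomogeneous n → (∀ i, eval (d i) f = 0) →
    f ∈ Submodule.span k {f : MvPolynomial (Fin (t+1)) k |
      ∃ ℓ : Fin n → MvPolynomial (Fin (t+1)) k,
        (∀ i, (ℓ i).IsHomogeneous 1 ∧ eval (d i) (ℓ i) = 0) ∧ f = ∏ i, ℓ i} := by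
  intro n hn
  induction n, hn using Nat.le_induction with
  | base =>
    intro d hd0 hprop f hf hv
    exact Submodule.subset_span ⟨fun _ => f, fun i => ⟨hf, hv i⟩, by simp⟩
  | succ n hn IH =>
    intro d hd0 hprop f hf hv
    obtain ⟨s, hs⟩ : ∃ s, d (Fin.last n) s ≠ 0 := by
      by_contra hcon
      push_neg at hcon
      exact hd0 (Fin.last n) (funext fun s => hcon s)
    have hfT := single_point n (d (Fin.last n)) s hs f hf (hv (Fin.last n))
    rw [Submodule.mem_span_set'] at hfT
    obtain ⟨N, a, v, hsum⟩ := hfT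
    choose ℓp gp hℓhom hℓ0 hghom hveq using fun r : Fin N => (v r).2
    set G : Fin N → MvPolynomial (Fin (t+1)) k := fun r => a r • gp r with hG
    have hf_eq : f = ∑ r, ℓp r * G r := by
      rw [← hsum]
      refine Finset.sum_congr rfl fun r _ => ?_
      rw [hveq r, hG]
      simp only [smul_eq_C_mul]
      ring
    have sep : ∀ j i : Fin (n+1), ∃ c : Fin (t+1) → k,
        j ≠ i → ((∑ r, c r * d j r) = 0 ∧ (∑ r, c r * d i r) = 1) := by
      intro j i
      rcases eq_or_ne j i with rfl | hji
      · exact ⟨0, fun hcon => absurd rfl hcon⟩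
      · obtain ⟨c, h1, h2⟩ := exists_sep (fun a => hprop i j (Ne.symm hji) a)
        exact ⟨c, fun _ => ⟨h1, h2⟩⟩
    choose c hc using sep
    set h : Fin (n+1) → MvPolynomial (Fin (t+1)) k :=
      fun i => ∏ j ∈ Finset.univ.erase i, lf (c j i) with hh
    have hhom : ∀ i, (h i).IsHomogeneous n := by
      intro i
      have hp := IsHomogeneous.prod (Finset.univ.erase i) (fun j => lf (c j i)) (fun _ => 1)
        (fun j _ => lf_hom _)
      have hcard : (∑ _j ∈ Finset.univ.erase i, 1) = n := by
        rw [Finset.sum_const, Finset.card_erase_of_mem (Finset.mem_univ i)]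
        simp
      rw [hcard] at hp
      simpa only [hh] using hp
    have heval_self : ∀ i, eval (d i) (h i) = 1 := by
      intro i
      simp only [hh, map_prod]
      apply Finset.prod_eq_one
      intro j hj
      rw [eval_lf]
      exact (hc j i (Finset.mem_erase.mp hj).1).2
    have heval_ne : ∀ i i', i' ≠ i → eval (d i') (h i) = 0 := by
      intro i i' hne
      simp only [hh, map_prod]
      apply Finset.prod_eq_zero (Finset.mem_erase.mpr ⟨hne, Finset.mem_univ i'⟩)
      rw [eval_lf]
      exact (hc i' i hne).1
    set E : Fin N → Fin n → k := fun r i => eval (d i.castSucc) (G r) with hE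
    set g' : Fin N → MvPolynomial (Fin (t+1)) k :=
      fun r => G r - ∑ i : Fin n, E r i • h i.castSucc with hg'
    have hGhom : ∀ r, (G r).IsHomogeneous n := by
      intro r
      rw [← mem_homogeneousSubmodule]
      exact Submodule.smul_mem _ _ ((mem_homogeneousSubmodule _ _).mpr (hghom r))
    have hg'hom : ∀ r, (g' r).IsHomogeneous n := by
      intro r
      rw [← mem_homogeneousSubmodule]
      refine Submodule.sub_mem _ ((mem_homogeneousSubmodule _ _).mpr (hGhom r)) ?_
      exact Submodule.sum_mem _ fun i _ =>
        Submodule.smul_mem _ _ ((mem_homogeneousSubmodule _ _).mpr (hhom _))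
    have hg'eval : ∀ r, ∀ i : Fin n, eval (d i.castSucc) (g' r) = 0 := by
      intro r i
      simp only [hg', map_sub, map_sum, smul_eq_C_mul, map_mul, eval_C]
      rw [Finset.sum_eq_single i]
      · rw [heval_self, mul_one, hE]
        exact sub_self _
      · intro b _ hbne
        rw [heval_ne b.castSucc i.castSucc (fun hx => hbne ((Fin.castSucc_injective _ hx).symm)), mul_zero]
      · intro hx
        exact absurd (Finset.mem_univ i) hx
    have hIH : ∀ r, g' r ∈ Submodule.span k {f : MvPolynomial (Fin (t+1)) k |
        ∃ ℓ : Fin n → MvPolynomial (Fin (t+1)) k,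
          (∀ i, (ℓ i).IsHomogeneous 1 ∧ eval (d i.castSucc) (ℓ i) = 0) ∧ f = ∏ i, ℓ i} := by
      intro r
      exact IH (fun i => d i.castSucc) (fun i => hd0 _)
        (fun i j hij a => hprop _ _ (fun hsx => hij (Fin.castSucc_injective _ hsx)) a)
        (g' r) (hg'hom r) (hg'eval r)
    set M : Fin n → MvPolynomial (Fin (t+1)) k := fun i => ∑ r, E r i • ℓp r with hM
    have hMhom : ∀ i, (M i).IsHomogeneous 1 := by
      intro i
      rw [← mem_homogeneousSubmodule]
      exact Submodule.sum_mem _ fun r _ =>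
        Submodule.smul_mem _ _ ((mem_homogeneousSubmodule _ _).mpr (hℓhom r))
    have hMself : ∀ i : Fin n, eval (d i.castSucc) (M i) = 0 := by
      intro i
      have h1 : eval (d i.castSucc) f = 0 := hv i.castSucc
      rw [hf_eq] at h1
      simp only [map_sum, map_mul] at h1
      simp only [hM, map_sum, smul_eq_C_mul, map_mul, eval_C]
      rw [← h1]
      refine Finset.sum_congr rfl fun r _ => ?_
      simp only [hE]
      ring
    have hkey : f = (∑ r, ℓp r * g' r) + ∑ i : Fin n, M i * h i.castSucc := by
      have h1 : ∀ r, ℓp r * g' r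
          = ℓp r * G r - ∑ i : Fin n, E r i • (ℓp r * h i.castSucc) := by
        intro r
        simp only [hg']
        rw [mul_sub, Finset.mul_sum]
        congr 1
        exact Finset.sum_congr rfl fun i _ => mul_smul_comm _ _ _
      have h2 : ∀ i : Fin n, M i * h i.castSucc = ∑ r, E r i • (ℓp r * h i.castSucc) := by
        intro i
        simp only [hM]
        rw [Finset.sum_mul]
        exact Finset.sum_congr rfl fun r _ => smul_mul_assoc _ _ _
      calc f = ∑ r, ℓp r * G r := hf_eq
        _ = (∑ r, (ℓp r * G r - ∑ i : Fin n, E r i • (ℓp r * h i.castSucc)))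
              + ∑ r, ∑ i : Fin n, E r i • (ℓp r * h i.castSucc) := by
            rw [← Finset.sum_add_distrib]
            exact Finset.sum_congr rfl fun r _ => (sub_add_cancel _ _).symm
        _ = (∑ r, ℓp r * g' r) + ∑ i : Fin n, M i * h i.castSucc := by
            rw [Finset.sum_comm]
            congr 1
            · exact Finset.sum_congr rfl fun r _ => (h1 r).symm
            · exact Finset.sum_congr rfl fun i _ => (h2 i).symm
    rw [hkey]
    apply Submodule.add_mem
    · apply Submodule.sum_mem
      intro r _
      have hmap : Submodule.span k {f : MvPolynomial (Fin (t+1)) k |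
          ∃ ℓ : Fin n → MvPolynomial (Fin (t+1)) k,
            (∀ i, (ℓ i).IsHomogeneous 1 ∧ eval (d i.castSucc) (ℓ i) = 0) ∧ f = ∏ i, ℓ i} ≤
          Submodule.comap (LinearMap.mulLeft k (ℓp r))
            (Submodule.span k {f : MvPolynomial (Fin (t+1)) k |
              ∃ ℓ : Fin (n+1) → MvPolynomial (Fin (t+1)) k,
                (∀ i, (ℓ i).IsHomogeneous 1 ∧ eval (d i) (ℓ i) = 0) ∧ f = ∏ i, ℓ i}) := by
        rw [Submodule.span_le]
        rintro p ⟨w, hw, rfl⟩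
        simp only [SetLike.mem_coe, Submodule.mem_comap, LinearMap.mulLeft_apply]
        apply Submodule.subset_span
        refine ⟨Fin.snoc w (ℓp r), ?_, ?_⟩
        · intro i
          refine Fin.lastCases ?_ ?_ i
          · simp only [Fin.snoc_last]
            exact ⟨hℓhom r, hℓ0 r⟩
          · intro i
            simp only [Fin.snoc_castSucc]
            exact hw i
        · rw [Fin.prod_univ_castSucc]
          simp only [Fin.snoc_castSucc, Fin.snoc_last]
          rw [mul_comm]
      exact hmap (hIH r)
    · apply Submodule.sum_mem
      intro i _
      apply Submodule.subset_span
      refine ⟨Function.update (fun j => lf (c j i.castSucc)) i.castSucc (M i), ?_, ?_⟩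
      · intro j
        rcases eq_or_ne j i.castSucc with rfl | hne
        · rw [Function.update_self]
          exact ⟨hMhom i, hMself i⟩
        · rw [Function.update_of_ne hne]
          exact ⟨lf_hom _, by rw [eval_lf]; exact (hc j i.castSucc hne).1⟩
      · rw [← Finset.mul_prod_erase Finset.univ _ (Finset.mem_univ i.castSucc),
          Function.update_self]
        have hrest : ∏ j ∈ Finset.univ.erase i.castSucc,
            Function.update (fun j => lf (c j i.castSucc)) i.castSucc (M i) j
            = h i.castSucc := by
          simp only [hh]
          exact Finset.prod_congr rfl fun j hj =>
            Function.update_of_ne (Finset.mem_erase.mp hj).1 _ _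
        rw [hrest]


lemma degree_eq_card_toMultiset {σ : Type*} (α : σ →₀ ℕ) :
    α.degree = Multiset.card (Finsupp.toMultiset α) := by
  rw [Finsupp.card_toMultiset]; rfl

end Stmt8Aux

open Stmt8Aux

/-- for `n ≥ 1` distinct points `d₀, …, d_{n−1}` of `ℙ^t`, the span of all
products `ℓ_{n−1}⋯ℓ₀` of linear forms `ℓᵢ` vanishing at `dᵢ` is exactly the space of
homogeneous degree-`n` polynomials vanishing at all the `dᵢ`, a space of dimension
`binom(n+t,t) − n`. -/
theorem stmt_8 {k : Type*} [Field k] [IsAlgClosed k]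
    (t : ℕ) (ht : 1 ≤ t) (n : ℕ) (hn : 1 ≤ n)
    (d : Fin n → Fin (t + 1) → k)
    (hd0 : ∀ i, d i ≠ 0)
    (hprop : ∀ i j, i ≠ j → ∀ a : k, d i ≠ a • d j) :
    (Submodule.span k {f : MvPolynomial (Fin (t + 1)) k |
        ∃ ℓ : Fin n → MvPolynomial (Fin (t + 1)) k,
          (∀ i, (ℓ i).IsHomogeneous 1 ∧ MvPolynomial.eval (d i) (ℓ i) = 0) ∧ f = ∏ i, ℓ i}
      = MvPolynomial.homogeneousSubmodule (Fin (t + 1)) k n ⊓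
          ⨅ i, LinearMap.ker (MvPolynomial.aeval (R := k) (d i)).toLinearMap) ∧
    Module.finrank k ↥(MvPolynomial.homogeneousSubmodule (Fin (t + 1)) k n ⊓
        ⨅ i, LinearMap.ker (MvPolynomial.aeval (R := k) (d i)).toLinearMap) + n
      = (n + t).choose t := by

  classical
  set K : Submodule k (MvPolynomial (Fin (t+1)) k) :=
    ⨅ i, LinearMap.ker (MvPolynomial.aeval (R := k) (d i)).toLinearMap with hK
  have hmemK : ∀ f : MvPolynomial (Fin (t+1)) k, f ∈ K ↔ ∀ i, eval (d i) f = 0 := by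
    intro f
    simp only [hK, Submodule.mem_iInf, LinearMap.mem_ker, AlgHom.toLinearMap_apply,
      aeval_eq_eval']
  constructor
  · apply le_antisymm
    · rw [Submodule.span_le]
      rintro p ⟨ℓ, hℓ, rfl⟩
      refine Submodule.mem_inf.mpr ⟨?_, ?_⟩
      · rw [mem_homogeneousSubmodule]
        have hp := IsHomogeneous.prod Finset.univ ℓ (fun _ => 1) (fun i _ => (hℓ i).1)
        simpa using hp
      · rw [hmemK]
        intro i
        rw [map_prod]
        exact Finset.prod_eq_zero (Finset.mem_univ i) (hℓ i).2
    · intro f hf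
      obtain ⟨hf1, hf2⟩ := Submodule.mem_inf.mp hf
      exact main_span n hn d hd0 hprop f ((mem_homogeneousSubmodule _ _).mp hf1)
        ((hmemK f).mp hf2)
  · -- dimension count
    have hHeq : homogeneousSubmodule (Fin (t+1)) k n
        = restrictSupport k {α : Fin (t+1) →₀ ℕ | α.degree = n} := by
      rw [homogeneousSubmodule_eq_finsupp_supported]; rfl
    have eqv : ↥{α : Fin (t+1) →₀ ℕ | α.degree = n} ≃ Sym (Fin (t+1)) n :=
      { toFun := fun a => ⟨Finsupp.toMultiset a.1, by
          rw [← degree_eq_card_toMultiset]; exact a.2⟩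
        invFun := fun s => ⟨Multiset.toFinsupp s.1, by
          show (Multiset.toFinsupp s.1).degree = n
          rw [degree_eq_card_toMultiset, Multiset.toFinsupp_toMultiset]
          exact s.2⟩
        left_inv := fun a => Subtype.ext (Finsupp.toMultiset_toFinsupp a.1)
        right_inv := fun s => Subtype.ext (Multiset.toFinsupp_toMultiset s.1) }
    haveI : Fintype ↥{α : Fin (t+1) →₀ ℕ | α.degree = n} := Fintype.ofEquiv _ eqv.symm
    have hcardS : Fintype.card ↥{α : Fin (t+1) →₀ ℕ | α.degree = n} = (n + t).choose t := by
      rw [Fintype.card_congr eqv, Sym.card_sym_eq_choose, Fintype.card_fin]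
      have h1 : t + 1 + n - 1 = n + t := by omega
      rw [h1]
      have h2 := Nat.choose_symm (show n ≤ n + t by omega)
      have h3 : n + t - n = t := by omega
      rw [h3] at h2
      exact h2.symm
    have bR := MvPolynomial.basisRestrictSupport k {α : Fin (t+1) →₀ ℕ | α.degree = n}
    haveI hfinH : Module.Finite k ↥(homogeneousSubmodule (Fin (t+1)) k n) := by
      rw [hHeq]; exact Module.Finite.of_basis bR
    have hfrH : Module.finrank k ↥(homogeneousSubmodule (Fin (t+1)) k n) = (n + t).choose t := by
      rw [hHeq, Module.finrank_eq_card_basis bR, hcardS]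
    set Ev : MvPolynomial (Fin (t+1)) k →ₗ[k] (Fin n → k) :=
      LinearMap.pi (fun i => (MvPolynomial.aeval (R := k) (d i)).toLinearMap) with hEv
    set Ev' := Ev.domRestrict (homogeneousSubmodule (Fin (t+1)) k n) with hEv'
    have hEv'apply : ∀ (p : ↥(homogeneousSubmodule (Fin (t+1)) k n)) (i : Fin n),
        Ev' p i = eval (d i) p.1 := by
      intro p i
      simp [hEv', hEv, LinearMap.domRestrict_apply, LinearMap.pi_apply, aeval_eq_eval']
    have hGex : ∀ i : Fin n, ∃ G : MvPolynomial (Fin (t+1)) k, G.IsHomogeneous n ∧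
        eval (d i) G = 1 ∧ ∀ j, j ≠ i → eval (d j) G = 0 := by
      intro i
      have sep : ∀ j : Fin n, ∃ c : Fin (t+1) → k,
          j ≠ i → ((∑ r, c r * d j r) = 0 ∧ (∑ r, c r * d i r) = 1) := by
        intro j
        rcases eq_or_ne j i with rfl | hji
        · exact ⟨0, fun hcon => absurd rfl hcon⟩
        · obtain ⟨c, h1, h2⟩ := exists_sep (fun a => hprop i j (Ne.symm hji) a)
          exact ⟨c, fun _ => ⟨h1, h2⟩⟩
      choose c hc using sep
      obtain ⟨s, hs⟩ : ∃ s, d i s ≠ 0 := by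
        by_contra hcon
        push_neg at hcon
        exact hd0 i (funext fun s => hcon s)
      refine ⟨C ((d i s)⁻¹) * X s * ∏ j ∈ Finset.univ.erase i, lf (c j), ?_, ?_, ?_⟩
      · have hp := IsHomogeneous.prod (Finset.univ.erase i) (fun j => lf (c j)) (fun _ => 1)
          (fun j _ => lf_hom _)
        have hcard : (∑ _j ∈ Finset.univ.erase i, 1) = n - 1 := by
          rw [Finset.sum_const, Finset.card_erase_of_mem (Finset.mem_univ i)]
          simp [Finset.card_univ]
        rw [hcard] at hp
        have hres := (isHomogeneous_C_mul_X ((d i s)⁻¹) s).mul hp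
        have hn' : 1 + (n - 1) = n := by omega
        rwa [hn'] at hres
      · rw [map_mul, map_mul, eval_C, eval_X]
        have hone : eval (d i) (∏ j ∈ Finset.univ.erase i, lf (c j)) = 1 := by
          rw [map_prod]
          exact Finset.prod_eq_one fun j hj => by
            rw [eval_lf]; exact (hc j (Finset.mem_erase.mp hj).1).2
        rw [hone, mul_one, inv_mul_cancel₀ hs]
      · intro j hj
        rw [map_mul]
        have hzero : eval (d j) (∏ j' ∈ Finset.univ.erase i, lf (c j')) = 0 := by
          rw [map_prod]
          exact Finset.prod_eq_zero (Finset.mem_erase.mpr ⟨hj, Finset.mem_univ j⟩)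
            (by rw [eval_lf]; exact (hc j hj).1)
        rw [hzero, mul_zero]
    choose G hGhom hGone hGzero using hGex
    have hGmem : ∀ i, G i ∈ homogeneousSubmodule (Fin (t+1)) k n :=
      fun i => (mem_homogeneousSubmodule _ _).mpr (hGhom i)
    have hsurj : LinearMap.range Ev' = ⊤ := by
      rw [eq_top_iff]
      rintro w -
      rw [LinearMap.mem_range]
      refine ⟨∑ i, w i • ⟨G i, hGmem i⟩, ?_⟩
      rw [map_sum]
      funext j
      rw [Finset.sum_apply]
      have hterm : ∀ i, (Ev' (w i • (⟨G i, hGmem i⟩ : ↥(homogeneousSubmodule (Fin (t+1)) k n)))) j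
          = w i * eval (d j) (G i) := by
        intro i
        rw [map_smul]
        simp [hEv'apply]
      rw [Finset.sum_congr rfl fun i _ => hterm i]
      rw [Finset.sum_eq_single j (fun i _ hij => by rw [hGzero i j (Ne.symm hij), mul_zero])
        (fun hcon => absurd (Finset.mem_univ j) hcon)]
      rw [hGone, mul_one]
    have hker : LinearMap.ker Ev'
        = Submodule.comap (homogeneousSubmodule (Fin (t+1)) k n).subtype
          (homogeneousSubmodule (Fin (t+1)) k n ⊓ K) := by
      rw [hEv', LinearMap.ker_domRestrict, hEv, LinearMap.ker_pi]
      ext x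
      simp only [Submodule.mem_comap, Submodule.mem_inf]
      exact ⟨fun hx => ⟨x.2, hx⟩, fun hx => hx.2⟩
    have hcomap : Module.finrank k
        ↥(Submodule.comap (homogeneousSubmodule (Fin (t+1)) k n).subtype
          (homogeneousSubmodule (Fin (t+1)) k n ⊓ K))
        = Module.finrank k ↥(homogeneousSubmodule (Fin (t+1)) k n ⊓ K) :=
      LinearEquiv.finrank_eq (Submodule.comapSubtypeEquivOfLe inf_le_left)
    have hrn := LinearMap.finrank_range_add_finrank_ker Ev'
    rw [hsurj, finrank_top, Module.finrank_fin_fun, hker, hcomap, hfrH] at hrn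
    omega
end
end

section
/- Let d_1, …, d_n ∈ k^{t+1} be pairwise non-proportional nonzero vectors with vanishing ideals m_1, …, m_n ⊆ U = k[x_0,…,x_t], let e_1, …, e_n ≥ 1, and set e = e_1 + ⋯ + e_n and J = m_1^{e_1} ∩ ⋯ ∩ m_n^{e_n}. Then for every m ≥ e − 1, the k-dimension of the degree-m graded piece J_m equals binom(m+t,t) − Σ_{i=1}^n binom(e_i+t−1, t). In particular, if every e_i = 1 then dim_k J_m = binom(m+t,t) − n for all m ≥ n − 1. -/
set_option synthInstance.maxHeartbeats 1000000
set_option maxHeartbeats 4000000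

noncomputable section

namespace Stmt9Aux
open MvPolynomial

variable {k : Type*} [Field k] {N t : ℕ}

/-! ### Linear substitution -/

def linSub (A : Matrix (Fin N) (Fin N) k) :
    MvPolynomial (Fin N) k →ₐ[k] MvPolynomial (Fin N) k :=
  aeval (fun i => ∑ j, C (A i j) * X j)

lemma linSub_X (A : Matrix (Fin N) (Fin N) k) (i : Fin N) :
    linSub A (X i) = ∑ j, C (A i j) * X j := aeval_X _ _

lemma linSub_comp (A B : Matrix (Fin N) (Fin N) k) :
    (linSub A).comp (linSub B) = linSub (B * A) := by
  apply MvPolynomial.algHom_ext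
  intro i
  simp only [AlgHom.coe_comp, Function.comp_apply, linSub_X, map_sum, map_mul, linSub,
    aeval_X, aeval_C, algebraMap_eq]
  simp only [Finset.mul_sum]
  simp only [← mul_assoc, ← C_mul]
  rw [Finset.sum_comm]
  simp only [Matrix.mul_apply, Finset.sum_mul, map_sum]

lemma linSub_one : linSub (1 : Matrix (Fin N) (Fin N) k) = AlgHom.id k _ := by
  apply MvPolynomial.algHom_ext
  intro i
  simp [linSub_X, Matrix.one_apply]

lemma linSub_linSub (A B : Matrix (Fin N) (Fin N) k) (f : MvPolynomial (Fin N) k) :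
    linSub A (linSub B f) = linSub (B * A) f := by
  rw [← linSub_comp]; rfl

lemma eval_linSub (A : Matrix (Fin N) (Fin N) k) (f : MvPolynomial (Fin N) k)
    (y : Fin N → k) : eval y (linSub A f) = eval (A.mulVec y) f := by
  have h := MvPolynomial.comp_aeval_apply (R := k)
    (f := fun i => ∑ j, C (A i j) * X j)
    ((aeval y : MvPolynomial (Fin N) k →ₐ[k] k)) f
  have hy : ∀ g : MvPolynomial (Fin N) k, (aeval y : MvPolynomial (Fin N) k →ₐ[k] k) g
      = eval y g := fun g => by
    rw [← coe_aeval_eq_eval]; rfl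
  rw [linSub, ← hy, h, ← coe_aeval_eq_eval]
  have : (fun i => (aeval y : MvPolynomial (Fin N) k →ₐ[k] k) (∑ j, C (A i j) * X j))
      = A.mulVec y := by
    funext i
    simp [Matrix.mulVec, dotProduct, hy]
  rw [this]
  rfl

lemma linSub_isHomogeneous (A : Matrix (Fin N) (Fin N) k) {f : MvPolynomial (Fin N) k}
    {m : ℕ} (hf : f.IsHomogeneous m) : (linSub A f).IsHomogeneous m := by
  simpa only [one_mul, linSub] using hf.aeval (fun i => ∑ j, C (A i j) * X j)
    (fun i => IsHomogeneous.sum _ _ 1 fun j _ => isHomogeneous_C_mul_X _ _)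

/-! ### A good matrix for each point -/

def e0v (t : ℕ) : Fin (t+1) → k := fun j => if j = 0 then 1 else 0

lemma exists_good_matrix {t : ℕ} (d : Fin (t+1) → k) (hd : d ≠ 0) :
    ∃ A B : Matrix (Fin (t+1)) (Fin (t+1)) k, B * A = 1 ∧ A * B = 1 ∧
      A.mulVec (e0v t) = d := by
  classical
  obtain ⟨c, hc⟩ : ∃ c, d c ≠ 0 := by
    by_contra h
    push_neg at h
    exact hd (funext h)
  set A : Matrix (Fin (t+1)) (Fin (t+1)) k :=
    Matrix.of fun i j => if j = 0 then d i else if j = c then (if i = 0 then 1 else 0)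
      else if i = j then 1 else 0 with hA
  have hmv : ∀ v : Fin (t+1) → k, ∀ i, A.mulVec v i =
      d i * v 0 + ((if c ≠ 0 ∧ i = 0 then v c else 0) +
        (if i ≠ 0 ∧ i ≠ c then v i else 0)) := by
    intro v i
    rw [Matrix.mulVec, dotProduct]
    have hsplit : ∀ j, A i j * v j =
        (if j = 0 then d i * v 0 else 0) + ((if j = c ∧ (c ≠ 0 ∧ i = 0) then v c else 0) +
          (if j = i ∧ (i ≠ 0 ∧ i ≠ c) then v i else 0)) := by
      intro j
      by_cases hj0 : j = 0 <;> by_cases hjc : j = c <;> by_cases hi0 : i = 0 <;>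
        by_cases hic : i = c <;> by_cases hij : i = j <;>
        (simp only [hA, Matrix.of_apply]; simp_all) <;>
        (first
          | ring1
          | (intro h; exact absurd h.symm (by assumption))
          | (rw [if_neg (fun h => absurd h.symm (by assumption))]))
    simp only [hsplit, Finset.sum_add_distrib, ite_and]
    simp [Finset.sum_ite_eq', Finset.sum_ite_eq]
  have hinj : ∀ v : Fin (t+1) → k, A.mulVec v = 0 → v = 0 := by
    intro v hv
    have hv' : ∀ i, A.mulVec v i = 0 := fun i => by rw [hv]; rfl
    have key := fun i => (hmv v i).symm.trans (hv' i)
    have h0 : v 0 = 0 := by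
      by_cases hc0 : c = 0
      · have := key 0
        simp [hc0] at this
        rcases this with h | h
        · rw [← hc0] at h; exact absurd h hc
        · exact h
      · have := key c
        simp [hc0] at this
        rcases this with h | h
        · exact absurd h hc
        · exact h
    have hvc : v c = 0 := by
      by_cases hc0 : c = 0
      · rw [hc0]; exact h0
      · have := key 0
        simp [hc0, h0, Ne.symm hc0] at this
        exact this
    funext i
    by_cases hi0 : i = 0
    · rw [hi0]; exact h0
    by_cases hic : i = c
    · rw [hic]; exact hvc
    · have := key i
      simp [hi0, hic, h0] at this
      exact this
  have hdet : IsUnit A.det := by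
    rw [isUnit_iff_ne_zero]
    intro h0
    obtain ⟨v, hv, hv0⟩ := (Matrix.exists_mulVec_eq_zero_iff).2 h0
    exact hv (hinj v hv0)
  refine ⟨A, A⁻¹, Matrix.nonsing_inv_mul A hdet, Matrix.mul_nonsing_inv A hdet, ?_⟩
  funext i
  rw [Matrix.mulVec, dotProduct]
  have : ∀ j, A i j * e0v t j = if j = 0 then d i else 0 := by
    intro j
    by_cases hj : j = 0 <;> simp [hA, e0v, hj]
  simp only [this]
  simp

/-! ### degrees -/

def dg (σ : Fin (t+1) →₀ ℕ) : ℕ := ∑ j, σ j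
def off (σ : Fin (t+1) →₀ ℕ) : ℕ := ∑ j ∈ Finset.univ.erase 0, σ j

lemma dg_eq_degree (σ : Fin (t+1) →₀ ℕ) : dg σ = σ.degree := by
  rw [Finsupp.degree]
  exact (Finset.sum_subset (Finset.subset_univ _)
    (fun j _ hj => Finsupp.notMem_support_iff.mp hj)).symm

lemma dg_eq (σ : Fin (t+1) →₀ ℕ) : dg σ = σ 0 + off σ := by
  rw [dg, off, ← Finset.add_sum_erase _ _ (Finset.mem_univ 0)]

lemma off_add (σ τ : Fin (t+1) →₀ ℕ) : off (σ + τ) = off σ + off τ := by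
  simp [off, Finset.sum_add_distrib]

lemma dg_add (σ τ : Fin (t+1) →₀ ℕ) : dg (σ + τ) = dg σ + dg τ := by
  simp [dg, Finset.sum_add_distrib]

lemma off_single0 (K : ℕ) : off (Finsupp.single (0 : Fin (t+1)) K) = 0 := by
  refine Finset.sum_eq_zero fun j hj => ?_
  rw [Finset.mem_erase] at hj
  simp [Finsupp.single_apply, Ne.symm hj.1]

lemma dg_single0 (K : ℕ) : dg (Finsupp.single (0 : Fin (t+1)) K) = K := by
  rw [dg_eq, off_single0, Finsupp.single_eq_same]
  omega

lemma off_le_dg (σ : Fin (t+1) →₀ ℕ) : off σ ≤ dg σ := by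
  rw [dg_eq]; omega

lemma off_erase0 (σ : Fin (t+1) →₀ ℕ) : off (σ.erase 0) = off σ := by
  refine Finset.sum_congr rfl fun j hj => ?_
  rw [Finsupp.erase_ne (Finset.mem_erase.mp hj).1]

lemma dg_erase0 (σ : Fin (t+1) →₀ ℕ) : dg (σ.erase 0) = off σ := by
  rw [dg_eq, off_erase0, Finsupp.erase_same, zero_add]

lemma off_mono {σ τ : Fin (t+1) →₀ ℕ} (h : σ ≤ τ) : off σ ≤ off τ :=
  Finset.sum_le_sum fun j _ => Finsupp.le_def.mp h j

/-! ### the off-degree ideal and powers of the vanishing ideal at e0 -/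

def offIdeal (k : Type*) [Field k] (t e : ℕ) : Ideal (MvPolynomial (Fin (t+1)) k) where
  carrier := {f | ∀ σ, coeff σ f ≠ 0 → e ≤ off σ}
  zero_mem' := fun σ h => absurd (coeff_zero σ) h
  add_mem' := by
    intro f g hf hg σ h
    rw [coeff_add] at h
    by_cases h1 : coeff σ f ≠ 0
    · exact hf _ h1
    · push_neg at h1
      exact hg _ (by rwa [h1, zero_add] at h)
  smul_mem' := by
    classical
    intro c f hf σ h
    rw [smul_eq_mul, coeff_mul] at h
    obtain ⟨⟨a, b⟩, hab, hne⟩ := Finset.exists_ne_zero_of_sum_ne_zero h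
    rw [Finset.HasAntidiagonal.mem_antidiagonal] at hab
    dsimp only at hab hne
    have hb : coeff b f ≠ 0 := fun h0 => hne (by rw [h0, mul_zero])
    calc e ≤ off b := hf b hb
    _ ≤ off σ := by rw [← hab, off_add]; omega

lemma eval_e0v_eq_coeff {f : MvPolynomial (Fin (t+1)) k} {D : ℕ} (hf : f.IsHomogeneous D) :
    eval (e0v t) f = coeff (Finsupp.single 0 D) f := by
  classical
  rw [eval_eq]
  have key : ∀ σ ∈ f.support, (coeff σ f * ∏ i ∈ σ.support, e0v t i ^ σ i)
      = if σ = Finsupp.single 0 D then coeff σ f else 0 := by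
    intro σ hσ
    by_cases hs : σ = Finsupp.single 0 D
    · rw [if_pos hs, hs]
      have : ∀ i ∈ (Finsupp.single (0:Fin (t+1)) D).support,
          (e0v t i : k) ^ (Finsupp.single (0:Fin (t+1)) D) i = 1 := by
        intro i hi
        have hi0 : i = 0 := by
          by_contra h
          simp [Finsupp.single_apply, Ne.symm h, Finsupp.mem_support_iff] at hi
        rw [hi0]
        simp [e0v]
      rw [Finset.prod_congr rfl this]
      simp
    · rw [if_neg hs]
      have hoff : off σ ≠ 0 := by
        intro h0
        apply hs
        have hz : ∀ j ∈ Finset.univ.erase (0 : Fin (t+1)), σ j = 0 := by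
          intro j hj
          exact Finset.sum_eq_zero_iff.mp h0 j hj
        have hdeg : σ.degree = D := by
          by_contra hne
          exact (Finsupp.mem_support_iff.mp hσ) (hf.coeff_eq_zero hne)
        ext j
        by_cases hj : j = 0
        · subst hj
          rw [Finsupp.single_eq_same, ← hdeg, ← dg_eq_degree, dg_eq]
          have : off σ = 0 := h0
          omega
        · rw [hz j (by simp [hj]), Finsupp.single_apply, if_neg (Ne.symm hj)]
      obtain ⟨j, hj, hjne⟩ : ∃ j ∈ Finset.univ.erase (0:Fin (t+1)), σ j ≠ 0 := by
        by_contra h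
        push_neg at h
        exact hoff (Finset.sum_eq_zero h)
      have hj0 : j ≠ 0 := (Finset.mem_erase.mp hj).1
      have : (e0v t j : k) ^ σ j = 0 := by
        rw [show (e0v t j : k) = 0 by simp [e0v, hj0]]
        exact zero_pow hjne
      rw [Finset.prod_eq_zero (Finsupp.mem_support_iff.mpr hjne) this, mul_zero]
  rw [Finset.sum_congr rfl key, Finset.sum_ite_eq' f.support (Finsupp.single 0 D)
    (fun σ => coeff σ f)]
  split_ifs with h
  · rfl
  · exact (notMem_support_iff.mp h).symm

lemma pvi_pow_le_offIdeal (e : ℕ) :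
    (pointVanishingIdeal (e0v t) : Ideal (MvPolynomial (Fin (t+1)) k)) ^ e ≤ offIdeal k t e := by
  have hpvi1 : (pointVanishingIdeal (e0v t) : Ideal (MvPolynomial (Fin (t+1)) k))
      ≤ offIdeal k t 1 := by
    rw [pointVanishingIdeal, Ideal.span_le]
    rintro g ⟨hhom, hev⟩
    intro σ hσ
    rw [eval_e0v_eq_coeff hhom] at hev
    by_contra hlt
    push_neg at hlt
    have h : off σ = 0 := by omega
    · have hdeg : σ.degree = 1 := by
        by_contra hne
        exact hσ (IsHomogeneous.coeff_eq_zero hhom hne)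
      have hσeq : σ = Finsupp.single 0 1 := by
        ext j
        by_cases hj : j = 0
        · subst hj
          have := dg_eq_degree σ
          rw [dg_eq] at this
          rw [Finsupp.single_eq_same]
          omega
        · have : σ j = 0 := by
            have : ∑ i ∈ Finset.univ.erase (0:Fin (t+1)), σ i = 0 := h
            exact Finset.sum_eq_zero_iff.mp this j (by simp [hj])
          rw [this, Finsupp.single_apply, if_neg (Ne.symm hj)]
      rw [hσeq] at hσ
      exact hσ hev
  induction e with
  | zero => exact fun f _ σ _ => Nat.zero_le _
  | succ e ih =>
    rw [pow_succ]
    refine Ideal.mul_le.mpr fun f hf g hg => ?_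
    have hg1 : g ∈ offIdeal k t 1 := hpvi1 hg
    intro σ hσ
    rw [coeff_mul] at hσ
    obtain ⟨⟨a, b⟩, hab, hne⟩ := Finset.exists_ne_zero_of_sum_ne_zero hσ
    rw [Finset.HasAntidiagonal.mem_antidiagonal] at hab
    dsimp only at hab hne
    have ha : coeff a f ≠ 0 := fun h0 => hne (by rw [h0, zero_mul])
    have hb : coeff b g ≠ 0 := fun h0 => hne (by rw [h0, mul_zero])
    have := ih hf a ha
    have := hg1 b hb
    rw [← hab, off_add]
    omega

lemma X_mem_pvi {j : Fin (t+1)} (hj : j ≠ 0) :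
    (X j : MvPolynomial (Fin (t+1)) k) ∈ pointVanishingIdeal (e0v t) := by
  apply Ideal.subset_span
  exact ⟨isHomogeneous_X _ _, by simp [e0v, hj]⟩

lemma prod_pow_mem_pow {R : Type*} [CommRing R] (I : Ideal R) {ι : Type*} (s : Finset ι)
    (x : ι → R) (hx : ∀ j ∈ s, x j ∈ I) (n : ι → ℕ) :
    (∏ j ∈ s, x j ^ n j) ∈ I ^ (∑ j ∈ s, n j) := by
  classical
  induction s using Finset.induction with
  | empty => simp [Ideal.one_eq_top]
  | insert _ _ hnotmem ih =>
    rename_i a s'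
    rw [Finset.prod_insert hnotmem, Finset.sum_insert hnotmem, pow_add]
    exact Ideal.mul_mem_mul (Ideal.pow_mem_pow (hx a (Finset.mem_insert_self a s')) _)
      (ih (fun j hj => hx j (Finset.mem_insert_of_mem hj)))

lemma offIdeal_le_pvi_pow (e : ℕ) :
    offIdeal k t e ≤ (pointVanishingIdeal (e0v t) : Ideal (MvPolynomial (Fin (t+1)) k)) ^ e := by
  classical
  intro f hf
  rw [← support_sum_monomial_coeff f]
  refine Ideal.sum_mem _ fun σ hσ => ?_
  have hoff : e ≤ off σ := hf σ (Finsupp.mem_support_iff.mp hσ)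
  have hmono : (monomial σ (coeff σ f) : MvPolynomial (Fin (t+1)) k)
      = (C (coeff σ f) * X 0 ^ σ 0) * ∏ j ∈ Finset.univ.erase 0, X j ^ σ j := by
    rw [monomial_eq]
    rw [mul_assoc, Finsupp.prod_fintype _ _ (fun j => pow_zero _)]
    rw [← Finset.mul_prod_erase _ _ (Finset.mem_univ (0 : Fin (t+1)))]
  rw [hmono]
  apply Ideal.mul_mem_left
  have := prod_pow_mem_pow (pointVanishingIdeal (e0v t) :
      Ideal (MvPolynomial (Fin (t+1)) k)) (Finset.univ.erase 0) (fun j => X j)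
    (fun j hj => X_mem_pvi (Finset.mem_erase.mp hj).1) (fun j => σ j)
  exact Ideal.pow_le_pow_right hoff this

lemma mem_pvi_e0_pow_iff {e : ℕ} {f : MvPolynomial (Fin (t+1)) k} :
    f ∈ (pointVanishingIdeal (e0v t) : Ideal (MvPolynomial (Fin (t+1)) k)) ^ e ↔
      ∀ σ, coeff σ f ≠ 0 → e ≤ off σ :=
  ⟨fun h => pvi_pow_le_offIdeal e h, fun h => offIdeal_le_pvi_pow e h⟩

/-! ### transport along linSub -/

lemma linSub_mem_pvi_pow (A B : Matrix (Fin N) (Fin N) k) (h2 : A * B = 1)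
    (dv : Fin N → k) (e' : ℕ) {f : MvPolynomial (Fin N) k}
    (hf : f ∈ pointVanishingIdeal dv ^ e') :
    linSub A f ∈ pointVanishingIdeal (B.mulVec dv) ^ e' := by
  have hle : Ideal.map (linSub A) (pointVanishingIdeal dv)
      ≤ pointVanishingIdeal (B.mulVec dv) := by
    rw [pointVanishingIdeal, Ideal.map_span, Ideal.span_le]
    rintro g ⟨g0, ⟨hhom, hev⟩, rfl⟩
    exact Ideal.subset_span ⟨linSub_isHomogeneous _ hhom, by
      rw [eval_linSub, Matrix.mulVec_mulVec, h2, Matrix.one_mulVec]; exact hev⟩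
  have hmem : linSub A f ∈ Ideal.map (linSub A) (pointVanishingIdeal dv ^ e') :=
    Ideal.mem_map_of_mem _ hf
  rw [Ideal.map_pow] at hmem
  exact Ideal.pow_right_mono hle e' hmem

lemma mem_pvi_pow_iff_linSub {t : ℕ} (A B : Matrix (Fin (t+1)) (Fin (t+1)) k)
    (h1 : B * A = 1) (h2 : A * B = 1) (dv : Fin (t+1) → k)
    (hA0 : A.mulVec (e0v t) = dv) (e' : ℕ) (f : MvPolynomial (Fin (t+1)) k) :
    f ∈ pointVanishingIdeal dv ^ e' ↔
      linSub A f ∈ (pointVanishingIdeal (e0v t) : Ideal (MvPolynomial (Fin (t+1)) k)) ^ e' := by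
  constructor
  · intro hf
    have h := linSub_mem_pvi_pow A B h2 dv e' hf
    rwa [show B.mulVec dv = e0v t by
      rw [← hA0, Matrix.mulVec_mulVec, h1, Matrix.one_mulVec]] at h
  · intro hf
    have h := linSub_mem_pvi_pow B A h1 (e0v t) e' hf
    rw [linSub_linSub, h2, linSub_one, hA0] at h
    exact h

lemma mem_pvi_pow_iff_coeff {t : ℕ} (A B : Matrix (Fin (t+1)) (Fin (t+1)) k)
    (h1 : B * A = 1) (h2 : A * B = 1) (dv : Fin (t+1) → k)
    (hA0 : A.mulVec (e0v t) = dv) (e' : ℕ) (f : MvPolynomial (Fin (t+1)) k) :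
    f ∈ pointVanishingIdeal dv ^ e' ↔
      ∀ σ, coeff σ (linSub A f) ≠ 0 → e' ≤ off σ := by
  rw [mem_pvi_pow_iff_linSub A B h1 h2 dv hA0, mem_pvi_e0_pow_iff]

/-! ### counting -/

def degSetEquivSym (t M : ℕ) : {σ : Fin (t+1) →₀ ℕ // σ.degree = M} ≃ Sym (Fin (t+1)) M :=
  (Multiset.toFinsupp (α := Fin (t+1))).toEquiv.symm.subtypeEquiv fun σ => by
    show σ.degree = M ↔ Multiset.card (Finsupp.toMultiset σ) = M
    rw [Finsupp.card_toMultiset]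
    rfl

instance degSetFintype (t M : ℕ) : Fintype {σ : Fin (t+1) →₀ ℕ // σ.degree = M} :=
  Fintype.ofEquiv _ (degSetEquivSym t M).symm

lemma card_degSet (t M : ℕ) :
    Fintype.card {σ : Fin (t+1) →₀ ℕ // σ.degree = M} = (M + t).choose t := by
  have h3 := Nat.choose_symm (show M ≤ M + t by omega)
  rw [show M + t - M = t from by omega] at h3
  rw [Fintype.card_congr (degSetEquivSym t M), Sym.card_sym_eq_choose, Fintype.card_fin,
    show t + 1 + M - 1 = M + t from by omega, h3]

abbrev lowSet (t E : ℕ) : Type _ := {τ : Fin (t+1) →₀ ℕ // τ 0 = 0 ∧ dg τ ≤ E}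

def lowSetEquiv (t E : ℕ) : lowSet t E ≃ {σ : Fin (t+1) →₀ ℕ // σ.degree = E} where
  toFun τ := ⟨τ.1 + Finsupp.single 0 (E - dg τ.1), by
    rw [← dg_eq_degree, dg_add, dg_single0]
    have := τ.2.2
    omega⟩
  invFun σ := ⟨σ.1.erase 0, Finsupp.erase_same, by
    rw [dg_erase0]
    have h := dg_eq σ.1
    rw [dg_eq_degree, σ.2] at h
    omega⟩
  left_inv τ := by
    apply Subtype.ext
    ext j
    by_cases hj : j = 0
    · subst hj
      rw [Finsupp.erase_same, τ.2.1]
    · rw [Finsupp.erase_ne hj, Finsupp.add_apply, Finsupp.single_apply, if_neg (Ne.symm hj),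
        add_zero]
  right_inv σ := by
    apply Subtype.ext
    ext j
    by_cases hj : j = 0
    · subst hj
      rw [Finsupp.add_apply, Finsupp.erase_same, Finsupp.single_eq_same, zero_add, dg_erase0]
      have h := dg_eq σ.1
      rw [dg_eq_degree, σ.2] at h
      omega
    · rw [Finsupp.add_apply, Finsupp.erase_ne hj, Finsupp.single_apply, if_neg (Ne.symm hj),
        add_zero]

instance lowSetFintype (t E : ℕ) : Fintype (lowSet t E) :=
  Fintype.ofEquiv _ (lowSetEquiv t E).symm

lemma card_lowSet (t E : ℕ) : Fintype.card (lowSet t E) = (E + t).choose t := by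
  rw [Fintype.card_congr (lowSetEquiv t E), card_degSet]

lemma finrank_homog (k : Type*) [Field k] (t m : ℕ) :
    Module.finrank k (homogeneousSubmodule (Fin (t+1)) k m) = (m + t).choose t := by
  rw [homogeneousSubmodule_eq_finsupp_supported]
  have e1 := AddMonoidAlgebra.supportedEquivFinsupp (R := k) (S := k)
    {d : Fin (t+1) →₀ ℕ | d.degree = m}
  have e2 := Finsupp.linearEquivFunOnFinite k k
    {d : Fin (t+1) →₀ ℕ // d.degree = m}
  have e3 : ↥(AddMonoidAlgebra.supported k k {d : Fin (t+1) →₀ ℕ | d.degree = m}) ≃ₗ[k]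
      ({d : Fin (t+1) →₀ ℕ // d.degree = m} → k) := e1.trans e2
  have h := e3.finrank_eq
  rw [Module.finrank_pi, card_degSet] at h
  exact h

instance finiteDimensional_homog (k : Type*) [Field k] (t m : ℕ) :
    FiniteDimensional k (homogeneousSubmodule (Fin (t+1)) k m) := by
  rw [homogeneousSubmodule_eq_finsupp_supported]
  have e1 := AddMonoidAlgebra.supportedEquivFinsupp (R := k) (S := k)
    {d : Fin (t+1) →₀ ℕ | d.degree = m}
  have e2 := Finsupp.linearEquivFunOnFinite k k
    {d : Fin (t+1) →₀ ℕ // d.degree = m}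
  exact Module.Finite.equiv (e1.trans e2).symm

/-! ### padding -/

def padTo (m : ℕ) (τ : Fin (t+1) →₀ ℕ) : Fin (t+1) →₀ ℕ := τ + Finsupp.single 0 (m - dg τ)

lemma padTo_apply_ne (m : ℕ) (τ : Fin (t+1) →₀ ℕ) {j : Fin (t+1)} (hj : j ≠ 0) :
    padTo m τ j = τ j := by
  rw [padTo, Finsupp.add_apply, Finsupp.single_apply, if_neg (Ne.symm hj), add_zero]

lemma padTo_apply_zero (m : ℕ) (τ : Fin (t+1) →₀ ℕ) :
    padTo m τ 0 = τ 0 + (m - dg τ) := by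
  rw [padTo, Finsupp.add_apply, Finsupp.single_eq_same]

lemma off_padTo (m : ℕ) (τ : Fin (t+1) →₀ ℕ) : off (padTo m τ) = off τ := by
  rw [padTo, off_add, off_single0, add_zero]

lemma dg_padTo {m : ℕ} {τ : Fin (t+1) →₀ ℕ} (h : dg τ ≤ m) : dg (padTo m τ) = m := by
  rw [padTo, dg_add, dg_single0]
  omega

lemma padTo_erase0 {m : ℕ} {σ : Fin (t+1) →₀ ℕ} (h : dg σ = m) :
    padTo m (σ.erase 0) = σ := by
  ext j
  by_cases hj : j = 0
  · subst hj
    rw [padTo_apply_zero, Finsupp.erase_same, dg_erase0, zero_add]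
    have := dg_eq σ
    omega
  · rw [padTo_apply_ne _ _ hj, Finsupp.erase_ne hj]

lemma padTo_inj {m : ℕ} {τ τ' : Fin (t+1) →₀ ℕ} (h0 : τ 0 = 0) (h0' : τ' 0 = 0)
    (h : padTo m τ = padTo m τ') : τ = τ' := by
  ext j
  by_cases hj : j = 0
  · subst hj; rw [h0, h0']
  · rw [← padTo_apply_ne m τ hj, ← padTo_apply_ne m τ' hj, h]

/-! ### the convolution lemma -/

lemma conv_lemma {t : ℕ} (m' m L : ℕ) (hLm' : L ≤ m')
    (F G : MvPolynomial (Fin (t+1)) k) (hF : F.IsHomogeneous m')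
    (ρ : Fin (t+1) →₀ ℕ) (hρ0 : ρ 0 = 0) (hρL : dg ρ ≤ L) :
    coeff (padTo m ρ) (F * G) =
      ∑ τ : lowSet t L, (if padTo m' τ.1 ≤ padTo m ρ
          then coeff (padTo m ρ - padTo m' τ.1) G else 0) * coeff (padTo m' τ.1) F := by
  classical
  rw [coeff_mul]
  have hIdg : ∀ p : (Fin (t+1) →₀ ℕ) × (Fin (t+1) →₀ ℕ),
      p ∈ Finset.HasAntidiagonal.antidiagonal (padTo m ρ) → coeff p.1 F * coeff p.2 G ≠ 0 →
      dg (p.1.erase 0) ≤ L := by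
    intro p hp hne
    rw [Finset.HasAntidiagonal.mem_antidiagonal] at hp
    have hle : p.1 ≤ padTo m ρ := hp ▸ le_add_right le_rfl
    rw [dg_erase0]
    calc off p.1 ≤ off (padTo m ρ) := off_mono hle
    _ = off ρ := off_padTo m ρ
    _ = dg ρ := by rw [dg_eq ρ, hρ0, zero_add]
    _ ≤ L := hρL
  refine Finset.sum_bij_ne_zero (i := fun p hp hne =>
    (⟨p.1.erase 0, Finsupp.erase_same, hIdg p hp hne⟩ : lowSet t L)) ?_ ?_ ?_ ?_
  · intro p hp hne
    exact Finset.mem_univ _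
  · -- injective
    intro p hp hne q hq hne' heq
    rw [Finset.HasAntidiagonal.mem_antidiagonal] at hp hq
    have hkey : ∀ r : (Fin (t+1) →₀ ℕ) × (Fin (t+1) →₀ ℕ),
        r.1 + r.2 = padTo m ρ → coeff r.1 F * coeff r.2 G ≠ 0 →
        r.1 = padTo m' (r.1.erase 0) := by
      intro r hr hner
      have ha : coeff r.1 F ≠ 0 := fun h => hner (by rw [h, zero_mul])
      have hdg : dg r.1 = m' := by
        rw [dg_eq_degree]
        by_contra hne2
        exact ha (hF.coeff_eq_zero hne2)
      ext j
      by_cases hj : j = 0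
      · subst hj
        rw [padTo_apply_zero, Finsupp.erase_same, dg_erase0, zero_add]
        have := dg_eq r.1
        omega
      · rw [padTo_apply_ne _ _ hj, Finsupp.erase_ne hj]
    have h1 := hkey p hp hne
    have h2 := hkey q hq hne'
    have heq1 : p.1.erase 0 = q.1.erase 0 := congrArg Subtype.val heq
    have hfst : p.1 = q.1 := by rw [h1, h2, heq1]
    have hsnd : p.2 = q.2 := by
      have := hp.trans hq.symm
      rw [hfst] at this
      exact add_left_cancel this
    exact Prod.ext hfst hsnd
  · -- surjective
    intro τ htmem hgne
    have hcond : padTo m' τ.1 ≤ padTo m ρ := by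
      by_contra hc
      rw [if_neg hc, zero_mul] at hgne
      exact hgne rfl
    rw [if_pos hcond] at hgne
    refine ⟨(padTo m' τ.1, padTo m ρ - padTo m' τ.1), ?_, ?_, ?_⟩
    · rw [Finset.HasAntidiagonal.mem_antidiagonal]
      exact add_tsub_cancel_of_le hcond
    · intro h
      apply hgne
      rw [mul_comm]
      exact h
    · apply Subtype.ext
      ext j
      by_cases hj : j = 0
      · subst hj
        rw [Finsupp.erase_same, τ.2.1]
      · rw [Finsupp.erase_ne hj, padTo_apply_ne _ _ hj]
  · -- values
    intro p hp hne
    rw [Finset.HasAntidiagonal.mem_antidiagonal] at hp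
    have ha : coeff p.1 F ≠ 0 := fun h => hne (by rw [h, zero_mul])
    have hdg : dg p.1 = m' := by
      rw [dg_eq_degree]
      by_contra hne2
      exact ha (hF.coeff_eq_zero hne2)
    have hpad : padTo m' (p.1.erase 0) = p.1 := by
      ext j
      by_cases hj : j = 0
      · subst hj
        rw [padTo_apply_zero, Finsupp.erase_same, dg_erase0, zero_add]
        have := dg_eq p.1
        omega
      · rw [padTo_apply_ne _ _ hj, Finsupp.erase_ne hj]
    have hle : p.1 ≤ padTo m ρ := hp ▸ le_add_right le_rfl
    rw [hpad, if_pos hle, ← hp, add_tsub_cancel_left, mul_comm]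

/-! ### triangular injectivity -/

lemma dg_le_of_le {σ τ : Fin (t+1) →₀ ℕ} (h : σ ≤ τ) : dg σ ≤ dg τ :=
  Finset.sum_le_sum fun j _ => Finsupp.le_def.mp h j

lemma eq_of_le_of_dg_eq {σ τ : Fin (t+1) →₀ ℕ} (h : σ ≤ τ) (hd : dg σ = dg τ) : σ = τ := by
  ext j
  by_contra hne
  have hlt : σ j < τ j := lt_of_le_of_ne (Finsupp.le_def.mp h j) hne
  have : dg σ < dg τ :=
    Finset.sum_lt_sum (fun i _ => Finsupp.le_def.mp h i) ⟨j, Finset.mem_univ j, hlt⟩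
  omega

lemma tri_surjective (L : ℕ) (M : lowSet t L → lowSet t L → k)
    (hM : ∀ ρ τ, M ρ τ ≠ 0 → τ.1 ≤ ρ.1) (hdiag : ∀ ρ, M ρ ρ ≠ 0) :
    Function.Surjective (fun v : lowSet t L → k => fun ρ => ∑ τ, M ρ τ * v τ) := by
  classical
  set LM : (lowSet t L → k) →ₗ[k] (lowSet t L → k) :=
    { toFun := fun v => fun ρ => ∑ τ, M ρ τ * v τ
      map_add' := by
        intro v w
        funext ρ
        simp [mul_add, Finset.sum_add_distrib]
      map_smul' := by
        intro c v
        funext ρ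
        simp [Finset.mul_sum, mul_left_comm] } with hLM
  have hinj : Function.Injective LM := by
    rw [injective_iff_map_eq_zero]
    intro v hv
    by_contra hvne
    have hex : ∃ τ, v τ ≠ 0 := by
      by_contra h
      push_neg at h
      exact hvne (funext h)
    obtain ⟨τ₀, hτ₀mem, hτ₀min⟩ := Finset.exists_min_image
      (Finset.univ.filter (fun τ => v τ ≠ 0)) (fun τ => dg τ.1)
      (by
        obtain ⟨τ, hτ⟩ := hex
        exact ⟨τ, Finset.mem_filter.mpr ⟨Finset.mem_univ _, hτ⟩⟩)
    have hvτ₀ : v τ₀ ≠ 0 := (Finset.mem_filter.mp hτ₀mem).2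
    have : LM v τ₀ = 0 := by rw [hv]; rfl
    rw [hLM] at this
    simp only [LinearMap.coe_mk, AddHom.coe_mk] at this
    rw [Finset.sum_eq_single τ₀] at this
    · rcases mul_eq_zero.mp this with h | h
      · exact (hdiag τ₀) h
      · exact hvτ₀ h
    · intro τ _ hne
      by_cases hMz : M τ₀ τ = 0
      · rw [hMz, zero_mul]
      by_cases hvz : v τ = 0
      · rw [hvz, mul_zero]
      exfalso
      have hle : τ.1 ≤ τ₀.1 := hM τ₀ τ hMz
      have hdgle : dg τ.1 ≤ dg τ₀.1 := dg_le_of_le hle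
      have hdgge : dg τ₀.1 ≤ dg τ.1 :=
        hτ₀min τ (Finset.mem_filter.mpr ⟨Finset.mem_univ _, hvz⟩)
      exact hne (Subtype.ext (eq_of_le_of_dg_eq hle (by omega)))
    · intro h
      exact absurd (Finset.mem_univ τ₀) h
  have hsurj : Function.Surjective LM := by
    rwa [← LinearMap.injective_iff_surjective]
  exact hsurj

/-! ### separating linear forms -/

lemma exists_sep {t : ℕ} (d1 d2 : Fin (t+1) → k) (h2 : d2 ≠ 0)
    (hpr : ∀ a : k, d1 ≠ a • d2) :
    ∃ ℓ : MvPolynomial (Fin (t+1)) k, ℓ.IsHomogeneous 1 ∧ eval d2 ℓ = 0 ∧ eval d1 ℓ ≠ 0 := by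
  obtain ⟨s, hs⟩ : ∃ s, d2 s ≠ 0 := by
    by_contra h; push_neg at h; exact h2 (funext h)
  have hv : d1 - (d1 s / d2 s) • d2 ≠ 0 := by
    intro h
    exact hpr (d1 s / d2 s) (by rwa [sub_eq_zero] at h)
  obtain ⟨r, hr⟩ : ∃ r, (d1 - (d1 s / d2 s) • d2) r ≠ 0 := by
    by_contra h; push_neg at h; exact hv (funext h)
  refine ⟨X r - C (d2 r / d2 s) * X s, ?_, ?_, ?_⟩
  · exact (isHomogeneous_X _ _).sub (isHomogeneous_C_mul_X _ _)
  · simp only [map_sub, map_mul, eval_X, eval_C]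
    rw [div_mul_cancel₀ _ hs, sub_self]
  · simp only [map_sub, map_mul, eval_X, eval_C]
    intro h
    apply hr
    simp only [Pi.sub_apply, Pi.smul_apply, smul_eq_mul]
    rw [sub_eq_zero] at h ⊢
    rw [h]
    field_simp

end Stmt9Aux

open Stmt9Aux MvPolynomial in
/-- for distinct points `d₁, …, d_n` of `ℙ^t` with multiplicities
`e₁, …, e_n ≥ 1` and `J = m₁^{e₁} ∩ ⋯ ∩ m_n^{e_n}`, for every `m ≥ e − 1`
(`e = e₁ + ⋯ + e_n`) the degree-`m` piece of `J` has dimension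
`binom(m+t,t) − Σᵢ binom(eᵢ+t−1,t)`. -/
theorem stmt_9 {k : Type*} [Field k] [IsAlgClosed k]
    (t : ℕ) (ht : 1 ≤ t) (n : ℕ) (d : Fin n → Fin (t + 1) → k)
    (hd0 : ∀ i, d i ≠ 0)
    (hprop : ∀ i j, i ≠ j → ∀ a : k, d i ≠ a • d j)
    (e : Fin n → ℕ) (he : ∀ i, 1 ≤ e i) :
    ∀ m : ℕ, (∑ i, e i) ≤ m + 1 →
      Module.finrank k ↥(Submodule.restrictScalars k
          (⨅ i, pointVanishingIdeal (d i) ^ e i) ⊓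
          MvPolynomial.homogeneousSubmodule (Fin (t + 1)) k m)
        + ∑ i, ((e i + t - 1).choose t) = (m + t).choose t := by
  classical
  intro m hm
  choose A B hBA hAB hA0 using fun i => exists_good_matrix (d i) (hd0 i)
  have hchar : ∀ (i : Fin n) (e' : ℕ) (f : MvPolynomial (Fin (t+1)) k),
      f ∈ pointVanishingIdeal (d i) ^ e' ↔
        ∀ σ, coeff σ (linSub (A i) f) ≠ 0 → e' ≤ off σ :=
    fun i e' f => mem_pvi_pow_iff_coeff (A i) (B i) (hBA i) (hAB i) (d i) (hA0 i) e' f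
  set Hm := homogeneousSubmodule (Fin (t+1)) k m with hHm
  set J : Ideal (MvPolynomial (Fin (t+1)) k) := ⨅ i, pointVanishingIdeal (d i) ^ e i with hJ
  set Φ : ↥Hm →ₗ[k] ((i : Fin n) × lowSet t (e i - 1)) → k :=
    { toFun := fun f p => coeff (padTo m p.2.1) (linSub (A p.1) f.1)
      map_add' := by
        intro f g
        funext p
        simp [coeff_add]
      map_smul' := by
        intro c f
        funext p
        simp [coeff_smul] } with hΦ
  have hΦapp : ∀ (f : ↥Hm) (p : (i : Fin n) × lowSet t (e i - 1)),
      Φ f p = coeff (padTo m p.2.1) (linSub (A p.1) f.1) := fun f p => rfl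
  -- kernel characterization
  have hker_iff : ∀ f : ↥Hm, (Φ f = 0 ↔ (f : MvPolynomial (Fin (t+1)) k) ∈ J) := by
    intro f
    constructor
    · intro h0
      rw [hJ]
      rw [Submodule.mem_iInf]
      intro i
      rw [hchar i (e i) f.1]
      intro σ hσ
      by_contra hlt
      push_neg at hlt
      have hfh : (f : MvPolynomial (Fin (t+1)) k).IsHomogeneous m := f.2
      have hgh := linSub_isHomogeneous (A i) hfh
      have hdg : dg σ = m := by
        rw [dg_eq_degree]
        by_contra hne
        exact hσ (hgh.coeff_eq_zero hne)
      have hτ : dg (σ.erase 0) ≤ e i - 1 := by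
        rw [dg_erase0]
        have h1 := he i
        have h2 := dg_eq σ
        omega
      have hp := congrFun h0 ⟨i, ⟨σ.erase 0, Finsupp.erase_same, hτ⟩⟩
      rw [hΦapp, Pi.zero_apply] at hp
      dsimp only at hp
      rw [padTo_erase0 hdg] at hp
      exact hσ hp
    · intro hJmem
      funext p
      obtain ⟨i, τ⟩ := p
      rw [hΦapp, Pi.zero_apply]
      dsimp only
      have hmem : (f : MvPolynomial (Fin (t+1)) k) ∈ pointVanishingIdeal (d i) ^ e i := by
        rw [hJ, Submodule.mem_iInf] at hJmem
        exact hJmem i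
      rw [hchar] at hmem
      by_contra hne
      have hoffb := hmem _ hne
      rw [off_padTo] at hoffb
      have hoff : off τ.1 = dg τ.1 := by rw [dg_eq τ.1, τ.2.1, zero_add]
      have h1 := τ.2.2
      have h2 := he i
      omega
  -- data for surjectivity
  set Ei : Fin n → ℕ := fun i => ∑ j ∈ Finset.univ.erase i, e j with hEidef
  have hEi : ∀ i, e i + Ei i = ∑ j, e j := fun i =>
    Finset.add_sum_erase _ _ (Finset.mem_univ i)
  have hsep : ∀ i j : Fin n, ∃ ℓ : MvPolynomial (Fin (t+1)) k,
      j ≠ i → (ℓ.IsHomogeneous 1 ∧ eval (d j) ℓ = 0 ∧ eval (d i) ℓ ≠ 0) := by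
    intro i j
    by_cases hji : j = i
    · exact ⟨1, fun h => absurd hji h⟩
    · obtain ⟨ℓ, h1, h2, h3⟩ := exists_sep (d i) (d j) (hd0 j)
        (hprop i j (fun h => hji h.symm))
      exact ⟨ℓ, fun _ => ⟨h1, h2, h3⟩⟩
  choose ℓ hℓ using hsep
  set g : Fin n → MvPolynomial (Fin (t+1)) k :=
    fun i => ∏ j ∈ Finset.univ.erase i, (ℓ i j) ^ (e j) with hg
  have hghom : ∀ i, (g i).IsHomogeneous (Ei i) := by
    intro i
    rw [hg, hEidef]
    refine IsHomogeneous.prod _ _ _ fun j hj => ?_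
    have h1 := ((hℓ i j (Finset.mem_erase.mp hj).1).1).pow (e j)
    rwa [one_mul] at h1
  have hgval : ∀ i, eval (d i) (g i) ≠ 0 := by
    intro i
    rw [hg, map_prod]
    refine Finset.prod_ne_zero_iff.mpr fun j hj => ?_
    rw [map_pow]
    exact pow_ne_zero _ (hℓ i j (Finset.mem_erase.mp hj).1).2.2
  have hgmem : ∀ i j, j ≠ i → g i ∈ pointVanishingIdeal (d j) ^ e j := by
    intro i j hji
    have hℓmem : ℓ i j ∈ pointVanishingIdeal (d j) :=
      Ideal.subset_span ⟨(hℓ i j hji).1, (hℓ i j hji).2.1⟩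
    have hgi : g i = ∏ j' ∈ Finset.univ.erase i, (ℓ i j') ^ (e j') := rfl
    rw [hgi, ← Finset.mul_prod_erase _ _ (Finset.mem_erase.mpr ⟨hji, Finset.mem_univ j⟩)]
    exact Ideal.mul_mem_right _ _ (Ideal.pow_mem_pow hℓmem (e j))
  have hnum : ∀ i, Ei i ≤ m ∧ e i - 1 ≤ m - Ei i ∧ (m - Ei i) + Ei i = m := by
    intro i
    have h1 := hEi i
    have h2 := he i
    omega
  -- pointwise surjectivity
  have hpoint : ∀ (i : Fin n) (y : lowSet t (e i - 1) → k),
      ∃ h : MvPolynomial (Fin (t+1)) k, h.IsHomogeneous (m - Ei i) ∧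
        (∀ ρ : lowSet t (e i - 1),
          coeff (padTo m ρ.1) (linSub (A i) (h * g i)) = y ρ) := by
    intro i y
    have hLm' : e i - 1 ≤ m - Ei i := (hnum i).2.1
    set G := linSub (A i) (g i) with hG
    have hGhom : G.IsHomogeneous (Ei i) := linSub_isHomogeneous _ (hghom i)
    have hc : coeff (Finsupp.single 0 (Ei i)) G ≠ 0 := by
      rw [← eval_e0v_eq_coeff hGhom, hG, eval_linSub, hA0]
      exact hgval i
    set M : lowSet t (e i - 1) → lowSet t (e i - 1) → k := fun ρ τ =>
      if padTo (m - Ei i) τ.1 ≤ padTo m ρ.1 then coeff (padTo m ρ.1 - padTo (m - Ei i) τ.1) G else 0 with hM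
    have hMtri : ∀ ρ τ, M ρ τ ≠ 0 → τ.1 ≤ ρ.1 := by
      intro ρ τ hne
      rw [hM] at hne
      dsimp only at hne
      split_ifs at hne with hle
      · rw [Finsupp.le_def]
        intro j
        by_cases hj : j = 0
        · subst hj
          rw [τ.2.1]
          exact Nat.zero_le _
        · have h1 := Finsupp.le_def.mp hle j
          rwa [padTo_apply_ne _ _ hj, padTo_apply_ne _ _ hj] at h1
      · exact absurd rfl hne
    have hMdiag : ∀ ρ, M ρ ρ ≠ 0 := by
      intro ρ
      have hd1 : dg ρ.1 ≤ (e i - 1) := ρ.2.2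
      have hle : padTo (m - Ei i) ρ.1 ≤ padTo m ρ.1 := by
        rw [Finsupp.le_def]
        intro j
        by_cases hj : j = 0
        · subst hj
          rw [padTo_apply_zero, padTo_apply_zero]
          have h2 := (hnum i).1
          omega
        · rw [padTo_apply_ne _ _ hj, padTo_apply_ne _ _ hj]
      have hsub : padTo m ρ.1 - padTo (m - Ei i) ρ.1 = Finsupp.single 0 (Ei i) := by
        ext j
        rw [Finsupp.tsub_apply]
        by_cases hj : j = 0
        · subst hj
          rw [padTo_apply_zero, padTo_apply_zero, Finsupp.single_eq_same, ρ.2.1]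
          have h3 := (hnum i).2.2
          omega
        · rw [padTo_apply_ne _ _ hj, padTo_apply_ne _ _ hj, Finsupp.single_apply,
            if_neg (Ne.symm hj)]
          omega
      rw [hM]
      dsimp only
      rw [if_pos hle, hsub]
      exact hc
    obtain ⟨v, hv⟩ := tri_surjective (e i - 1) M hMtri hMdiag y
    set F0 : MvPolynomial (Fin (t+1)) k :=
      ∑ τ : lowSet t (e i - 1), monomial (padTo (m - Ei i) τ.1) (v τ) with hF0
    have hF0hom : F0.IsHomogeneous (m - Ei i) := by
      rw [hF0]
      refine IsHomogeneous.sum _ _ _ fun τ _ => ?_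
      exact isHomogeneous_monomial _ (by rw [← dg_eq_degree, dg_padTo (le_trans τ.2.2 hLm')])
    have hF0coeff : ∀ τ : lowSet t (e i - 1), coeff (padTo (m - Ei i) τ.1) F0 = v τ := by
      intro τ
      rw [hF0, coeff_sum, Finset.sum_eq_single τ]
      · rw [coeff_monomial, if_pos rfl]
      · intro τ' _ hne
        rw [coeff_monomial, if_neg]
        intro heq
        exact hne (Subtype.ext (padTo_inj τ'.2.1 τ.2.1 heq))
      · intro hni
        exact absurd (Finset.mem_univ τ) hni
    refine ⟨linSub (B i) F0, linSub_isHomogeneous _ hF0hom, ?_⟩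
    intro ρ
    have hψ : linSub (A i) (linSub (B i) F0 * g i) = F0 * G := by
      rw [map_mul, linSub_linSub, hBA i, linSub_one, hG]
      rfl
    rw [hψ, conv_lemma (m - Ei i) m (e i - 1) hLm' F0 G hF0hom ρ.1 ρ.2.1 ρ.2.2]
    have hvρ := congrFun hv ρ
    dsimp only at hvρ
    rw [← hvρ]
    refine Finset.sum_congr rfl fun τ _ => ?_
    rw [hF0coeff τ]
  -- global surjectivity
  have hsurjΦ : Function.Surjective Φ := by
    intro y
    choose h hhom hcoeff using fun i => hpoint i (fun τ => y ⟨i, τ⟩)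
    have hfhom : (∑ i, h i * g i : MvPolynomial (Fin (t+1)) k).IsHomogeneous m := by
      refine IsHomogeneous.sum _ _ _ fun i _ => ?_
      have h1 := (hhom i).mul (hghom i)
      rwa [(hnum i).2.2] at h1
    refine ⟨⟨∑ i, h i * g i, hfhom⟩, ?_⟩
    funext p
    obtain ⟨i, τ⟩ := p
    rw [hΦapp]
    dsimp only
    rw [map_sum, coeff_sum, Finset.sum_eq_single i]
    · exact hcoeff i τ
    · intro j _ hne
      have hmemji : h j * g j ∈ pointVanishingIdeal (d i) ^ e i :=
        Ideal.mul_mem_left _ _ (hgmem j i hne.symm)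
      rw [hchar] at hmemji
      by_contra hne2
      have hoffb := hmemji _ hne2
      rw [off_padTo] at hoffb
      have hoff : off τ.1 = dg τ.1 := by rw [dg_eq τ.1, τ.2.1, zero_add]
      have h1 := τ.2.2
      have h2 := he i
      omega
    · intro hni
      exact absurd (Finset.mem_univ i) hni
  have hrange : LinearMap.range Φ = ⊤ := LinearMap.range_eq_top.mpr hsurjΦ
  have hWle : Submodule.restrictScalars k J ⊓ Hm ≤ Hm := inf_le_right
  have hkerW : LinearMap.ker Φ =
      Submodule.comap Hm.subtype (Submodule.restrictScalars k J ⊓ Hm) := by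
    ext f
    rw [LinearMap.mem_ker, Submodule.mem_comap, hker_iff f, Submodule.mem_inf]
    constructor
    · intro hJm
      exact ⟨(Submodule.restrictScalars_mem _ _ _).mpr hJm, f.2⟩
    · intro hW
      exact (Submodule.restrictScalars_mem _ _ _).mp hW.1
  have hrank := LinearMap.finrank_range_add_finrank_ker Φ
  rw [hrange, hkerW] at hrank
  have h1 : Module.finrank k
      (⊤ : Submodule k (((i : Fin n) × lowSet t (e i - 1)) → k)) =
      ∑ i, (e i + t - 1).choose t := by
    rw [finrank_top, Module.finrank_pi, Fintype.card_sigma]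
    refine Finset.sum_congr rfl fun i _ => ?_
    rw [card_lowSet, show (e i - 1) + t = e i + t - 1 from by have := he i; omega]
  have h2 : Module.finrank k
      ↥(Submodule.comap Hm.subtype (Submodule.restrictScalars k J ⊓ Hm)) =
      Module.finrank k ↥(Submodule.restrictScalars k J ⊓ Hm) :=
    (Submodule.comapSubtypeEquivOfLe hWle).finrank_eq
  rw [h1, h2] at hrank
  have h3 := finrank_homog k t m
  rw [← hHm] at h3
  omega
end
end

section
/- Let d_1, …, d_{n+1} ∈ k^{t+1} be pairwise non-proportional nonzero vectors with vanishing ideals m_1, …, m_{n+1} ⊆ U = k[x_0,…,x_t], and assume that the linear span of d_1, …, d_n in k^{t+1} has dimension at least 3 (i.e. the corresponding points of P^t do not all lie on a line). Then (m_1 ∩ ⋯ ∩ m_n)_{n−1} · (m_{n+1})_1 = (m_1 ∩ ⋯ ∩ m_{n+1})_n: the k-linear span of all products g·ℓ, with g a homogeneous polynomial of degree n−1 vanishing at d_1,…,d_n and ℓ a linear form vanishing at d_{n+1}, equals the space of homogeneous polynomials of degree n vanishing at all of d_1, …, d_{n+1}. -/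
set_option synthInstance.maxHeartbeats 1000000
set_option maxHeartbeats 4000000

noncomputable section

open MvPolynomial

section Aux

variable {k : Type*} [Field k] {t : ℕ}

lemma aux_aeval_eq_eval (x : Fin t → k) (p : MvPolynomial (Fin t) k) :
    MvPolynomial.aeval (R := k) x p = eval x p := by
  rw [aeval_def, eval]; rfl


/-- From a vector not in a subspace, produce a homogeneous linear polynomial vanishing
on the subspace and taking value 1 at the vector. -/
lemma exists_linear_form (p : Submodule k (Fin t → k)) (a : Fin t → k) (ha : a ∉ p) :
    ∃ ℓ : MvPolynomial (Fin t) k, ℓ.IsHomogeneous 1 ∧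
      (∀ b ∈ p, eval b ℓ = 0) ∧ eval a ℓ = 1 := by
  obtain ⟨g, hga, hgp⟩ := p.exists_dual_map_eq_bot_of_notMem ha inferInstance
  have hgp' : ∀ y ∈ p, g y = 0 := fun y hy => by
    have : g y ∈ p.map g := Submodule.mem_map_of_mem hy
    simpa [hgp] using this
  set c : Fin t → k := fun j => g (fun j' => if j = j' then 1 else 0) with hc
  have key : ∀ b : Fin t → k, eval b (∑ j, C (c j) * X j) = g b := by
    intro b
    rw [map_sum]
    conv_rhs => rw [pi_eq_sum_univ b, map_sum]
    congr 1; ext j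
    rw [map_smul, smul_eq_mul]
    simp [c, mul_comm]
  refine ⟨(g a)⁻¹ • ∑ j, C (c j) * X j, ?_, ?_, ?_⟩
  · rw [← mem_homogeneousSubmodule]
    exact Submodule.smul_mem _ _ (Submodule.sum_mem _ fun j _ =>
      (isHomogeneous_C_mul_X (c j) j))
  · intro b hb; rw [smul_eval, key, hgp' b hb, mul_zero]
  · rw [smul_eval, key, inv_mul_cancel₀ hga]


lemma mem_span_products (dd : Fin t → k) (ℓ0 : MvPolynomial (Fin t) k)
    (hl0h : ℓ0.IsHomogeneous 1) (hl0 : eval dd ℓ0 = 1) (n : ℕ) :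
    ∀ h : MvPolynomial (Fin t) k, h.IsHomogeneous n →
      h - (eval dd h) • ℓ0 ^ n ∈ Submodule.span k
        {p : MvPolynomial (Fin t) k | ∃ v ℓ, v.IsHomogeneous (n - 1) ∧ ℓ.IsHomogeneous 1 ∧
          eval dd ℓ = 0 ∧ p = v * ℓ} := by
  induction n with
  | zero =>
    intro h hh
    have hC : h = C (coeff 0 h) := by
      ext m
      rcases eq_or_ne m 0 with rfl | hm
      · simp
      · rw [hh.coeff_eq_zero (by rwa [Ne, Finsupp.degree_eq_zero_iff]), coeff_C,
          if_neg (Ne.symm hm)]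
    have hz : h - (eval dd) h • ℓ0 ^ 0 = 0 := by
      rw [pow_zero, hC, eval_C, smul_eq_C_mul, mul_one, sub_self]
    rw [hz]
    exact Submodule.zero_mem _
  | succ n ih =>
    intro h hh
    have mono : ∀ α : Fin t →₀ ℕ, α.degree = n + 1 →
        (monomial α (1:k)) - (eval dd (monomial α 1)) • ℓ0 ^ (n+1) ∈ Submodule.span k
          {p : MvPolynomial (Fin t) k | ∃ v ℓ, v.IsHomogeneous (n + 1 - 1) ∧ ℓ.IsHomogeneous 1 ∧
            eval dd ℓ = 0 ∧ p = v * ℓ} := by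
      intro α hα
      have hα0 : α ≠ 0 := by
        intro h0; rw [h0, map_zero] at hα; omega
      obtain ⟨j, hj⟩ : ∃ j, α j ≠ 0 := by
        by_contra hc; push_neg at hc; exact hα0 (Finsupp.ext fun i => hc i)
      set β : Fin t →₀ ℕ := α - Finsupp.single j 1 with hβ
      have hβj : β + Finsupp.single j 1 = α := by
        ext i
        simp only [Finsupp.add_apply, Finsupp.tsub_apply, hβ, Finsupp.single_apply]
        by_cases h : j = i
        · subst h; simp; omega
        · simp [h]
      have hβdeg : β.degree = n := by
        have hadd : (β + Finsupp.single j 1).degree = β.degree + (Finsupp.single j 1).degree := by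
          rw [Finsupp.degree_eq_weight_one, map_add]
        have h1 : (Finsupp.single j (1:ℕ)).degree = 1 := by
          rw [Finsupp.degree_single]
        rw [hβj, hα, h1] at hadd
        omega
      have hmono : monomial α (1:k) = monomial β 1 * X j := by
        rw [← hβj, monomial_add_single, pow_one]
      have hEα : eval dd (monomial α (1:k)) = eval dd (monomial β 1) * dd j := by
        rw [hmono, map_mul, eval_X]
      -- the two pieces
      have key : monomial α (1:k) - (eval dd (monomial α 1)) • ℓ0 ^ (n+1)
          = monomial β 1 * (X j - C (dd j) * ℓ0)
            + (dd j) • (ℓ0 * (monomial β 1 - (eval dd (monomial β 1)) • ℓ0 ^ n)) := by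
        rw [hEα, hmono]
        simp only [smul_eq_C_mul, map_mul, pow_succ]
        ring
      rw [key]
      refine Submodule.add_mem _ (Submodule.subset_span ?_) (Submodule.smul_mem _ _ ?_)
      · refine ⟨monomial β 1, X j - C (dd j) * ℓ0, ?_, ?_, ?_, rfl⟩
        · simpa using isHomogeneous_monomial (1:k) hβdeg
        · exact (isHomogeneous_X k j).sub (hl0h.C_mul (dd j))
        · rw [map_sub, eval_X, map_mul, eval_C, hl0, mul_one, sub_self]
      · -- ℓ0 * (stuff in span S n) ∈ span S (n+1)
        have hw : (monomial β 1 : MvPolynomial (Fin t) k) - (eval dd (monomial β 1)) • ℓ0 ^ n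
            ∈ Submodule.span k {p : MvPolynomial (Fin t) k | ∃ v ℓ, v.IsHomogeneous (n - 1) ∧
              ℓ.IsHomogeneous 1 ∧ eval dd ℓ = 0 ∧ p = v * ℓ} :=
          ih _ (isHomogeneous_monomial _ hβdeg)
        rcases Nat.eq_zero_or_pos n with rfl | hn
        · have hβ0 : β = 0 := by rwa [Finsupp.degree_eq_zero_iff] at hβdeg
          have : (monomial β 1 : MvPolynomial (Fin t) k) - (eval dd (monomial β 1)) • ℓ0 ^ 0 = 0 := by
            rw [hβ0, monomial_zero', C_1, map_one, pow_zero, one_smul, sub_self]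
          rw [this, mul_zero]
          exact Submodule.zero_mem _
        · have hmap := Submodule.mem_map_of_mem (f := LinearMap.mulLeft k ℓ0) hw
          rw [Submodule.map_span] at hmap
          refine Submodule.span_mono ?_ hmap
          rintro _ ⟨_, ⟨v, ℓ, hv, hℓ, hℓ0, rfl⟩, rfl⟩
          refine ⟨ℓ0 * v, ℓ, ?_, hℓ, hℓ0, by simp [LinearMap.mulLeft_apply, mul_assoc]⟩
          have : 1 + (n - 1) = n + 1 - 1 := by omega
          exact this ▸ hl0h.mul hv
    -- now decompose h into monomials
    have hsum : h - eval dd h • ℓ0 ^ (n+1)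
        = ∑ α ∈ h.support, (coeff α h) •
            ((monomial α 1) - (eval dd (monomial α 1)) • ℓ0 ^ (n+1)) := by
      simp only [smul_sub, Finset.sum_sub_distrib, smul_smul]
      congr 1
      · conv_lhs => rw [as_sum h]
        refine Finset.sum_congr rfl fun α _ => ?_
        rw [smul_monomial, smul_eq_mul, mul_one]
      · rw [← Finset.sum_smul]
        congr 1
        conv_lhs => rw [as_sum h]
        rw [map_sum]
        refine Finset.sum_congr rfl fun α _ => ?_
        rw [eval_monomial, eval_monomial, one_mul]
    rw [hsum]
    refine Submodule.sum_mem _ fun α hα => Submodule.smul_mem _ _ (mono α ?_)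
    have := hh (mem_support_iff.mp hα)
    rw [Finsupp.degree_eq_weight_one]
    exact this


lemma rank_le_two_aux {V : Type*} [AddCommGroup V] [Module k V] (a b : V) :
    Module.rank k (Submodule.span k {a, b}) ≤ 2 := by
  classical
  have hset : ({a, b} : Set V) = (({a, b} : Finset V) : Set V) := by simp
  rw [hset]
  refine (rank_span_finset_le _).trans ?_
  have := Finset.card_insert_le a ({b} : Finset V)
  have h2 : ({a, b} : Finset V).card ≤ 2 := by
    simpa using this
  exact_mod_cast h2

lemma exists_pair_not_span {n : ℕ} (q : Fin n → Fin t → k) 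
    (hqprop : ∀ i j, i ≠ j → ∀ a : k, q i ≠ a • q j)
    (hline : 3 ≤ Module.rank k (Submodule.span k (Set.range q))) (i : Fin n) :
    ∃ j j', j ≠ i ∧ j' ≠ i ∧ j ≠ j' ∧ q i ∉ Submodule.span k {q j, q j'} := by
  have hn3 : 3 ≤ n := by
    by_contra hn
    classical
    have hset : Set.range q = ((Finset.univ.image q : Finset (Fin t → k)) : Set (Fin t → k)) := by
      simp
    rw [hset] at hline
    have h1 := hline.trans (rank_span_finset_le (Finset.univ.image q))
    have h2 : (Finset.univ.image q).card ≤ n := by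
      refine (Finset.card_image_le).trans (by simp)
    have h3 : (3:ℕ) ≤ (Finset.univ.image q).card := by exact_mod_cast h1
    omega
  by_contra hcon
  push_neg at hcon
  -- pick two indices distinct from i
  have h1 : (Finset.univ.erase i).Nonempty := by
    rw [← Finset.card_pos, Finset.card_erase_of_mem (Finset.mem_univ _), Finset.card_univ,
      Fintype.card_fin]
    omega
  obtain ⟨j1, hj1⟩ := h1
  have h2 : ((Finset.univ.erase i).erase j1).Nonempty := by
    rw [← Finset.card_pos, Finset.card_erase_of_mem hj1,
      Finset.card_erase_of_mem (Finset.mem_univ _), Finset.card_univ, Fintype.card_fin]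
    omega
  obtain ⟨j2, hj2⟩ := h2
  have hj1i : j1 ≠ i := Finset.ne_of_mem_erase hj1
  have hj2j1 : j2 ≠ j1 := Finset.ne_of_mem_erase hj2
  have hj2i : j2 ≠ i := Finset.ne_of_mem_erase (Finset.mem_of_mem_erase hj2)
  set P : Submodule k (Fin t → k) := Submodule.span k {q j1, q j2} with hP
  have hqiP : q i ∈ P := hcon j1 j2 hj1i hj2i (Ne.symm hj2j1)
  have hall : ∀ c, q c ∈ P := by
    intro c
    rcases eq_or_ne c j1 with rfl | hc1
    · exact Submodule.subset_span (by simp)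
    rcases eq_or_ne c j2 with rfl | hc2
    · exact Submodule.subset_span (by simp)
    rcases eq_or_ne c i with rfl | hci
    · exact hqiP
    · have hmem : q i ∈ Submodule.span k {q j1, q c} :=
        hcon j1 c hj1i hci (fun h => hc1 h.symm)
      rw [Submodule.mem_span_pair] at hmem
      obtain ⟨a, b, hab⟩ := hmem
      rcases eq_or_ne b 0 with rfl | hb
      · exact absurd (by rw [← hab, zero_smul, add_zero]) (hqprop i j1 (Ne.symm hj1i) a)
      · have hqc : q c = b⁻¹ • (q i - a • q j1) := by
          rw [← hab, add_sub_cancel_left, smul_smul, inv_mul_cancel₀ hb, one_smul]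
        rw [hqc]
        exact Submodule.smul_mem _ _ (Submodule.sub_mem _ hqiP
          (Submodule.smul_mem _ _ (Submodule.subset_span (by simp))))
  have hle : Submodule.span k (Set.range q) ≤ P :=
    Submodule.span_le.mpr (by rintro _ ⟨c, rfl⟩; exact hall c)
  have := hline.trans ((Submodule.rank_mono hle).trans (rank_le_two_aux (q j1) (q j2)))
  norm_num at this

end Aux

/-- for distinct points `d₁, …, d_{n+1}` of `ℙ^t` with `d₁, …, d_n` not all
on a line, `(m₁ ∩ ⋯ ∩ m_n)_{n−1}·(m_{n+1})₁ = (m₁ ∩ ⋯ ∩ m_{n+1})_n`. -/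
theorem stmt_10 {k : Type*} [Field k] [IsAlgClosed k]
    (t : ℕ) (ht : 2 ≤ t) (n : ℕ) (d : Fin (n + 1) → Fin (t + 1) → k)
    (hd0 : ∀ i, d i ≠ 0)
    (hprop : ∀ i j, i ≠ j → ∀ a : k, d i ≠ a • d j)
    (hline : 3 ≤ Module.rank k
      ↥(Submodule.span k (Set.range fun i : Fin n => d i.castSucc))) :
    Submodule.span k {f : MvPolynomial (Fin (t + 1)) k |
        ∃ g ℓ : MvPolynomial (Fin (t + 1)) k,
          g.IsHomogeneous (n - 1) ∧ (∀ i : Fin n, MvPolynomial.eval (d i.castSucc) g = 0) ∧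
          ℓ.IsHomogeneous 1 ∧ MvPolynomial.eval (d (Fin.last n)) ℓ = 0 ∧ f = g * ℓ}
      = MvPolynomial.homogeneousSubmodule (Fin (t + 1)) k n ⊓
          ⨅ i : Fin (n + 1), LinearMap.ker (MvPolynomial.aeval (R := k) (d i)).toLinearMap := by
  classical
  set q : Fin n → Fin (t + 1) → k := fun i => d i.castSucc with hqdef
  set dl : Fin (t + 1) → k := d (Fin.last n) with hdldef
  have hcs_ne : ∀ i : Fin n, i.castSucc ≠ Fin.last n := fun i => (Fin.castSucc_lt_last i).ne
  have hqprop : ∀ i j : Fin n, i ≠ j → ∀ a : k, q i ≠ a • q j := by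
    intro i j hij a
    exact hprop _ _ (fun h => hij (Fin.castSucc_injective _ h)) a
  have hn3 : 3 ≤ n := by
    by_contra hn
    have hset : Set.range q = ((Finset.univ.image q : Finset (Fin (t+1) → k)) :
        Set (Fin (t+1) → k)) := by simp
    rw [hset] at hline
    have h1 := hline.trans (rank_span_finset_le (Finset.univ.image q))
    have h2 : (Finset.univ.image q).card ≤ n :=
      (Finset.card_image_le).trans (by simp)
    have h3 : (3:ℕ) ≤ (Finset.univ.image q).card := by exact_mod_cast h1
    omega
  -- linear separators between pairs of points
  have hlam : ∀ i j : Fin (n+1), i ≠ j → ∃ ℓ : MvPolynomial (Fin (t+1)) k,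
      ℓ.IsHomogeneous 1 ∧ eval (d j) ℓ = 0 ∧ eval (d i) ℓ = 1 := by
    intro i j hij
    have hni : d i ∉ Submodule.span k {d j} := by
      intro hmem
      obtain ⟨a, ha⟩ := Submodule.mem_span_singleton.mp hmem
      exact hprop i j hij a ha.symm
    obtain ⟨ℓ, h1, h2, h3⟩ := exists_linear_form _ _ hni
    exact ⟨ℓ, h1, h2 _ (Submodule.subset_span rfl), h3⟩
  have hlam' : ∀ i j : Fin (n+1), ∃ ℓ : MvPolynomial (Fin (t+1)) k,
      ℓ.IsHomogeneous 1 ∧ (i ≠ j → eval (d j) ℓ = 0) ∧ (i ≠ j → eval (d i) ℓ = 1) := by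
    intro i j
    rcases eq_or_ne i j with rfl | hij
    · exact ⟨X 0, isHomogeneous_X k 0, fun h => absurd rfl h, fun h => absurd rfl h⟩
    · obtain ⟨ℓ, h1, h2, h3⟩ := hlam i j hij
      exact ⟨ℓ, h1, fun _ => h2, fun _ => h3⟩
  choose lam lamh lam0 lam1 using hlam'
  -- separators of degree n-1
  have hP : ∀ i : Fin n, ∃ P : MvPolynomial (Fin (t+1)) k, P.IsHomogeneous (n-1) ∧
      ∀ j : Fin n, eval (q j) P = if j = i then 1 else 0 := by
    intro i
    refine ⟨∏ j ∈ Finset.univ.erase i, lam i.castSucc j.castSucc, ?_, ?_⟩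
    · have hcard : ∑ j ∈ Finset.univ.erase i, 1 = n - 1 := by
        rw [Finset.sum_const, smul_eq_mul, mul_one, Finset.card_erase_of_mem (Finset.mem_univ _),
          Finset.card_univ, Fintype.card_fin]
      exact hcard ▸ MvPolynomial.IsHomogeneous.prod _ _ _
        (fun j _ => lamh i.castSucc j.castSucc)
    · intro j
      rcases eq_or_ne j i with rfl | hji
      · rw [if_pos rfl, map_prod]
        refine Finset.prod_eq_one fun c hc => ?_
        exact lam1 _ _ fun h => (Finset.ne_of_mem_erase hc)
          (Fin.castSucc_injective _ h).symm
      · rw [if_neg hji, map_prod]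
        refine Finset.prod_eq_zero (Finset.mem_erase.mpr ⟨hji, Finset.mem_univ _⟩) ?_
        exact lam0 i.castSucc j.castSucc fun h => hji (Fin.castSucc_injective _ h).symm
  choose P hPhom hPval using hP
  -- separators of degree n-2
  have hR : ∀ i : Fin n, ∃ R : MvPolynomial (Fin (t+1)) k, R.IsHomogeneous (n-2) ∧
      ∀ j : Fin n, eval (q j) R = if j = i then 1 else 0 := by
    intro i
    obtain ⟨j1, j2, hj1i, hj2i, hj12, hnspan⟩ := exists_pair_not_span q hqprop hline i
    obtain ⟨l0, hl0h, hl0z, hl0o⟩ := exists_linear_form _ _ hnspan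
    have hmem1 : j1 ∈ Finset.univ.erase i := Finset.mem_erase.mpr ⟨hj1i, Finset.mem_univ _⟩
    have hmem2 : j2 ∈ (Finset.univ.erase i).erase j1 :=
      Finset.mem_erase.mpr ⟨Ne.symm hj12, Finset.mem_erase.mpr ⟨hj2i, Finset.mem_univ _⟩⟩
    set s : Finset (Fin n) := ((Finset.univ.erase i).erase j1).erase j2 with hsdef
    refine ⟨l0 * ∏ j ∈ s, lam i.castSucc j.castSucc, ?_, ?_⟩
    · have hcard : s.card = n - 3 := by
        rw [hsdef, Finset.card_erase_of_mem hmem2, Finset.card_erase_of_mem hmem1,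
          Finset.card_erase_of_mem (Finset.mem_univ _), Finset.card_univ, Fintype.card_fin]
        omega
      have hhom := hl0h.mul (MvPolynomial.IsHomogeneous.prod s _ (fun _ => 1)
        (fun j _ => lamh i.castSucc j.castSucc))
      have : 1 + (∑ _j ∈ s, 1) = n - 2 := by
        rw [Finset.sum_const, smul_eq_mul, mul_one, hcard]; omega
      rwa [this] at hhom
    · intro j
      have hsne : ∀ c ∈ s, c ≠ i := fun c hc =>
        Finset.ne_of_mem_erase (Finset.mem_of_mem_erase (Finset.mem_of_mem_erase hc))
      rcases eq_or_ne j i with rfl | hji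
      · rw [if_pos rfl, map_mul, hl0o, map_prod, one_mul]
        refine Finset.prod_eq_one fun c hc => ?_
        exact lam1 _ _ fun h => (hsne c hc) (Fin.castSucc_injective _ h).symm
      · rw [if_neg hji, map_mul]
        rcases eq_or_ne j j1 with rfl | hjj1
        · rw [hl0z _ (Submodule.subset_span (by simp)), zero_mul]
        rcases eq_or_ne j j2 with rfl | hjj2
        · rw [hl0z _ (Submodule.subset_span (by simp)), zero_mul]
        · have hjs : j ∈ s := by
            rw [hsdef]
            exact Finset.mem_erase.mpr ⟨hjj2, Finset.mem_erase.mpr ⟨hjj1,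
              Finset.mem_erase.mpr ⟨hji, Finset.mem_univ _⟩⟩⟩
          rw [map_prod, Finset.prod_eq_zero hjs
            (lam0 i.castSucc j.castSucc fun h => hji (Fin.castSucc_injective _ h).symm),
            mul_zero]
  choose R hRhom hRval using hR
  have haev : ∀ (x : Fin (t+1) → k) (p : MvPolynomial (Fin (t+1)) k),
      MvPolynomial.aeval (R := k) x p = eval x p := fun x p => aux_aeval_eq_eval x p
  apply le_antisymm
  · rw [Submodule.span_le]
    rintro f ⟨g, ℓ, hg, hgv, hℓ, hℓv, rfl⟩
    rw [SetLike.mem_coe, Submodule.mem_inf]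
    refine ⟨?_, ?_⟩
    · rw [mem_homogeneousSubmodule]
      have h := hg.mul hℓ
      rwa [show n - 1 + 1 = n by omega] at h
    · rw [Submodule.mem_iInf]
      intro i
      rw [LinearMap.mem_ker, AlgHom.toLinearMap_apply, haev, map_mul]
      induction i using Fin.lastCases with
      | last => rw [hℓv, mul_zero]
      | cast j => rw [hgv j, zero_mul]
  · intro f hf
    rw [Submodule.mem_inf, mem_homogeneousSubmodule, Submodule.mem_iInf] at hf
    obtain ⟨hfh, hfv0⟩ := hf
    have hfv : ∀ i, eval (d i) f = 0 := by
      intro i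
      have h := hfv0 i
      rwa [LinearMap.mem_ker, AlgHom.toLinearMap_apply, haev] at h
    by_contra hfW
    obtain ⟨φ, hφf, hφW⟩ := Submodule.exists_dual_map_eq_bot_of_notMem hfW inferInstance
    have hφ0 : ∀ x ∈ Submodule.span k {f : MvPolynomial (Fin (t + 1)) k |
        ∃ g ℓ : MvPolynomial (Fin (t + 1)) k,
          g.IsHomogeneous (n - 1) ∧ (∀ i : Fin n, eval (d i.castSucc) g = 0) ∧
          ℓ.IsHomogeneous 1 ∧ eval dl ℓ = 0 ∧ f = g * ℓ}, φ x = 0 := by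
      intro x hx
      have hmem : φ x ∈ Submodule.map φ _ := Submodule.mem_map_of_mem hx
      rw [hφW] at hmem
      exact (Submodule.mem_bot k).mp hmem
    have hφgen : ∀ g ℓ : MvPolynomial (Fin (t+1)) k, g.IsHomogeneous (n-1) →
        (∀ i : Fin n, eval (q i) g = 0) → ℓ.IsHomogeneous 1 → eval dl ℓ = 0 →
        φ (g * ℓ) = 0 := by
      intro g ℓ hh1 hh2 hh3 hh4
      exact hφ0 _ (Submodule.subset_span ⟨g, ℓ, hh1, hh2, hh3, hh4, rfl⟩)
    have h1 : ∀ ℓ : MvPolynomial (Fin (t+1)) k, ℓ.IsHomogeneous 1 → eval dl ℓ = 0 →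
        ∀ v : MvPolynomial (Fin (t+1)) k, v.IsHomogeneous (n-1) →
        φ (v * ℓ) = ∑ i : Fin n, eval (q i) v * φ (P i * ℓ) := by
      intro ℓ hℓ hℓv v hv
      set g : MvPolynomial (Fin (t+1)) k := v - ∑ i : Fin n, eval (q i) v • P i with hgdef
      have hgh : g.IsHomogeneous (n-1) := by
        rw [← mem_homogeneousSubmodule] at hv ⊢
        exact Submodule.sub_mem _ hv (Submodule.sum_mem _ fun i _ =>
          Submodule.smul_mem _ _ (hPhom i))
      have hgz : ∀ j : Fin n, eval (q j) g = 0 := by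
        intro j
        rw [hgdef, map_sub, map_sum]
        have heach : ∀ i : Fin n, eval (q j) (eval (q i) v • P i)
            = if i = j then eval (q j) v else 0 := by
          intro i
          rw [smul_eval, hPval]
          rcases eq_or_ne i j with rfl | h
          · rw [if_pos rfl, if_pos rfl, mul_one]
          · rw [if_neg (Ne.symm h), if_neg h, mul_zero]
        rw [Finset.sum_congr rfl fun i _ => heach i, Finset.sum_ite_eq' Finset.univ j
          (fun _ => eval (q j) v), if_pos (Finset.mem_univ _), sub_self]
      have hsplit : v * ℓ = g * ℓ + ∑ i : Fin n, eval (q i) v • (P i * ℓ) := by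
        rw [hgdef, sub_mul, Finset.sum_mul]
        simp only [smul_mul_assoc]
        ring
      rw [hsplit, map_add, map_sum, hφgen g ℓ hgh hgz hℓ hℓv, zero_add]
      refine Finset.sum_congr rfl fun i _ => ?_
      rw [map_smul, smul_eq_mul]
    have h2 : ∀ ℓ : MvPolynomial (Fin (t+1)) k, ℓ.IsHomogeneous 1 → eval dl ℓ = 0 →
        ∀ ℓ' : MvPolynomial (Fin (t+1)) k, ℓ'.IsHomogeneous 1 → eval dl ℓ' = 0 →
        ∀ i : Fin n,
        eval (q i) ℓ' * φ (P i * ℓ) = eval (q i) ℓ * φ (P i * ℓ') := by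
      intro ℓ hℓ hℓv ℓ' hℓ' hℓv' i
      have hom1 : (R i * ℓ').IsHomogeneous (n-1) := by
        have h := (hRhom i).mul hℓ'
        rwa [show n - 2 + 1 = n - 1 by omega] at h
      have hom2 : (R i * ℓ).IsHomogeneous (n-1) := by
        have h := (hRhom i).mul hℓ
        rwa [show n - 2 + 1 = n - 1 by omega] at h
      have hA := h1 ℓ hℓ hℓv (R i * ℓ') hom1
      have hB := h1 ℓ' hℓ' hℓv' (R i * ℓ) hom2
      have hsum : ∀ (ℓ'' w : MvPolynomial (Fin (t+1)) k),
          (∑ m : Fin n, eval (q m) (R i * w) * φ (P m * ℓ''))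
            = eval (q i) w * φ (P i * ℓ'') := by
        intro ℓ'' w
        rw [Finset.sum_eq_single i]
        · rw [map_mul, hRval i i, if_pos rfl, one_mul]
        · intro m _ hmi
          rw [map_mul, hRval i m, if_neg hmi, zero_mul, zero_mul]
        · intro h; exact absurd (Finset.mem_univ _) h
      rw [hsum ℓ ℓ'] at hA
      rw [hsum ℓ' ℓ] at hB
      rw [← hA, ← hB]
      congr 1
      ring
    have hlp : ∀ i : Fin n, ∃ ℓ : MvPolynomial (Fin (t+1)) k, ℓ.IsHomogeneous 1 ∧
        eval dl ℓ = 0 ∧ eval (q i) ℓ = 1 := fun i =>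
      hlam i.castSucc (Fin.last n) (hcs_ne i)
    choose lp hlph hlpz hlpo using hlp
    set a : Fin n → k := fun i => φ (P i * lp i) with hadef
    have h3 : ∀ ℓ : MvPolynomial (Fin (t+1)) k, ℓ.IsHomogeneous 1 → eval dl ℓ = 0 →
        ∀ i : Fin n, φ (P i * ℓ) = eval (q i) ℓ * a i := by
      intro ℓ hℓ hℓv i
      have h := h2 ℓ hℓ hℓv (lp i) (hlph i) (hlpz i) i
      rwa [hlpo i, one_mul] at h
    have hdl0 : dl ∉ (⊥ : Submodule k (Fin (t+1) → k)) := by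
      rw [Submodule.mem_bot]; exact hd0 _
    obtain ⟨ℓ0, hℓ0h, _, hℓ0o⟩ := exists_linear_form ⊥ dl hdl0
    have hfspan : f ∈ Submodule.span k {p : MvPolynomial (Fin (t+1)) k |
        ∃ v ℓ, v.IsHomogeneous (n - 1) ∧ ℓ.IsHomogeneous 1 ∧ eval dl ℓ = 0 ∧ p = v * ℓ} := by
      have h := mem_span_products dl ℓ0 hℓ0h hℓ0o n f hfh
      rwa [hfv (Fin.last n), zero_smul, sub_zero] at h
    have hχ : ∀ p ∈ Submodule.span k {p : MvPolynomial (Fin (t+1)) k |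
        ∃ v ℓ, v.IsHomogeneous (n - 1) ∧ ℓ.IsHomogeneous 1 ∧ eval dl ℓ = 0 ∧ p = v * ℓ},
        φ p = ∑ i : Fin n, a i * eval (q i) p := by
      intro p hp
      induction hp using Submodule.span_induction with
      | mem x hx =>
        obtain ⟨v, ℓ, hv, hℓ, hℓv, rfl⟩ := hx
        rw [h1 ℓ hℓ hℓv v hv]
        refine Finset.sum_congr rfl fun i _ => ?_
        rw [h3 ℓ hℓ hℓv i, map_mul]
        ring
      | zero => simp
      | add x y hx hy ihx ihy =>
        rw [map_add, ihx, ihy, ← Finset.sum_add_distrib]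
        refine Finset.sum_congr rfl fun i _ => ?_
        rw [map_add]
        ring
      | smul c x hx ihx =>
        rw [map_smul, ihx, smul_eq_mul, Finset.mul_sum]
        refine Finset.sum_congr rfl fun i _ => ?_
        rw [smul_eval]
        ring
    have hφf0 : φ f = 0 := by
      rw [hχ f hfspan]
      refine Finset.sum_eq_zero fun i _ => ?_
      rw [show eval (q i) f = 0 from hfv i.castSucc, mul_zero]
    exact hφf hφf0
end
end

section
/- Let d_1, …, d_n ∈ k^{t+1} be pairwise non-proportional nonzero vectors with vanishing ideals m_1, …, m_n ⊆ U = k[x_0,…,x_t], whose linear span in k^{t+1} has dimension at least 3 (the corresponding points of P^t do not all lie on a line). Let b_1, b_2 ∈ k^{t+1} be nonzero vectors, each non-proportional to every d_i, with vanishing ideals 𝔫_1, 𝔫_2. If (m_1 ∩ ⋯ ∩ m_n ∩ 𝔫_1)_n = (m_1 ∩ ⋯ ∩ m_n ∩ 𝔫_2)_n — that is, the same homogeneous polynomials of degree n vanish at d_1,…,d_n,b_1 as at d_1,…,d_n,b_2 — then b_1 and b_2 are proportional (they represent the same point of P^t). -/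
/-!
Suppose `b₁` is not proportional to `b₂`. Since the `dᵢ` span a space of dimension at least `3`,
they do not all lie in the plane spanned by `b₁` and `b₂`, and by the exchange lemma some `d_{i₀}`
has `b₁ ∉ span {d_{i₀}, b₂}`. Taking a linear form vanishing on `span {d_{i₀}, b₂}` and, for
`i ≠ i₀`, linear forms vanishing at `dᵢ`, all nonzero at `b₁`, their product is a form of degree
`n` vanishing at the `dᵢ` and at `b₂` but not at `b₁`.
-/

open MvPolynomial Submodule

section

variable {k σ : Type*} [Field k]

theorem MvPolynomial.exists_isHomogeneous_one_eval_eq [Fintype σ] [DecidableEq σ]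
    (φ : (σ → k) →ₗ[k] k) :
    ∃ p : MvPolynomial σ k, p.IsHomogeneous 1 ∧ ∀ v, eval v p = φ v := by
  refine ⟨∑ i, C (φ fun j ↦ if i = j then 1 else 0) * X i,
    IsHomogeneous.sum _ _ 1 fun i _ ↦ isHomogeneous_C_mul_X _ i, fun v ↦ ?_⟩
  simp [φ.pi_apply_eq_sum_univ v, mul_comm]

theorem MvPolynomial.exists_isHomogeneous_eval_ne_zero_of_forall_notMem [Fintype σ] {n : ℕ}
    (W : Fin n → Submodule k (σ → k)) {b : σ → k} (hb : ∀ i, b ∉ W i) :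
    ∃ f : MvPolynomial σ k, f.IsHomogeneous n ∧ (∀ i, ∀ v ∈ W i, eval v f = 0) ∧
      eval b f ≠ 0 := by
  classical
  choose φ hφb hWφ using fun i ↦ exists_le_ker_of_notMem (hb i)
  choose p hp hpφ using fun i ↦ exists_isHomogeneous_one_eval_eq (φ i)
  refine ⟨∏ i, p i, by simpa using IsHomogeneous.prod Finset.univ p (fun _ ↦ 1) fun i _ ↦ hp i,
    fun i v hv ↦ ?_, ?_⟩
  · rw [map_prod]
    exact Finset.prod_eq_zero (Finset.mem_univ i) ((hpφ i v).trans (hWφ i hv))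
  · rw [map_prod]
    exact Finset.prod_ne_zero_iff.mpr fun i _ ↦ (hpφ i b).trans_ne (hφb i)

theorem exists_notMem_span_pair_of_three_le_rank {ι V : Type*} [AddCommGroup V] [Module k V]
    {d : ι → V} (hd : 3 ≤ Module.rank k (span k (Set.range d))) {b c : V}
    (hbc : b ∉ span k {c}) : ∃ i, b ∉ span k {d i, c} := by
  classical
  by_contra! h
  have hle : span k (Set.range d) ≤ span k ({b, c} : Finset V) := by
    rw [span_le]
    rintro _ ⟨i, rfl⟩
    simpa using mem_span_insert_exchange (h i) hbc
  have := (hd.trans (rank_mono hle)).trans (rank_span_finset_le _)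
  have := Finset.card_le_two (a := b) (b := c)
  norm_cast at *
  omega

end

theorem stmt_11_general {k : Type*} [Field k]
    (t : ℕ) (n : ℕ) (d : Fin n → Fin (t + 1) → k)
    (hline : 3 ≤ Module.rank k ↥(Submodule.span k (Set.range d)))
    (b₁ b₂ : Fin (t + 1) → k)
    (hb₁d : ∀ i, ∀ a : k, b₁ ≠ a • d i)
    (h : ∀ f : MvPolynomial (Fin (t + 1)) k, f.IsHomogeneous n →
      (((∀ i, MvPolynomial.eval (d i) f = 0) ∧ MvPolynomial.eval b₁ f = 0) ↔
       ((∀ i, MvPolynomial.eval (d i) f = 0) ∧ MvPolynomial.eval b₂ f = 0))) :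
    ∃ a : k, b₁ = a • b₂ := by
  by_contra! hne
  have hb₁b₂ : b₁ ∉ span k {b₂} := fun hmem ↦
    let ⟨a, ha⟩ := mem_span_singleton.mp hmem
    hne a ha.symm
  obtain ⟨i₀, hi₀⟩ := exists_notMem_span_pair_of_three_le_rank hline hb₁b₂
  let W i := if i = i₀ then span k {d i, b₂} else span k {d i}
  have hdW i : d i ∈ W i := by
    unfold W; split_ifs <;> exact subset_span (by simp)
  have hb₁W i : b₁ ∉ W i := by
    unfold W; split_ifs with hi
    · exact hi ▸ hi₀
    · exact fun hmem ↦ let ⟨a, ha⟩ := mem_span_singleton.mp hmem; hb₁d i a ha.symm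
  obtain ⟨f, hf, hfW, hfb₁⟩ := exists_isHomogeneous_eval_ne_zero_of_forall_notMem W hb₁W
  have hfb₂ : eval b₂ f = 0 := hfW i₀ b₂ (by simpa [W] using subset_span (by simp))
  exact hfb₁ ((h f hf).mpr ⟨fun i ↦ hfW i _ (hdW i), hfb₂⟩).2

/-- for distinct points `d₁, …, d_n` of `ℙ^t` not all on a line, and points
`b₁, b₂` distinct from all the `dᵢ`, if the same homogeneous degree-`n` polynomials
vanish at `d₁, …, d_n, b₁` as at `d₁, …, d_n, b₂` then `b₁ = b₂` in `ℙ^t`. -/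
theorem stmt_11 {k : Type*} [Field k] [IsAlgClosed k]
    (t : ℕ) (ht : 2 ≤ t) (n : ℕ) (d : Fin n → Fin (t + 1) → k)
    (hd0 : ∀ i, d i ≠ 0)
    (hprop : ∀ i j, i ≠ j → ∀ a : k, d i ≠ a • d j)
    (hline : 3 ≤ Module.rank k ↥(Submodule.span k (Set.range d)))
    (b₁ b₂ : Fin (t + 1) → k) (hb₁ : b₁ ≠ 0) (hb₂ : b₂ ≠ 0)
    (hb₁d : ∀ i, ∀ a : k, b₁ ≠ a • d i)
    (hb₂d : ∀ i, ∀ a : k, b₂ ≠ a • d i)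
    (h : ∀ f : MvPolynomial (Fin (t + 1)) k, f.IsHomogeneous n →
      (((∀ i, MvPolynomial.eval (d i) f = 0) ∧ MvPolynomial.eval b₁ f = 0) ↔
       ((∀ i, MvPolynomial.eval (d i) f = 0) ∧ MvPolynomial.eval b₂ f = 0))) :
    ∃ a : k, b₁ = a • b₂ :=
  stmt_11_general t n d hline b₁ b₂ hb₁d h
end

section
/- Fix d ≥ 1 and t ≥ 1, and set N = binom(t+d, d). Let f_1, …, f_N be an enumeration (without repetition) of the N distinct monomials of degree d in the polynomial ring k[x_0,…,x_t], and let a_1 < a_2 < ⋯ < a_N be distinct nonnegative integers. Then the determinant of the N×N matrix whose (i,j) entry is the polynomial f_i^{a_j} is a nonzero element of k[x_0,…,x_t]. -/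
/-!
Write `fᵢ = x^{sᵢ}`. Expanding the determinant, the permutation `π` contributes `± x^{∑ⱼ aⱼ s_{π j}}`.
Order exponent vectors lexicographically, a linear order compatible with addition. By the strict
rearrangement inequality, `∑ⱼ aⱼ s_{π j}` is strictly largest for the unique `π` that lists the
distinct `sᵢ` in increasing order, so that monomial cannot cancel and survives with coefficient `±1`.
-/

open Equiv Function

instance IsOrderedCancelAddMonoid.toPosSMulStrictMonoNat {M : Type*} [AddCommMonoid M]
    [PartialOrder M] [IsOrderedCancelAddMonoid M] : PosSMulStrictMono ℕ M :=
  ⟨fun _ hn _ _ hab => nsmul_lt_nsmul_right hn.ne' hab⟩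

theorem StrictMono.monotone_of_monovary {ι α β : Type*} [LinearOrder ι] [LinearOrder α]
    [LinearOrder β] {f : ι → α} {h : ι → β} (hf : StrictMono f) (hfh : Monovary f h) :
    Monotone h := by
  intro i j hij
  by_contra! hji
  exact hji.ne (congrArg h (le_antisymm hij (hf.le_iff_le.1 (hfh hji))).symm)

theorem StrictMono.sum_smul_comp_perm_lt_of_ne {α β : Type*} [Semiring α] [LinearOrder α]
    [IsStrictOrderedRing α] [ExistsAddOfLE α] [AddCommMonoid β] [LinearOrder β]
    [IsOrderedCancelAddMonoid β] [Module α β] [PosSMulStrictMono α β] {n : ℕ}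
    {f : Fin n → α} {g : Fin n → β} (hf : StrictMono f) (hg : Injective g)
    {σ τ : Perm (Fin n)} (hτ : StrictMono (g ∘ τ)) (hστ : σ ≠ τ) :
    ∑ i, f i • g (σ i) < ∑ i, f i • g (τ i) := by
  have hcomp : (g ∘ τ) ∘ (τ⁻¹ * σ) = g ∘ σ := by ext; simp
  have key := (hf.monotone.monovary hτ.monotone).sum_smul_comp_perm_lt_sum_smul_iff
    (σ := τ⁻¹ * σ)
  rw [hcomp] at key
  simp only [comp_apply, Perm.mul_apply, Perm.coe_inv, apply_symm_apply] at key
  refine key.2 fun hσ => hστ ?_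
  have hσ' : StrictMono (g ∘ σ) :=
    (hf.monotone_of_monovary hσ).strictMono_of_injective (hg.comp σ.injective)
  have hrange : Set.range (g ∘ σ) = Set.range (g ∘ τ) := by
    simp only [Set.range_comp, EquivLike.range_eq_univ]
  exact DFunLike.coe_injective (hg.comp_left ((hσ'.range_inj hτ).1 hrange))

namespace MvPolynomial

variable {R σ : Type*} [CommRing R]

theorem det_monomial_pow {ι : Type*} [Fintype ι] [DecidableEq ι] (s : ι → σ →₀ ℕ) (a : ι → ℕ) :
    (Matrix.of fun i j => monomial (s i) (1 : R) ^ a j).det =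
      ∑ π : Perm ι, Perm.sign π • monomial (∑ i, a i • s (π i)) 1 := by
  simp only [Matrix.det_apply, Matrix.of_apply, monomial_pow, one_pow, monomial_sum_one]

theorem det_monomial_pow_ne_zero [Nontrivial R] {n : ℕ} {s : Fin n → σ →₀ ℕ} (hs : Injective s)
    {a : Fin n → ℕ} (ha : StrictMono a) :
    (Matrix.of fun i j => monomial (s i) (1 : R) ^ a j).det ≠ 0 := by
  let _ : LinearOrder σ := IsWellOrder.linearOrder WellOrderingRel
  let g : Fin n → Lex (σ →₀ ℕ) := toLex ∘ s
  have hg : Injective g := toLex.injective.comp hs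
  let τ := Tuple.sort g
  have hτ : StrictMono (g ∘ τ) :=
    (Tuple.monotone_sort g).strictMono_of_injective (hg.comp τ.injective)
  have hexp : ∀ π, π ≠ τ → ∑ i, a i • s (π i) ≠ ∑ i, a i • s (τ i) := fun π hπ =>
    (ha.sum_smul_comp_perm_lt_of_ne hg hτ hπ).ne
  intro hdet
  have hcoeff := congrArg (coeff (∑ i, a i • s (τ i))) hdet
  rw [det_monomial_pow, coeff_sum, Finset.sum_eq_single τ, coeff_smul, coeff_monomial, if_pos rfl,
    coeff_zero] at hcoeff
  · exact one_ne_zero ((smul_eq_zero_iff_eq _).1 hcoeff)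
  · intro π _ hπ
    rw [coeff_smul, coeff_monomial, if_neg (hexp π hπ), smul_zero]
  · simp

end MvPolynomial

theorem stmt_12_general {k : Type*} [Field k]
    (t d : ℕ)
    (f : Fin ((t + d).choose d) → MvPolynomial (Fin (t + 1)) k)
    (hmono : ∀ i, ∃ s : Fin (t + 1) →₀ ℕ,
      (s.sum fun _ e => e) = d ∧ f i = MvPolynomial.monomial s 1)
    (hinj : Function.Injective f)
    (a : Fin ((t + d).choose d) → ℕ) (ha : StrictMono a) :
    Matrix.det (Matrix.of fun i j => f i ^ a j) ≠ 0 := by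
  choose s _ hfs using hmono
  obtain rfl : f = fun i => MvPolynomial.monomial (s i) 1 := funext hfs
  exact MvPolynomial.det_monomial_pow_ne_zero
    (fun i j hij => hinj (congrArg (MvPolynomial.monomial · 1) hij)) ha

/-- if `f₁, …, f_N` enumerates (without repetition) the `N = binom(t+d,d)`
monomials of degree `d` in `k[x₀,…,x_t]` and `a₁ < ⋯ < a_N` are distinct nonnegative
integers, then `det (fᵢ^{aⱼ}) ≠ 0`. -/
theorem stmt_12 {k : Type*} [Field k] [IsAlgClosed k]
    (t d : ℕ) (ht : 1 ≤ t) (hd : 1 ≤ d)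
    (f : Fin ((t + d).choose d) → MvPolynomial (Fin (t + 1)) k)
    (hmono : ∀ i, ∃ s : Fin (t + 1) →₀ ℕ,
      (s.sum fun _ e => e) = d ∧ f i = MvPolynomial.monomial s 1)
    (hinj : Function.Injective f)
    (a : Fin ((t + d).choose d) → ℕ) (ha : StrictMono a) :
    Matrix.det (Matrix.of fun i j => f i ^ a j) ≠ 0 :=
  stmt_12_general t d f hmono hinj a ha
end

section
/- Let p_1, …, p_t ∈ k be algebraically independent over the prime subfield of k, let b_0, …, b_t ∈ k all be nonzero, and for n ∈ ℤ set c_n = (b_0, b_1 p_1^n, …, b_t p_t^n) ∈ k^{t+1}. Then for every d ≥ 1 and every nonzero homogeneous polynomial F ∈ k[x_0,…,x_t] of degree d, the set {n ∈ ℤ : F(c_n) = 0} has at most binom(t+d,d) − 1 elements. In particular, the set of points {c_n : n ∈ ℤ} is in general position, and hence critically dense in P^t. -/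
set_option synthInstance.maxHeartbeats 1000000
set_option maxHeartbeats 4000000

noncomputable section

open Finset Function Equiv

lemma rearrange_unique {m : ℕ} (lam n : Fin m → ℤ)
    (hlam : Function.Injective lam) (hn : Function.Injective n) :
    ∃ σs : Equiv.Perm (Fin m), ∀ σ : Equiv.Perm (Fin m), σ ≠ σs →
      ∑ j, lam j * n (σ j) < ∑ j, lam j * n (σs j) := by
  classical
  set s := Tuple.sort lam with hs
  set sn := Tuple.sort n with hsn
  have hlams : StrictMono (lam ∘ s) :=
    (Tuple.monotone_sort lam).strictMono_of_injective (hlam.comp s.injective)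
  have hns : StrictMono (n ∘ sn) :=
    (Tuple.monotone_sort n).strictMono_of_injective (hn.comp sn.injective)
  set σs : Equiv.Perm (Fin m) := sn * s⁻¹ with hσs
  -- any monovarying permutation composed with s is monotone in n
  have hmono : ∀ τ : Equiv.Perm (Fin m), Monovary lam (n ∘ τ) →
      Monotone (n ∘ (τ * s)) := by
    intro τ hτ a b hab
    rcases eq_or_lt_of_le hab with rfl | h
    · exact le_rfl
    · by_contra hcon
      push_neg at hcon
      have h1 : lam (s b) ≤ lam (s a) := hτ (by simpa using hcon)
      exact absurd (hlams h) (not_lt.mpr h1)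
  have hMs : Monovary lam (n ∘ σs) := by
    intro i j hij
    have hij' : n (sn (s⁻¹ i)) < n (sn (s⁻¹ j)) := by simpa [hσs] using hij
    have hab : s⁻¹ i < s⁻¹ j := hns.lt_iff_lt.mp hij'
    have := (hlams hab).le
    simpa using this
  have key : ∀ σ : Equiv.Perm (Fin m), Monovary lam (n ∘ σ) → σ = σs := by
    intro σ hσ
    have h1 : Monotone (n ∘ (σ * s)) := hmono σ hσ
    have h2 : Monotone (n ∘ (σs * s)) := hmono σs hMs
    have h3 : n ∘ (σ * s) = n ∘ (σs * s) := Tuple.unique_monotone h1 h2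
    refine Equiv.ext fun x => ?_
    have := congrFun h3 (s⁻¹ x)
    simp only [comp_apply, Perm.mul_apply, Perm.inv_def, Equiv.apply_symm_apply] at this
    exact hn this
  refine ⟨σs, fun σ hσ => ?_⟩
  set τ : Equiv.Perm (Fin m) := σs⁻¹ * σ with hτ
  have hg : ∀ j, (n ∘ σs) (τ j) = n (σ j) := by
    intro j; simp [hτ]
  have hiff := hMs.sum_smul_comp_perm_lt_sum_smul_iff (σ := τ)
  have hne : ¬ Monovary lam ((n ∘ σs) ∘ τ) := by
    have : (n ∘ σs) ∘ τ = n ∘ σ := funext hg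
    rw [this]
    intro hM
    exact hσ (key σ hM)
  have hlt := hiff.mpr hne
  simp only [smul_eq_mul, hg] at hlt
  simpa using hlt

open Finset Function

lemma laurent_indep {k : Type*} [Field k] {t : ℕ} (p : Fin t → k)
    (hp : AlgebraicIndependent (⊥ : Subfield k) p) (hp0 : ∀ i, p i ≠ 0)
    (S : Finset (Fin t → ℤ)) (c : (Fin t → ℤ) → ℤ)
    (h : ∑ w ∈ S, (c w : k) * ∏ i, p i ^ (w i) = 0) :
    ∀ w ∈ S, (c w : k) = 0 := by
  classical
  set N : Fin t → ℕ := fun i => S.sup fun w => (-(w i)).toNat with hN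
  have hNw : ∀ w ∈ S, ∀ i, 0 ≤ w i + (N i : ℤ) := by
    intro w hw i
    have h1 : (-(w i)).toNat ≤ N i := Finset.le_sup (f := fun w => (-(w i)).toNat) hw
    have h2 : -(w i) ≤ (N i : ℤ) := le_trans (Int.self_le_toNat _) (by exact_mod_cast h1)
    linarith
  set ew : (Fin t → ℤ) → (Fin t →₀ ℕ) :=
    fun w => Finsupp.equivFunOnFinite.symm (fun i => (w i + N i).toNat) with hew
  have hewinj : ∀ w ∈ S, ∀ w' ∈ S, ew w = ew w' → w = w' := by
    intro w hw w' hw' hEq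
    funext i
    have h1 : ((w i + N i).toNat) = ((w' i + N i).toNat) := by
      have := congrArg (fun f => f i) hEq
      simpa [hew] using this
    have h2 : w i + N i = w' i + N i := by
      rw [← Int.toNat_of_nonneg (hNw w hw i), ← Int.toNat_of_nonneg (hNw w' hw' i), h1]
    linarith
  set Q : MvPolynomial (Fin t) (⊥ : Subfield k) :=
    ∑ w ∈ S, MvPolynomial.monomial (ew w) ((c w : ℤ) : (⊥ : Subfield k)) with hQ
  have haevalterm : ∀ w ∈ S,
      (MvPolynomial.aeval p) (MvPolynomial.monomial (ew w) ((c w : ℤ) : (⊥ : Subfield k)))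
      = ((c w : k) * ∏ i, p i ^ (w i)) * ∏ i, p i ^ (N i : ℤ) := by
    intro w hw
    rw [MvPolynomial.aeval_monomial]
    have hcast : algebraMap (⊥ : Subfield k) k ((c w : ℤ) : (⊥ : Subfield k)) = (c w : k) := by
      rfl
    rw [hcast]
    have hprod : (ew w).prod (fun i n => p i ^ n)
        = ∏ i, p i ^ ((w i + N i).toNat) := by
      apply Finsupp.prod_fintype
      intro i; simp
    rw [hprod]
    have hterm : ∀ i : Fin t, p i ^ ((w i + N i).toNat) = p i ^ (w i) * p i ^ (N i : ℤ) := by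
      intro i
      rw [← zpow_natCast, Int.toNat_of_nonneg (hNw w hw i), zpow_add₀ (hp0 i)]
    rw [Finset.prod_congr rfl (fun i _ => hterm i), Finset.prod_mul_distrib]
    ring
  have haeval : (MvPolynomial.aeval p) Q = 0 := by
    rw [hQ, map_sum]
    rw [Finset.sum_congr rfl haevalterm, ← Finset.sum_mul, h, zero_mul]
  have hQ0 : Q = 0 := hp (by rw [haeval, map_zero])
  intro w hw
  have hco : MvPolynomial.coeff (ew w) Q = ((c w : ℤ) : (⊥ : Subfield k)) := by
    rw [hQ, MvPolynomial.coeff_sum]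
    rw [Finset.sum_eq_single w]
    · rw [MvPolynomial.coeff_monomial, if_pos rfl]
    · intro w' hw' hne
      rw [MvPolynomial.coeff_monomial, if_neg]
      intro hEq
      exact hne (hewinj w' hw' w hw hEq)
    · intro hcon; exact absurd hw hcon
  rw [hQ0] at hco
  simp only [MvPolynomial.coeff_zero] at hco
  have : ((c w : ℤ) : (⊥ : Subfield k)) = 0 := hco.symm
  have h2 : (((c w : ℤ) : (⊥ : Subfield k)) : k) = 0 := by rw [this]; rfl
  push_cast at h2
  exact h2

open Finset Function Equiv

lemma zpow_sum₀ {k : Type*} [CommGroupWithZero k] {x : k} (hx : x ≠ 0)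
    {ι : Type*} (s : Finset ι) (f : ι → ℤ) :
    x ^ (∑ j ∈ s, f j) = ∏ j ∈ s, x ^ f j := by
  classical
  induction s using Finset.induction with
  | empty => simp
  | insert a s' hj ih =>
                    rw [Finset.sum_insert hj, Finset.prod_insert hj, zpow_add₀ hx, ih]

lemma baseK_zero {K : ℤ} {t : ℕ} (d : Fin t → ℤ) (hd : ∀ i, |d i| < K)
    (h : ∑ i, d i * K ^ (i : ℕ) = 0) : ∀ i, d i = 0 := by
  induction t with
  | zero => exact fun i => absurd i.2 (by omega)
  | succ t ih =>
    have hK : 0 < K := lt_of_le_of_lt (abs_nonneg _) (hd 0)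
    rw [Fin.sum_univ_succ] at h
    simp only [Fin.val_zero, pow_zero, mul_one] at h
    have hfac : ∀ j : Fin t, d j.succ * (K : ℤ) ^ (j.succ : ℕ) = K * (d j.succ * K ^ (j : ℕ)) := by
      intro j
      rw [Fin.val_succ, pow_succ]
      ring
    rw [Finset.sum_congr rfl (fun j _ => hfac j), ← Finset.mul_sum] at h
    have hdvd : K ∣ d 0 := ⟨-(∑ j : Fin t, d j.succ * K ^ (j : ℕ)), by linarith⟩
    have hd0 : d 0 = 0 := by
      rcases hdvd with ⟨e, he⟩
      by_contra hne
      have : K ≤ |d 0| := by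
        rw [he, abs_mul]
        have he0 : e ≠ 0 := by rintro rfl; simp at he; exact hne he
        have : (1 : ℤ) ≤ |e| := Int.one_le_abs (by exact_mod_cast he0)
        nlinarith [abs_nonneg e, abs_of_pos hK]
      exact absurd (hd 0) (not_lt.mpr this)
    rw [hd0, zero_add] at h
    have hsum : ∑ j : Fin t, d j.succ * K ^ (j : ℕ) = 0 := by
      rcases mul_eq_zero.mp h with h1 | h2
      · exact absurd h1 hK.ne'
      · exact h2
    intro i
    refine Fin.cases hd0 (fun j => ?_) i
    exact ih (fun j => d j.succ) (fun j => hd j.succ) hsum j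

lemma det_ne_zero_key {k : Type*} [Field k] {t : ℕ} (p : Fin t → k)
    (hp : AlgebraicIndependent (⊥ : Subfield k) p) (hp0 : ∀ i, p i ≠ 0)
    {m : ℕ} (E : Fin m → Fin t → ℤ) (hE : Function.Injective E)
    (n : Fin m → ℤ) (hn : Function.Injective n) :
    (Matrix.of fun j l : Fin m => ∏ i, p i ^ (E l i * n j)).det ≠ 0 := by
  classical
  set MB : ℕ := Finset.univ.sup (fun q : Fin m × Fin t => (E q.1 q.2).natAbs) with hMB
  set K : ℤ := 2 * MB + 1 with hK
  have hEbound : ∀ l i, |E l i| ≤ (MB : ℤ) := by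
    intro l i
    have h1 : (E l i).natAbs ≤ MB :=
      Finset.le_sup (f := fun q : Fin m × Fin t => (E q.1 q.2).natAbs)
        (Finset.mem_univ (l, i))
    rw [Int.abs_eq_natAbs]
    exact_mod_cast h1
  set φ : (Fin t → ℤ) → ℤ := fun w => ∑ i, w i * K ^ (i : ℕ) with hφ
  have hφinj : ∀ w w' : Fin t → ℤ, (∀ i, |w i| ≤ (MB : ℤ)) → (∀ i, |w' i| ≤ (MB : ℤ)) →
      φ w = φ w' → w = w' := by
    intro w w' hw hw' hEq
    have hd : ∀ i, (fun i => w i - w' i) i = 0 := by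
      apply baseK_zero (K := K)
      · intro i
        calc |w i - w' i| ≤ |w i| + |w' i| := abs_sub _ _
          _ ≤ (MB : ℤ) + MB := add_le_add (hw i) (hw' i)
          _ < K := by omega
      · have : (∑ i, (w i - w' i) * K ^ (i:ℕ)) = φ w - φ w' := by
          simp only [hφ, sub_mul, Finset.sum_sub_distrib]
        rw [this, hEq, sub_self]
    funext i
    have := hd i
    simpa [sub_eq_zero] using this
  set lam : Fin m → ℤ := fun l => φ (E l) with hlam
  have hlaminj : Function.Injective lam := by
    intro l l' hEq
    exact hE (hφinj (E l) (E l') (hEbound l) (hEbound l') hEq)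
  set V : Equiv.Perm (Fin m) → (Fin t → ℤ) := fun σ i => ∑ j, E j i * n (σ j) with hV
  set P : (Fin t → ℤ) → k := fun w => ∏ i, p i ^ (w i) with hP
  have hterm : ∀ σ : Equiv.Perm (Fin m),
      (∏ j, (Matrix.of fun j l : Fin m => ∏ i, p i ^ (E l i * n j)) (σ j) j) = P (V σ) := by
    intro σ
    simp only [Matrix.of_apply]
    rw [Finset.prod_comm]
    refine Finset.prod_congr rfl (fun i _ => ?_)
    show (∏ j, p i ^ (E j i * n (σ j))) = p i ^ (∑ j, E j i * n (σ j))
    rw [zpow_sum₀ (hp0 i)]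
  have hφV : ∀ σ : Equiv.Perm (Fin m), φ (V σ) = ∑ j, lam j * n (σ j) := by
    intro σ
    show (∑ i, (∑ j, E j i * n (σ j)) * K ^ (i:ℕ)) = ∑ j, (∑ i, E j i * K ^ (i:ℕ)) * n (σ j)
    simp only [Finset.sum_mul]
    rw [Finset.sum_comm]
    exact Finset.sum_congr rfl fun j _ => Finset.sum_congr rfl fun i _ => by ring
  obtain ⟨σs, hσs⟩ := rearrange_unique lam n hlaminj hn
  set W : Finset (Fin t → ℤ) := Finset.image V Finset.univ with hW
  set c : (Fin t → ℤ) → ℤ :=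
    fun w => ∑ σ ∈ Finset.univ.filter (fun σ => V σ = w), ((Equiv.Perm.sign σ : ℤˣ) : ℤ)
    with hc
  have hdet : (Matrix.of fun j l : Fin m => ∏ i, p i ^ (E l i * n j)).det
      = ∑ w ∈ W, (c w : k) * P w := by
    rw [Matrix.det_apply]
    rw [show (∑ σ : Equiv.Perm (Fin m), Equiv.Perm.sign σ •
          ∏ j, (Matrix.of fun j l : Fin m => ∏ i, p i ^ (E l i * n j)) (σ j) j)
        = ∑ σ : Equiv.Perm (Fin m), (((Equiv.Perm.sign σ : ℤˣ) : ℤ) : k) * P (V σ) from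
      Finset.sum_congr rfl (fun σ _ => by rw [hterm σ, Units.smul_def, zsmul_eq_mul])]
    rw [← Finset.sum_fiberwise_of_maps_to (g := V) (fun σ _ => Finset.mem_image_of_mem V (Finset.mem_univ σ))]
    refine Finset.sum_congr rfl (fun w hw => ?_)
    have : ∀ σ ∈ Finset.univ.filter (fun σ => V σ = w),
        (((Equiv.Perm.sign σ : ℤˣ) : ℤ) : k) * P (V σ)
        = (((Equiv.Perm.sign σ : ℤˣ) : ℤ) : k) * P w := by
      intro σ hσ
      rw [(Finset.mem_filter.mp hσ).2]
    rw [Finset.sum_congr rfl this, ← Finset.sum_mul, hc]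
    push_cast
    ring
  intro h0
  rw [hdet] at h0
  have hall := laurent_indep p hp hp0 W c h0
  have hwmem : V σs ∈ W := Finset.mem_image_of_mem V (Finset.mem_univ σs)
  have hfiber : Finset.univ.filter (fun σ => V σ = V σs) = {σs} := by
    ext σ
    simp only [Finset.mem_filter, Finset.mem_univ, true_and, Finset.mem_singleton]
    constructor
    · intro hVeq
      by_contra hne
      have hlt := hσs σ hne
      have := congrArg φ hVeq
      rw [hφV σ, hφV σs] at this
      exact absurd this (ne_of_lt hlt)
    · rintro rfl; rfl
  have hcs : c (V σs) = ((Equiv.Perm.sign σs : ℤˣ) : ℤ) := by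
    rw [hc]
    show (∑ σ ∈ Finset.univ.filter (fun σ => V σ = V σs), ((Equiv.Perm.sign σ : ℤˣ) : ℤ)) = _
    rw [hfiber, Finset.sum_singleton]
  have hczero := hall (V σs) hwmem
  rw [hcs] at hczero
  rcases Int.units_eq_one_or (Equiv.Perm.sign σs) with h1 | h1 <;> rw [h1] at hczero <;>
    norm_num at hczero

lemma zeros_lt {k : Type*} [Field k] {t : ℕ} (p : Fin t → k)
    (hp : AlgebraicIndependent (⊥ : Subfield k) p) (hp0 : ∀ i, p i ≠ 0)
    {m : ℕ} (hm : 0 < m) (E : Fin m → Fin t → ℤ) (hE : Function.Injective E)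
    (c : Fin m → k) (hc : ∀ l, c l ≠ 0) (N : Finset ℤ)
    (hN : ∀ x ∈ N, ∑ l, c l * ∏ i, p i ^ (E l i * x) = 0) :
    N.card < m := by
  classical
  by_contra hcon
  push_neg at hcon
  obtain ⟨N', hN'sub, hN'card⟩ := Finset.exists_subset_card_eq hcon
  set nn : Fin m → ℤ := fun j => (N'.orderIsoOfFin hN'card j : ℤ) with hnn
  have hnninj : Function.Injective nn := by
    intro a b hab
    exact (N'.orderIsoOfFin hN'card).injective (Subtype.coe_injective hab)
  have hdet := det_ne_zero_key p hp hp0 E hE nn hnninj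
  have hmv : (Matrix.of fun j l : Fin m => ∏ i, p i ^ (E l i * nn j)).mulVec c = 0 := by
    funext j
    have hmem : nn j ∈ N := hN'sub (N'.orderIsoOfFin hN'card j).2
    have := hN (nn j) hmem
    simp only [Matrix.mulVec, dotProduct, Matrix.of_apply, Pi.zero_apply]
    rw [← this]
    exact Finset.sum_congr rfl fun l _ => mul_comm _ _
  have hc0 := Matrix.eq_zero_of_mulVec_eq_zero hdet hmv
  exact hc ⟨0, hm⟩ (by rw [hc0]; rfl)

lemma main_core {k : Type*} [Field k] {t : ℕ} (p : Fin t → k)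
    (hp : AlgebraicIndependent (⊥ : Subfield k) p)
    (b : Fin (t + 1) → k) (hb : ∀ j, b j ≠ 0)
    (d : ℕ) (F : MvPolynomial (Fin (t + 1)) k) (hF0 : F ≠ 0) (hFh : F.IsHomogeneous d) :
    {n : ℤ | MvPolynomial.eval (Fin.cons (b 0) fun i => b i.succ * p i ^ n) F = 0}.Finite ∧
    {n : ℤ | MvPolynomial.eval (Fin.cons (b 0) fun i => b i.succ * p i ^ n) F = 0}.ncard
      < F.support.card := by
  classical
  have hp0 : ∀ i, p i ≠ 0 := by
    intro i hpi
    have h1 : (MvPolynomial.aeval (R := (⊥ : Subfield k)) p) (MvPolynomial.X i)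
        = (MvPolynomial.aeval (R := (⊥ : Subfield k)) p) 0 := by
      rw [map_zero, MvPolynomial.aeval_X, hpi]
    exact MvPolynomial.X_ne_zero i (hp h1)
  set m := F.support.card with hm'
  have hm : 0 < m := Finset.card_pos.mpr
    (Finset.nonempty_iff_ne_empty.mpr (fun h => hF0 (MvPolynomial.support_eq_empty.mp h)))
  set e : Fin m → (Fin (t + 1) →₀ ℕ) := fun l => (F.support.equivFin.symm l : _) with he
  have heinj : Function.Injective e := fun a b hab =>
    F.support.equivFin.symm.injective (Subtype.coe_injective hab)
  have hemem : ∀ l, e l ∈ F.support := fun l => (F.support.equivFin.symm l).2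
  have hdeg : ∀ α ∈ F.support, (∑ j, α j) = d := by
    intro α hα
    have h1 := hFh (MvPolynomial.mem_support_iff.mp hα)
    rw [show (Finsupp.weight 1 : (Fin (t + 1) →₀ ℕ) →+ ℕ) = Finsupp.weight (fun _ => 1) from rfl, ← Finsupp.degree_eq_weight_one] at h1
    rw [← h1, Finsupp.degree]
    exact (Finset.sum_subset (Finset.subset_univ _)
      (fun x _ hx => Finsupp.notMem_support_iff.mp hx)).symm
  set E : Fin m → (Fin t → ℤ) := fun l i => ((e l) i.succ : ℤ) with hE
  have hEinj : Function.Injective E := by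
    intro a b hab
    apply heinj
    have htail : ∀ i : Fin t, (e a) i.succ = (e b) i.succ := by
      intro i
      exact Nat.cast_injective (congrFun hab i)
    have hsum : ∀ l : Fin m, (e l 0) + ∑ i : Fin t, (e l) i.succ = d := by
      intro l
      rw [← Fin.sum_univ_succ (f := fun j => (e l) j)]
      exact hdeg (e l) (hemem l)
    have hhead : (e a) 0 = (e b) 0 := by
      have ha := hsum a
      have hb' := hsum b
      rw [Finset.sum_congr rfl (fun i _ => htail i)] at ha
      omega
    ext j
    refine Fin.cases hhead (fun i => htail i) j
  set c : Fin m → k := fun l => MvPolynomial.coeff (e l) F * ∏ j, b j ^ ((e l) j) with hc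
  have hcne : ∀ l, c l ≠ 0 := by
    intro l
    apply mul_ne_zero (MvPolynomial.mem_support_iff.mp (hemem l))
    exact Finset.prod_ne_zero_iff.mpr fun j _ => pow_ne_zero _ (hb j)
  have hkey : ∀ x : ℤ,
      MvPolynomial.eval (Fin.cons (b 0) fun i => b i.succ * p i ^ x) F
      = ∑ l, c l * ∏ i, p i ^ (E l i * x) := by
    intro x
    have hre : ∀ (g : (Fin (t+1) →₀ ℕ) → k), (∑ α ∈ F.support, g α) = ∑ l, g (e l) := by
      intro g
      rw [← Finset.sum_coe_sort]
      exact (Equiv.sum_comp F.support.equivFin.symm fun a => g ↑a).symm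
    rw [MvPolynomial.eval_eq', hre]
    refine Finset.sum_congr rfl fun l _ => ?_
    show MvPolynomial.coeff (e l) F *
        ∏ j, (Fin.cons (b 0) fun i => b i.succ * p i ^ x) j ^ ((e l) j)
      = c l * ∏ i, p i ^ (E l i * x)
    rw [hc]
    have hprod : (∏ j, (Fin.cons (b 0) fun i => b i.succ * p i ^ x) j ^ ((e l) j))
        = (∏ j, b j ^ ((e l) j)) * ∏ i, p i ^ (E l i * x) := by
      rw [Fin.prod_univ_succ]
      simp only [Fin.cons_zero, Fin.cons_succ]
      rw [Fin.prod_univ_succ (f := fun j => b j ^ ((e l) j))]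
      have : ∀ i : Fin t, (b i.succ * p i ^ x) ^ ((e l) i.succ)
          = b i.succ ^ ((e l) i.succ) * p i ^ (E l i * x) := by
        intro i
        rw [mul_pow]
        congr 1
        rw [← zpow_natCast (p i ^ x) ((e l) i.succ), ← zpow_mul, hE]
        congr 1
        ring
      rw [Finset.prod_congr rfl fun i _ => this i, Finset.prod_mul_distrib]
      ring
    rw [hprod]
    ring
  set Z := {n : ℤ | MvPolynomial.eval (Fin.cons (b 0) fun i => b i.succ * p i ^ n) F = 0}
    with hZ
  have hbound : ∀ N : Finset ℤ, ↑N ⊆ Z → N.card < m := by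
    intro N hsub
    refine zeros_lt p hp hp0 hm E hEinj c hcne N (fun x hx => ?_)
    have := hsub hx
    rw [hZ, Set.mem_setOf_eq, hkey x] at this
    exact this
  have hfin : Z.Finite := by
    by_contra hinf
    obtain ⟨N, hNsub, hNcard⟩ := Set.Infinite.exists_subset_card_eq hinf m
    exact absurd (hbound N hNsub) (by omega)
  refine ⟨hfin, ?_⟩
  have h1 := hbound hfin.toFinset (by simp)
  rw [Set.ncard_eq_toFinset_card Z hfin]; exact h1

lemma support_card_le {k : Type*} [CommSemiring k] {t d : ℕ}
    (F : MvPolynomial (Fin (t + 1)) k) (hFh : F.IsHomogeneous d) :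
    F.support.card ≤ (t + d).choose d := by
  classical
  have hcard : ∀ α ∈ F.support, Multiset.card (Finsupp.toMultiset α) = d := by
    intro α hα
    rw [Finsupp.card_toMultiset]
    have h1 := hFh (MvPolynomial.mem_support_iff.mp hα)
    rw [show (Finsupp.weight 1 : (Fin (t + 1) →₀ ℕ) →+ ℕ) = Finsupp.weight (fun _ => 1) from rfl, ← Finsupp.degree_eq_weight_one] at h1
    exact h1
  set g : ↥F.support → Sym (Fin (t + 1)) d :=
    fun α => ⟨Finsupp.toMultiset ↑α, hcard ↑α α.2⟩ with hg
  have hginj : Function.Injective g := by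
    intro a b hab
    apply Subtype.coe_injective
    have h1 : Finsupp.toMultiset (↑a : Fin (t+1) →₀ ℕ) = Finsupp.toMultiset (↑b : Fin (t+1) →₀ ℕ) := by
      have := congrArg Subtype.val hab
      simpa [hg] using this
    have := congrArg Multiset.toFinsupp h1
    rwa [Finsupp.toMultiset_toFinsupp, Finsupp.toMultiset_toFinsupp] at this
  have h2 : Fintype.card ↥F.support ≤ Fintype.card (Sym (Fin (t + 1)) d) :=
    Fintype.card_le_of_injective g hginj
  rw [Fintype.card_coe] at h2
  rwa [Sym.card_sym_eq_multichoose, Nat.multichoose_eq, Fintype.card_fin,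
    show t + 1 + d - 1 = t + d by omega] at h2

/-- for `p₁, …, p_t` algebraically independent over the prime subfield and
`b₀, …, b_t` all nonzero, any nonzero homogeneous `F` of degree `d ≥ 1` vanishes at the
points `c_n = (b₀, b₁p₁ⁿ, …, b_tp_tⁿ)` for at most `binom(t+d,d) − 1` values of `n ∈ ℤ`;
hence the points are in general position and critically dense in `ℙ^t`. -/
theorem stmt_13 {k : Type*} [Field k] [IsAlgClosed k]
    (t : ℕ) (ht : 1 ≤ t) (p : Fin t → k)
    (hp : AlgebraicIndependent (⊥ : Subfield k) p)
    (b : Fin (t + 1) → k) (hb : ∀ j, b j ≠ 0) :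
    (∀ d : ℕ, 1 ≤ d → ∀ F : MvPolynomial (Fin (t + 1)) k, F ≠ 0 → F.IsHomogeneous d →
      {n : ℤ | MvPolynomial.eval (Fin.cons (b 0) fun i => b i.succ * p i ^ n) F = 0}.Finite ∧
      {n : ℤ | MvPolynomial.eval (Fin.cons (b 0) fun i => b i.succ * p i ^ n) F = 0}.ncard
        ≤ (t + d).choose d - 1) ∧
    (∀ F : MvPolynomial (Fin (t + 1)) k, F ≠ 0 → (∃ d, F.IsHomogeneous d) →
      {n : ℤ | MvPolynomial.eval (Fin.cons (b 0) fun i => b i.succ * p i ^ n) F = 0}.Finite) := by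
  constructor
  · intro d _ F hF0 hFh
    obtain ⟨hfin, hlt⟩ := main_core p hp b hb d F hF0 hFh
    refine ⟨hfin, ?_⟩
    have hsup := support_card_le F hFh
    omega
  · rintro F hF0 ⟨d, hFh⟩
    exact (main_core p hp b hb d F hF0 hFh).1
end
end

section
/- Assume k has characteristic p > 0 and let y ∈ k be transcendental over the prime subfield 𝔽_p. Consider the points c_n = (1, yⁿ, (y+1)ⁿ) ∈ k³ for n ∈ ℕ. Then: (a) for every n ∈ ℕ, one has (y+1)ⁿ = yⁿ + 1 if and only if n = p^j for some j ∈ ℕ; consequently the nonzero homogeneous polynomial x_0 + x_1 − x_2 vanishes at c_n for infinitely many n, so the set {c_n : n ∈ ℕ} is not critically dense in P²; (b) nevertheless, for every nonzero homogeneous polynomial F ∈ k[x_0, x_1, x_2] there exists n ∈ ℕ with F(1, yⁿ, (y+1)ⁿ) ≠ 0, so the set {c_n : n ∈ ℕ} is Zariski dense in P². -/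
/-!
In characteristic `p`, Frobenius gives `(y + 1) ^ p ^ j = y ^ p ^ j + 1`. Conversely, writing
`n = p ^ j * m` with `p ∤ m`, the identity for `n` is the identity `(z + 1) ^ m = z ^ m + 1` for the
transcendental `z = y ^ p ^ j`, hence a polynomial identity, whose `X`-coefficient `m` must vanish
in `𝔽_p`; so `m = 1`.

For density, the monomial `x^s` takes the value `tₛ ^ n` at `(1, yⁿ, (y + 1)ⁿ)` with
`tₛ = y ^ s₁ * (y + 1) ^ s₂`. Since `y` is transcendental, `tₛ` determines `(s₁, s₂)`, and on a
homogeneous polynomial the degree then determines `s₀`. So if `F` vanished at every point, the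
exponential sums `∑ₛ Fₛ tₛ ^ n` with distinct `tₛ` would all vanish, which forces every coefficient
`Fₛ` to be zero (Dedekind's independence of characters of `ℕ`).
-/

open Polynomial

theorem natCast_eq_zero_of_X_add_one_pow_eq {R : Type*} [Semiring R] {m : ℕ} (hm : m ≠ 1)
    (h : (X + 1 : R[X]) ^ m = X ^ m + 1) : (m : R) = 0 := by
  simpa [coeff_X_add_one_pow, coeff_X_pow, coeff_one, Ne.symm hm] using
    congrArg (coeff · 1) h

section Polynomial

variable {R : Type*} [CommRing R] [IsDomain R]

theorem rootMultiplicity_X_sub_C_pow_mul_X_sub_C_pow {a b : R} (hab : a ≠ b) (m n : ℕ) :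
    rootMultiplicity a ((X - C a) ^ m * (X - C b) ^ n) = m := by
  have hb : ¬ ((X - C b) ^ n).IsRoot a := by simp [sub_ne_zero.mpr hab]
  rw [rootMultiplicity_mul (mul_ne_zero (pow_ne_zero _ (X_sub_C_ne_zero a))
    (pow_ne_zero _ (X_sub_C_ne_zero b))), rootMultiplicity_X_sub_C_pow,
    rootMultiplicity_eq_zero hb, add_zero]

theorem X_pow_mul_X_add_one_pow_inj {a b a' b' : ℕ}
    (h : (X : R[X]) ^ a * (X + 1) ^ b = X ^ a' * (X + 1) ^ b') : a = a' ∧ b = b' := by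
  replace h : (X - C 0 : R[X]) ^ a * (X - C (-1)) ^ b = (X - C 0) ^ a' * (X - C (-1)) ^ b' := by
    simpa using h
  have h0 : (0 : R) ≠ -1 := by simp
  constructor
  · simpa only [rootMultiplicity_X_sub_C_pow_mul_X_sub_C_pow h0] using
      congrArg (rootMultiplicity 0) h
  · rw [mul_comm, mul_comm ((X - C 0) ^ a')] at h
    simpa only [rootMultiplicity_X_sub_C_pow_mul_X_sub_C_pow h0.symm] using
      congrArg (rootMultiplicity (-1)) h

end Polynomial

section Transcendental

variable {R A : Type*} [CommRing R] [CommRing A] [Algebra R A] {y : A}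

theorem Transcendental.pow_mul_add_one_pow_inj [IsDomain R] (hy : Transcendental R y)
    {a b a' b' : ℕ} (h : y ^ a * (y + 1) ^ b = y ^ a' * (y + 1) ^ b') : a = a' ∧ b = b' :=
  X_pow_mul_X_add_one_pow_inj <| transcendental_iff_injective.mp hy <| by simp [h]

theorem Transcendental.natCast_eq_zero_of_add_one_pow_eq (hy : Transcendental R y) {m : ℕ}
    (hm : m ≠ 1) (h : (y + 1) ^ m = y ^ m + 1) : (m : R) = 0 :=
  natCast_eq_zero_of_X_add_one_pow_eq hm <| transcendental_iff_injective.mp hy <| by simp [h]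

end Transcendental

theorem Transcendental.add_one_pow_eq_pow_add_one_iff {k : Type*} [CommRing k] (p : ℕ)
    [Fact p.Prime] [CharP k p] [Algebra (ZMod p) k] {y : k}
    (hy : Transcendental (ZMod p) y) (n : ℕ) :
    (y + 1) ^ n = y ^ n + 1 ↔ ∃ j : ℕ, n = p ^ j := by
  have hp : p.Prime := Fact.out
  constructor
  · intro h
    have hn : n ≠ 0 := by
      rintro rfl
      have := CharP.nontrivial_of_char_ne_one (R := k) hp.ne_one
      simp at h
    obtain ⟨j, m, hpm, rfl⟩ := Nat.exists_eq_pow_mul_and_not_dvd hn p hp.ne_one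
    refine ⟨j, ?_⟩
    have hz : (y ^ p ^ j + 1) ^ m = (y ^ p ^ j) ^ m + 1 := by
      rw [← pow_mul, ← h, pow_mul]
      simpa using congrArg (· ^ m) (add_pow_char_pow y 1 p j).symm
    by_contra hm
    refine hpm ((ZMod.natCast_eq_zero_iff m p).mp ?_)
    exact (hy.pow (pow_pos hp.pos j)).natCast_eq_zero_of_add_one_pow_eq
      (by rintro rfl; simp at hm) hz
  · rintro ⟨j, rfl⟩
    simpa using add_pow_char_pow y 1 p j

theorem eq_zero_of_forall_sum_mul_pow_eq_zero {L ι : Type*} [CommRing L] [IsDomain L]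
    [Fintype ι] {t : ι → L} (ht : Function.Injective t) {c : ι → L}
    (h : ∀ n : ℕ, ∑ i, c i * t i ^ n = 0) : c = 0 := by
  have hli := (linearIndependent_monoidHom (Multiplicative ℕ) L).comp
    (fun i => powersHom L (t i)) ((powersHom L).injective.comp ht)
  funext i
  refine Fintype.linearIndependent_iff.mp hli c ?_ i
  funext n
  simpa using h n.toAdd

theorem prod_pow_vecCons_one_pow_pow {M : Type*} [CommMonoid M] (u v : M) (n : ℕ)
    (s : Fin 3 →₀ ℕ) : ∏ i, (![1, u ^ n, v ^ n] : Fin 3 → M) i ^ s i = (u ^ s 1 * v ^ s 2) ^ n := by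
  simp only [Fin.prod_univ_three, Matrix.cons_val_zero, Matrix.cons_val_one,
    Matrix.cons_val_two, Matrix.head_cons, Matrix.tail_cons, one_pow, one_mul, mul_pow,
    ← pow_mul, mul_comm n]

theorem Finsupp.eq_of_degree_eq_of_apply_one_eq_of_apply_two_eq {s s' : Fin 3 →₀ ℕ}
    (hd : s.degree = s'.degree) (h1 : s 1 = s' 1) (h2 : s 2 = s' 2) : s = s' := by
  simp only [Finsupp.degree_eq_sum, Fin.sum_univ_three] at hd
  ext i
  fin_cases i <;> simp <;> omega

theorem MvPolynomial.IsHomogeneous.exists_eval_ne_zero_of_transcendental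
    {K k : Type*} [CommRing K] [IsDomain K] [CommRing k] [IsDomain k] [Algebra K k]
    {y : k} (hy : Transcendental K y) {F : MvPolynomial (Fin 3) k} {d : ℕ}
    (hF : F.IsHomogeneous d) (hF0 : F ≠ 0) :
    ∃ n : ℕ, MvPolynomial.eval ![1, y ^ n, (y + 1) ^ n] F ≠ 0 := by
  by_contra! hall
  let t : F.support → k := fun s => y ^ s.1 1 * (y + 1) ^ s.1 2
  have ht : Function.Injective t := by
    rintro ⟨s, hs⟩ ⟨s', hs'⟩ hss'
    obtain ⟨h1, h2⟩ := hy.pow_mul_add_one_pow_inj hss'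
    refine Subtype.ext (Finsupp.eq_of_degree_eq_of_apply_one_eq_of_apply_two_eq ?_ h1 h2)
    rw [Finsupp.degree_eq_weight_one]
    exact (hF (mem_support_iff.mp hs)).trans (hF (mem_support_iff.mp hs')).symm
  have hcoeff := eq_zero_of_forall_sum_mul_pow_eq_zero ht (c := fun s => F.coeff s.1) fun n => by
    rw [← hall n, eval_eq']
    simp only [prod_pow_vecCons_one_pow_pow]
    exact Finset.sum_coe_sort F.support fun s => F.coeff s * (y ^ s 1 * (y + 1) ^ s 2) ^ n
  obtain ⟨s, hs⟩ := support_nonempty.mpr hF0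
  exact mem_support_iff.mp hs (congrFun hcoeff ⟨s, hs⟩)

theorem stmt_17_general {k : Type*} [Field k]
    (p : ℕ) [Fact p.Prime] [CharP k p] [Algebra (ZMod p) k]
    (y : k) (hy : Transcendental (ZMod p) y) :
    (∀ n : ℕ, (y + 1) ^ n = y ^ n + 1 ↔ ∃ j : ℕ, n = p ^ j) ∧
    {n : ℕ | MvPolynomial.eval (![1, y ^ n, (y + 1) ^ n])
      (MvPolynomial.X 0 + MvPolynomial.X 1 - MvPolynomial.X 2 :
        MvPolynomial (Fin 3) k) = 0}.Infinite ∧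
    (∀ F : MvPolynomial (Fin 3) k, F ≠ 0 → (∃ d, F.IsHomogeneous d) →
      ∃ n : ℕ, MvPolynomial.eval ![1, y ^ n, (y + 1) ^ n] F ≠ 0) := by
  have hfrob := hy.add_one_pow_eq_pow_add_one_iff p
  refine ⟨hfrob, ?_, fun F hF0 ⟨d, hF⟩ => hF.exists_eval_ne_zero_of_transcendental hy hF0⟩
  refine Set.infinite_of_injective_forall_mem (f := fun j : ℕ => p ^ j)
    (Nat.pow_right_injective (Fact.out : p.Prime).two_le) fun j => ?_
  simp [(hfrob (p ^ j)).mpr ⟨j, rfl⟩, add_comm]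

/-- in characteristic `p > 0` with `y` transcendental over `𝔽_p`, for the
points `c_n = (1, yⁿ, (y+1)ⁿ)`: (a) `(y+1)ⁿ = yⁿ + 1` iff `n` is a power of `p`, so the
nonzero homogeneous polynomial `x₀ + x₁ − x₂` vanishes at infinitely many `c_n` and the
set is not critically dense; (b) nevertheless the set `{c_n}` is Zariski dense in `ℙ²`. -/
theorem stmt_17 {k : Type*} [Field k] [IsAlgClosed k]
    (p : ℕ) [Fact p.Prime] [CharP k p] [Algebra (ZMod p) k]
    (y : k) (hy : Transcendental (ZMod p) y) :
    (∀ n : ℕ, (y + 1) ^ n = y ^ n + 1 ↔ ∃ j : ℕ, n = p ^ j) ∧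
    {n : ℕ | MvPolynomial.eval (![1, y ^ n, (y + 1) ^ n])
      (MvPolynomial.X 0 + MvPolynomial.X 1 - MvPolynomial.X 2 :
        MvPolynomial (Fin 3) k) = 0}.Infinite ∧
    (∀ F : MvPolynomial (Fin 3) k, F ≠ 0 → (∃ d, F.IsHomogeneous d) →
      ∃ n : ℕ, MvPolynomial.eval ![1, y ^ n, (y + 1) ^ n] F ≠ 0) :=
  stmt_17_general p y hy
end

section
/- Let A ⊆ B be an extension of ℕ-graded rings (so A_n ⊆ B_n for all n). Suppose that B is left noetherian, and that for every finitely generated homogeneous left ideal I of A, the quotient (BI ∩ A)/I is a noetherian left A-module, where BI denotes the left ideal of B generated by I. Then A is left noetherian. -/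
set_option synthInstance.maxHeartbeats 1000000
set_option maxHeartbeats 4000000

noncomputable section

theorem aux_span_finset {R M : Type*} [Semiring R] [AddCommMonoid M] [Module R M]
    {S : Set M} (h : (Submodule.span R S).FG) :
    ∃ T : Finset M, ↑T ⊆ S ∧ Submodule.span R (T : Set M) = Submodule.span R S := by
  classical
  obtain ⟨G, hG⟩ := h
  have hmem : ∀ g ∈ G, ∃ T : Finset M, ↑T ⊆ S ∧ g ∈ Submodule.span R (T : Set M) := by
    intro g hg
    exact Submodule.mem_span_finite_of_mem_span (hG ▸ Submodule.subset_span hg)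
  choose! f hf1 hf2 using hmem
  refine ⟨G.biUnion f, ?_, ?_⟩
  · intro x hx
    simp only [Finset.coe_biUnion, Set.mem_iUnion, Finset.mem_coe] at hx
    obtain ⟨g, hg, hxg⟩ := hx
    exact hf1 g hg hxg
  · refine le_antisymm (Submodule.span_mono ?_) ?_
    · intro x hx
      simp only [Finset.coe_biUnion, Set.mem_iUnion, Finset.mem_coe] at hx
      obtain ⟨g, hg, hxg⟩ := hx
      exact hf1 g hg hxg
    · rw [← hG]
      refine Submodule.span_le.mpr fun g hg => ?_
      refine Submodule.span_mono ?_ (hf2 g hg)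
      exact_mod_cast Finset.coe_subset.mpr (Finset.subset_biUnion_of_mem f hg)

theorem aux_hom_fg {B : Type*} [Ring B] (ℬ : ℕ → AddSubgroup B) [GradedRing ℬ]
    (A : Subring B) [IsNoetherianRing B]
    (hquot : ∀ S : Finset A, (∀ s ∈ S, ∃ n : ℕ, (s : B) ∈ ℬ n) →
      IsNoetherian A ↥(Submodule.map (Ideal.span (S : Set A)).mkQ
        (Ideal.comap A.subtype (Ideal.span (Subtype.val '' (S : Set A))))))
    (H : Set A) (hH : ∀ x ∈ H, ∃ n : ℕ, (x : B) ∈ ℬ n) :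
    (Ideal.span H).FG := by
  classical
  have hJB : (Ideal.span (Subtype.val '' H) : Ideal B).FG :=
    IsNoetherian.noetherian _
  obtain ⟨T, hTsub, hTspan⟩ := aux_span_finset hJB
  have hmem : ∀ t ∈ T, ∃ x : A, x ∈ H ∧ (x : B) = t := by
    intro t ht
    obtain ⟨x, hx, hxt⟩ := hTsub ht
    exact ⟨x, hx, hxt⟩
  choose! g hg1 hg2 using hmem
  set S : Finset A := T.image g with hS
  have hSval : Subtype.val '' (S : Set A) = (T : Set B) := by
    ext b
    constructor
    · rintro ⟨x, hx, rfl⟩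
      simp only [hS, Finset.coe_image, Set.mem_image, Finset.mem_coe] at hx
      obtain ⟨t, ht, rfl⟩ := hx
      rw [hg2 t ht]; exact ht
    · intro hb
      exact ⟨g b, by simp only [hS, Finset.coe_image]; exact ⟨b, hb, rfl⟩, hg2 b hb⟩
  have hShom : ∀ s ∈ S, ∃ n : ℕ, (s : B) ∈ ℬ n := by
    intro s hs
    simp only [hS, Finset.mem_image] at hs
    obtain ⟨t, ht, rfl⟩ := hs
    exact hH _ (hg1 t ht)
  have hNoeth := hquot S hShom
  set C : Ideal A := Ideal.comap A.subtype (Ideal.span (Subtype.val '' (S : Set A))) with hC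
  set N : Ideal A := Ideal.span H with hN
  have hNC : N ≤ C := by
    rw [hN]
    refine Ideal.span_le.mpr fun x hx => ?_
    show (x : B) ∈ Submodule.span B (Subtype.val '' (S : Set A))
    rw [hSval, hTspan]
    exact Submodule.subset_span ⟨x, hx, rfl⟩
  set p : Ideal A := Ideal.span (S : Set A) with hp
  set M := Submodule.map p.mkQ C with hM
  have hmapfg : (Submodule.map p.mkQ N).FG := by
    have hle : Submodule.map p.mkQ N ≤ M := Submodule.map_mono hNC
    have h1 : (Submodule.comap M.subtype (Submodule.map p.mkQ N)).FG :=
      IsNoetherian.noetherian _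
    have h2 := h1.map M.subtype
    rwa [Submodule.map_comap_subtype, inf_eq_right.mpr hle] at h2
  have hpN : p ≤ N := by
    rw [hp, hN]
    refine Ideal.span_le.mpr fun x hx => Submodule.subset_span ?_
    simp only [hS, Finset.coe_image, Set.mem_image, Finset.mem_coe] at hx
    obtain ⟨t, ht, rfl⟩ := hx
    exact hg1 t ht
  refine Submodule.fg_of_fg_map_of_fg_inf_ker p.mkQ hmapfg ?_
  rw [Submodule.ker_mkQ, inf_eq_right.mpr hpN]
  exact ⟨S, rfl⟩

/-- let `A ⊆ B` be an extension of `ℕ`-graded rings with `B` left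
noetherian.  If for every finitely generated homogeneous left ideal `I` of `A` the left
`A`-module `(BI ∩ A)/I` is noetherian, then `A` is left noetherian. -/
theorem stmt_18 {B : Type*} [Ring B] (ℬ : ℕ → AddSubgroup B) [GradedRing ℬ]
    (A : Subring B)
    (hA : ∀ a ∈ A, ∀ n : ℕ, ((DirectSum.decompose ℬ a n : ℬ n) : B) ∈ A)
    [IsNoetherianRing B]
    (hquot : ∀ S : Finset A, (∀ s ∈ S, ∃ n : ℕ, (s : B) ∈ ℬ n) →
      IsNoetherian A ↥(Submodule.map (Ideal.span (S : Set A)).mkQ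
        (Ideal.comap A.subtype (Ideal.span (Subtype.val '' (S : Set A)))))) :
    IsNoetherianRing A := by
  classical
  rw [isNoetherianRing_iff_ideal_fg]
  intro J
  -- additive projection helpers
  have πhom : ∀ m : ℕ, ∃ ψ : B →+ B, ∀ u, ψ u = (DirectSum.decompose ℬ u m : B) := fun m =>
    ⟨AddMonoidHom.mk' (fun u => (DirectSum.decompose ℬ u m : B)) (fun u v => by
        show (DirectSum.decompose ℬ (u + v) m : B) = _
        rw [DirectSum.decompose_add, DirectSum.add_apply, AddSubgroup.coe_add]), fun u => rfl⟩
  have πsub : ∀ (m : ℕ) (u v : B),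
      (DirectSum.decompose ℬ (u - v) m : B)
        = (DirectSum.decompose ℬ u m : B) - (DirectSum.decompose ℬ v m : B) := by
    intro m u v
    obtain ⟨ψ, hψ⟩ := πhom m
    rw [← hψ, ← hψ, ← hψ, map_sub]
  have πsum : ∀ (m : ℕ) (s : Finset A) (F : A → B),
      (DirectSum.decompose ℬ (∑ i ∈ s, F i) m : B)
        = ∑ i ∈ s, (DirectSum.decompose ℬ (F i) m : B) := by
    intro m s F
    obtain ⟨ψ, hψ⟩ := πhom m
    rw [← hψ, map_sum]
    exact Finset.sum_congr rfl fun i _ => hψ (F i)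
  -- leading term sets
  set H : Set A := ⋃ n : ℕ, {x : A | (x : B) ∈ ℬ n ∧ ∃ a : A, a ∈ J ∧
      (∀ m, n < m → (DirectSum.decompose ℬ (a : B) m : B) = 0) ∧
      (DirectSum.decompose ℬ (a : B) n : B) = (x : B)} with hHdef
  have hHhom : ∀ x ∈ H, ∃ n : ℕ, (x : B) ∈ ℬ n := by
    intro x hx
    obtain ⟨n, hn⟩ := Set.mem_iUnion.mp hx
    exact ⟨n, hn.1⟩
  have hfg : (Ideal.span H).FG := aux_hom_fg ℬ A hquot H hHhom
  obtain ⟨T, hTsub, hTspan⟩ := aux_span_finset hfg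
  have hmem : ∀ t : A, t ∈ T → ∃ (n : ℕ) (a : A), (t : B) ∈ ℬ n ∧ a ∈ J ∧
      (∀ m, n < m → (DirectSum.decompose ℬ (a : B) m : B) = 0) ∧
      (DirectSum.decompose ℬ (a : B) n : B) = (t : B) := by
    intro t ht
    obtain ⟨n, h1, a, h2, h3, h4⟩ := Set.mem_iUnion.mp (hTsub ht)
    exact ⟨n, a, h1, h2, h3, h4⟩
  choose! deg lift h1 h2 h3 h4 using hmem
  set K : Ideal A := Ideal.span (lift '' ↑T) with hKdef
  have hKJ : K ≤ J := Ideal.span_le.mpr (by rintro _ ⟨t, ht, rfl⟩; exact h2 t ht)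
  have main : ∀ n : ℕ, ∀ a : A, a ∈ J →
      (∀ m, n ≤ m → (DirectSum.decompose ℬ (a : B) m : B) = 0) → a ∈ K := by
    intro n
    induction n with
    | zero =>
      intro a _ hbound
      have ha0 : (a : B) = 0 := by
        rw [← DirectSum.sum_support_decompose ℬ (a : B)]
        exact Finset.sum_eq_zero fun m _ => hbound m (Nat.zero_le m)
      have : a = 0 := Subtype.ext ha0
      rw [this]; exact K.zero_mem
    | succ n ih =>
      intro a haJ hbound
      set x : A := ⟨(DirectSum.decompose ℬ (a : B) n : B), hA a a.2 n⟩ with hxdef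
      have hxH : x ∈ H := Set.mem_iUnion.mpr ⟨n,
        ⟨SetLike.coe_mem _, a, haJ, fun m hm => hbound m hm, rfl⟩⟩
      have hxT : x ∈ Submodule.span A (T : Set A) := by
        rw [hTspan]; exact Submodule.subset_span hxH
      obtain ⟨f, -, hf⟩ := Submodule.mem_span_finset.mp hxT
      set g : A → A := fun t => if hdt : deg t ≤ n then
        ⟨(DirectSum.decompose ℬ ((f t : A) : B) (n - deg t) : B), hA _ (f t).2 _⟩
        else 0 with hgdef
      have hgmem : ∀ t, deg t ≤ n → ((g t : A) : B) ∈ ℬ (n - deg t) := by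
        intro t hdt
        rw [hgdef]; simp only [dif_pos hdt]
        exact SetLike.coe_mem _
      have hg0 : ∀ t, ¬ deg t ≤ n → g t = 0 := by
        intro t hdt; rw [hgdef]; simp only [dif_neg hdt]
      set b : A := ∑ t ∈ T, g t • lift t with hbdef
      have hbK : b ∈ K := Submodule.sum_mem _ fun t ht =>
        Submodule.smul_mem _ _ (Submodule.subset_span ⟨t, ht, rfl⟩)
      have hbJ : b ∈ J := hKJ hbK
      have hbB : (b : B) = ∑ t ∈ T, ((g t : A) : B) * ((lift t : A) : B) := by
        rw [hbdef]
        push_cast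
        exact Finset.sum_congr rfl fun t _ => rfl
      have hbhigh : ∀ m, n + 1 ≤ m → (DirectSum.decompose ℬ (b : B) m : B) = 0 := by
        intro m hm
        rw [hbB, πsum]
        refine Finset.sum_eq_zero fun t ht => ?_
        by_cases hdt : deg t ≤ n
        · rw [DirectSum.coe_decompose_mul_of_left_mem_of_le ℬ (n := m) (hgmem t hdt) (by omega),
            h3 t ht (m - (n - deg t)) (by omega), mul_zero]
        · rw [hg0 t hdt]
          simp
      have hbn : (DirectSum.decompose ℬ (b : B) n : B) = (x : B) := by
        have hxeq : ((x : A) : B) = ∑ t ∈ T, ((f t : A) : B) * ((t : A) : B) := by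
          rw [← hf]
          push_cast
          exact Finset.sum_congr rfl fun t _ => rfl
        have h5 : (DirectSum.decompose ℬ ((x : A) : B) n : B) = (x : B) :=
          DirectSum.decompose_of_mem_same ℬ (SetLike.coe_mem _)
        rw [hbB, πsum]
        conv_rhs => rw [← h5, hxeq]
        rw [πsum]
        refine Finset.sum_congr rfl fun t ht => ?_
        by_cases hdt : deg t ≤ n
        · rw [DirectSum.coe_decompose_mul_of_left_mem_of_le ℬ (n := n) (hgmem t hdt) (by omega),
            DirectSum.coe_decompose_mul_of_right_mem_of_le ℬ (n := n) (h1 t ht) hdt]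
          have hnn : n - (n - deg t) = deg t := by omega
          rw [hnn, h4 t ht]
          congr 1
          rw [hgdef]; simp only [dif_pos hdt]
        · rw [hg0 t hdt,
            DirectSum.coe_decompose_mul_of_right_mem_of_not_le ℬ (n := n) (h1 t ht) hdt]
          simp
      have hdiff : ∀ m, n ≤ m → (DirectSum.decompose ℬ ((a - b : A) : B) m : B) = 0 := by
        intro m hm
        have hcoe : ((a - b : A) : B) = (a : B) - (b : B) := by push_cast; ring_nf
        rw [hcoe, πsub]
        rcases Nat.eq_or_lt_of_le hm with rfl | h
        · rw [hbn]
          exact sub_eq_zero_of_eq rfl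
        · rw [hbound m h, hbhigh m h, sub_zero]
      have hsub : a - b ∈ J := J.sub_mem haJ hbJ
      have hK' : a - b ∈ K := ih (a - b) hsub hdiff
      have haeq : a = (a - b) + b := by abel
      rw [haeq]; exact K.add_mem hK' hbK
  have hJK : J ≤ K := by
    intro a haJ
    refine main ((DirectSum.decompose ℬ (a : B)).support.sup id + 1) a haJ fun m hm => ?_
    have hns : m ∉ (DirectSum.decompose ℬ (a : B)).support := by
      intro hmem
      have := Finset.le_sup (f := id) hmem
      simp only [id] at this
      omega
    have h0 : DirectSum.decompose ℬ (a : B) m = 0 := DFinsupp.notMem_support_iff.mp hns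
    rw [h0]; rfl
  have hJEq : J = K := le_antisymm hJK hKJ
  rw [hJEq, hKdef]
  exact ⟨T.image lift, by rw [Finset.coe_image]⟩
end
end
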